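/- arXiv:1802.06332 — 6 statements merged into one kernel-verified Lean document; each statement's English description precedes it below -/
import Mathlib

section
/- Let X, X_1, X_2 be i.i.d. random variables with continuous distribution function F and Y, Y_1, Y_2 be i.i.d. random variables with continuous distribution function G, with all six variables independent. Let H = τF + (1−τ)G for some τ ∈ [0,1]. Then E|H(X) − H(Y)| − (1/2)E|H(X_1) − H(X_2)| − (1/2)E|H(Y_1) − H(Y_2)| ≥ 0, and equality holds if and only if F = G. -/
open MeasureTheory ProbabilityTheory Set


lemma aux_abs_ind {u v : ℝ} (h0 : 0 ≤ u) (huv : u ≤ v) (h1 : v ≤ 1) :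
    ∫ t in Set.Ioc (0:ℝ) 1, |(if u ≤ t then (1:ℝ) else 0) - (if v ≤ t then 1 else 0)| = v - u := by
  have hpt : ∀ t : ℝ, |(if u ≤ t then (1:ℝ) else 0) - (if v ≤ t then 1 else 0)|
      = Set.indicator (Set.Ico u v) (fun _ => (1:ℝ)) t := by
    intro t
    by_cases hu : u ≤ t <;> by_cases hv : v ≤ t
    · simp [Set.indicator, Set.mem_Ico, hu, hv, not_lt.mpr hv]
    · simp [Set.indicator, Set.mem_Ico, hu, hv, lt_of_not_ge hv]
    · exact absurd (le_trans huv hv) hu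
    · simp [Set.indicator, Set.mem_Ico, hu, hv]
  rw [integral_congr_ae (Filter.Eventually.of_forall hpt)]
  rw [MeasureTheory.integral_indicator measurableSet_Ico]
  rw [Measure.restrict_restrict measurableSet_Ico]
  rw [MeasureTheory.integral_const]
  have hvol : volume (Set.Ico u v ∩ Set.Ioc (0:ℝ) 1) = ENNReal.ofReal (v - u) := by
    apply le_antisymm
    · calc volume (Set.Ico u v ∩ Set.Ioc (0:ℝ) 1) ≤ volume (Set.Ico u v) :=
            measure_mono Set.inter_subset_left
        _ = ENNReal.ofReal (v - u) := Real.volume_Ico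
    · calc ENNReal.ofReal (v - u) = volume (Set.Ioo u v) := Real.volume_Ioo.symm
        _ ≤ volume (Set.Ico u v ∩ Set.Ioc (0:ℝ) 1) := by
            apply measure_mono
            intro t ht
            exact ⟨⟨le_of_lt ht.1, ht.2⟩, ⟨lt_of_le_of_lt h0 ht.1, le_trans (le_of_lt ht.2) h1⟩⟩
  rw [measureReal_def, Measure.restrict_apply_univ, hvol, smul_eq_mul, mul_one, ENNReal.toReal_ofReal (by linarith)]

lemma aux_inner {Ω : Type*} [MeasurableSpace Ω] (P : Measure Ω) [IsProbabilityMeasure P]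
    {A B : Set Ω} (hA : MeasurableSet A) (hB : MeasurableSet B)
    (hAB : P (A ∩ B) = P A * P B) :
    ∫ ω, |A.indicator (fun _ => (1:ℝ)) ω - B.indicator (fun _ => (1:ℝ)) ω| ∂P
      = (P A).toReal + (P B).toReal - 2 * ((P A).toReal * (P B).toReal) := by
  have hpt : ∀ ω, |A.indicator (fun _ => (1:ℝ)) ω - B.indicator (fun _ => (1:ℝ)) ω|
      = (A.indicator (fun _ => (1:ℝ)) ω + B.indicator (fun _ => (1:ℝ)) ω)
        - 2 * (A ∩ B).indicator (fun _ => (1:ℝ)) ω := by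
    intro ω
    by_cases h1 : ω ∈ A <;> by_cases h2 : ω ∈ B <;>
      simp [Set.indicator, h1, h2, Set.mem_inter_iff] <;> norm_num
  rw [integral_congr_ae (Filter.Eventually.of_forall hpt)]
  have iA : Integrable (A.indicator (fun _ => (1:ℝ))) P := (integrable_const 1).indicator hA
  have iB : Integrable (B.indicator (fun _ => (1:ℝ))) P := (integrable_const 1).indicator hB
  have iAB2 : Integrable (fun ω => 2 * (A ∩ B).indicator (fun _ => (1:ℝ)) ω) P :=
    (((integrable_const 1).indicator (hA.inter hB))).const_mul 2
  have iS : Integrable (fun ω => A.indicator (fun _ => (1:ℝ)) ω + B.indicator (fun _ => (1:ℝ)) ω) P :=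
    iA.add iB
  rw [integral_sub iS iAB2, integral_add iA iB, MeasureTheory.integral_const_mul,
    integral_indicator_const (1:ℝ) hA, integral_indicator_const (1:ℝ) hB,
    integral_indicator_const (1:ℝ) (hA.inter hB), measureReal_def, measureReal_def, measureReal_def, hAB]
  simp [ENNReal.toReal_mul]; try ring
lemma aux_pair {Ω : Type*} [MeasurableSpace Ω] (P : Measure Ω) [IsProbabilityMeasure P]
    (U V : Ω → ℝ) (hU : Measurable U) (hV : Measurable V)
    (hUV : ∀ s t : Set ℝ, MeasurableSet s → MeasurableSet t →
      P (U ⁻¹' s ∩ V ⁻¹' t) = P (U ⁻¹' s) * P (V ⁻¹' t))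
    (hU01 : ∀ ω, U ω ∈ Set.Icc (0:ℝ) 1) (hV01 : ∀ ω, V ω ∈ Set.Icc (0:ℝ) 1) :
    ∫ ω, |U ω - V ω| ∂P
      = ∫ t in Set.Ioc (0:ℝ) 1,
          ((P {ω | U ω ≤ t}).toReal + (P {ω | V ω ≤ t}).toReal
            - 2 * ((P {ω | U ω ≤ t}).toReal * (P {ω | V ω ≤ t}).toReal)) := by
  set ν := volume.restrict (Set.Ioc (0:ℝ) 1) with hν
  haveI : IsFiniteMeasure ν := ⟨by
    rw [hν, Measure.restrict_apply_univ, Real.volume_Ioc]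
    exact ENNReal.ofReal_lt_top⟩
  set g : Ω → ℝ → ℝ := fun ω t => |(if U ω ≤ t then (1:ℝ) else 0) - (if V ω ≤ t then 1 else 0)|
    with hg
  have h1 : ∀ ω, |U ω - V ω| = ∫ t, g ω t ∂ν := by
    intro ω
    rcases le_total (U ω) (V ω) with h | h
    · rw [abs_sub_comm, abs_of_nonneg (by linarith), hν]
      exact (aux_abs_ind (hU01 ω).1 h (hV01 ω).2).symm
    · rw [abs_of_nonneg (by linarith), hν]
      have := aux_abs_ind (hV01 ω).1 h (hU01 ω).2
      calc U ω - V ω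
          = ∫ t in Set.Ioc (0:ℝ) 1,
              |(if V ω ≤ t then (1:ℝ) else 0) - (if U ω ≤ t then 1 else 0)| := this.symm
        _ = ∫ t in Set.Ioc (0:ℝ) 1, g ω t := by
            apply integral_congr_ae (Filter.Eventually.of_forall fun t => ?_)
            rw [hg]; exact (abs_sub_comm _ _).symm
  rw [integral_congr_ae (Filter.Eventually.of_forall h1)]
  have hgm : Measurable (Function.uncurry g) := by
    apply Measurable.abs
    apply Measurable.sub
    · exact Measurable.ite (measurableSet_le (hU.comp measurable_fst) measurable_snd)
        measurable_const measurable_const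
    · exact Measurable.ite (measurableSet_le (hV.comp measurable_fst) measurable_snd)
        measurable_const measurable_const
  have hgi : Integrable (Function.uncurry g) (P.prod ν) := by
    apply (integrable_const (2:ℝ)).mono' hgm.aestronglyMeasurable
    apply Filter.Eventually.of_forall
    rintro ⟨ω, t⟩
    simp only [Function.uncurry, hg, Real.norm_eq_abs, abs_abs]
    split_ifs <;> norm_num
  rw [MeasureTheory.integral_integral_swap hgi]
  apply integral_congr_ae (Filter.Eventually.of_forall fun t => ?_)
  have hA : MeasurableSet (U ⁻¹' Set.Iic t) := hU measurableSet_Iic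
  have hB : MeasurableSet (V ⁻¹' Set.Iic t) := hV measurableSet_Iic
  have := aux_inner P hA hB (hUV _ _ measurableSet_Iic measurableSet_Iic)
  have hsetU : {ω | U ω ≤ t} = U ⁻¹' Set.Iic t := rfl
  have hsetV : {ω | V ω ≤ t} = V ⁻¹' Set.Iic t := rfl
  rw [hsetU, hsetV, ← this]
  apply integral_congr_ae (Filter.Eventually.of_forall fun ω => ?_)
  rw [hg]
  by_cases h1 : U ω ≤ t <;> by_cases h2 : V ω ≤ t <;>
    simp [Set.indicator, Set.mem_preimage, Set.mem_Iic, h1, h2]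

lemma aux_cdf_Iio (μ : Measure ℝ) [IsProbabilityMeasure μ] (f : ℝ → ℝ) (hf : Continuous f)
    (hcdf : ∀ y, μ (Set.Iic y) = ENNReal.ofReal (f y)) (y : ℝ) :
    μ (Set.Iio y) = ENNReal.ofReal (f y) := by
  have hseq : Set.Iio y = ⋃ n : ℕ, Set.Iic (y - 1/(n+1)) := by
    ext z
    simp only [Set.mem_Iio, Set.mem_iUnion, Set.mem_Iic]
    constructor
    · intro hz
      obtain ⟨n, hn⟩ := exists_nat_one_div_lt (show (0:ℝ) < y - z by linarith)
      exact ⟨n, by push_cast at hn ⊢; linarith⟩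
    · rintro ⟨n, hn⟩
      have : (0:ℝ) < 1/(n+1) := by positivity
      linarith
  have hmono : Monotone fun n : ℕ => Set.Iic (y - 1/(n+1)) := by
    intro m n hmn
    apply Set.Iic_subset_Iic.mpr
    have : (1:ℝ)/(n+1) ≤ 1/(m+1) := by
      apply one_div_le_one_div_of_le (by positivity)
      push_cast; exact_mod_cast Nat.add_le_add_right hmn 1
    linarith
  have ht := tendsto_measure_iUnion_atTop (μ := μ) hmono
  rw [← hseq] at ht
  have ht2 : Filter.Tendsto (fun n : ℕ => μ (Set.Iic (y - 1/(n+1)))) Filter.atTop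
      (nhds (ENNReal.ofReal (f y))) := by
    simp only [hcdf]
    apply Filter.Tendsto.comp (ENNReal.continuous_ofReal.tendsto _)
    apply Filter.Tendsto.comp (hf.tendsto _)
    have : Filter.Tendsto (fun n : ℕ => (1:ℝ)/(n+1)) Filter.atTop (nhds 0) :=
      tendsto_one_div_add_atTop_nhds_zero_nat
    have := (tendsto_const_nhds (x := y) (f := Filter.atTop (α := ℕ))).sub this
    simpa using this
  exact tendsto_nhds_unique ht ht2

lemma aux_flat (μ : Measure ℝ) [IsProbabilityMeasure μ] (f : ℝ → ℝ) (hf : Continuous f)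
    (hnn : ∀ y, 0 ≤ f y) (hcdf : ∀ y, μ (Set.Iic y) = ENNReal.ofReal (f y)) (x : ℝ) :
    μ {y | f y = f x} = 0 := by
  have hmono : Monotone f := by
    intro y z hyz
    have h := measure_mono (Set.Iic_subset_Iic.mpr hyz) (μ := μ)
    rw [hcdf, hcdf] at h
    exact (ENNReal.ofReal_le_ofReal_iff (hnn z)).mp h
  set c := f x with hc
  set O := {y | f y < c} with hO
  set D := {y | f y ≤ c} with hDdef
  have hOmeas : MeasurableSet O := (isOpen_lt hf continuous_const).measurableSet
  have hOfin : μ O ≠ ⊤ := measure_ne_top μ O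
  -- μ D ≤ ofReal c
  have hD : μ D ≤ ENNReal.ofReal c := by
    by_cases hbdd : BddAbove D
    · have hne : D.Nonempty := ⟨x, le_refl c⟩
      have hclosed : IsClosed D := isClosed_le hf continuous_const
      have hs : sSup D ∈ D := hclosed.csSup_mem hne hbdd
      have hsub : D ⊆ Set.Iic (sSup D) := fun y hy => le_csSup hbdd hy
      calc μ D ≤ μ (Set.Iic (sSup D)) := measure_mono hsub
        _ = ENNReal.ofReal (f (sSup D)) := hcdf _
        _ ≤ ENNReal.ofReal c := ENNReal.ofReal_le_ofReal hs
    · have hall : ∀ y, f y ≤ c := by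
        intro y
        obtain ⟨z, hzD, hyz⟩ := not_bddAbove_iff.mp hbdd y
        exact le_trans (hmono hyz.le) hzD
      have huniv : μ (Set.univ : Set ℝ) ≤ ENNReal.ofReal c := by
        have hU : (Set.univ : Set ℝ) = ⋃ n : ℕ, Set.Iic (n : ℝ) := by
          ext z; simp only [Set.mem_univ, Set.mem_iUnion, Set.mem_Iic, true_iff]
          obtain ⟨n, hn⟩ := exists_nat_ge z; exact ⟨n, hn⟩
        have hdir : Directed (· ⊆ ·) fun n : ℕ => Set.Iic (n : ℝ) := by
          intro m n
          rcases le_total m n with h | h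
          · exact ⟨n, Set.Iic_subset_Iic.mpr (by exact_mod_cast h), subset_rfl⟩
          · exact ⟨m, subset_rfl, Set.Iic_subset_Iic.mpr (by exact_mod_cast h)⟩
        rw [hU, hdir.measure_iUnion]
        apply iSup_le
        intro n
        rw [hcdf]
        exact ENNReal.ofReal_le_ofReal (hall n)
      exact le_trans (measure_mono (Set.subset_univ D)) huniv
  -- ofReal c ≤ μ O
  have hOc : ENNReal.ofReal c ≤ μ O := by
    rcases Set.eq_empty_or_nonempty O with hOe | hOne
    · have hge : ∀ y, c ≤ f y := by
        intro y
        by_contra hlt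
        exact Set.eq_empty_iff_forall_notMem.mp hOe y (not_le.mp hlt)
      have h0 : ENNReal.ofReal c ≤ 0 := by
        have hI : (⋂ n : ℕ, Set.Iic (-(n : ℝ))) = (∅ : Set ℝ) := by
          ext z
          simp only [Set.mem_iInter, Set.mem_Iic, Set.mem_empty_iff_false, iff_false, not_forall]
          obtain ⟨n, hn⟩ := exists_nat_gt (-z)
          exact ⟨n, by push_cast; linarith⟩
        have hdir : Directed (· ⊇ ·) fun n : ℕ => Set.Iic (-(n : ℝ)) := by
          intro m n
          rcases le_total m n with h | h
          · exact ⟨n, Set.Iic_subset_Iic.mpr (by push_cast; exact_mod_cast neg_le_neg (by exact_mod_cast h)), subset_rfl⟩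
          · exact ⟨m, subset_rfl, Set.Iic_subset_Iic.mpr (by push_cast; exact_mod_cast neg_le_neg (by exact_mod_cast h))⟩
        have := Directed.measure_iInter (μ := μ) (fun n => measurableSet_Iic.nullMeasurableSet)
          hdir ⟨0, measure_ne_top μ _⟩
        rw [hI, measure_empty] at this
        calc ENNReal.ofReal c ≤ ⨅ n : ℕ, μ (Set.Iic (-(n:ℝ))) := by
              apply le_iInf; intro n; rw [hcdf]
              exact ENNReal.ofReal_le_ofReal (hge _)
          _ = 0 := this.symm
      calc ENNReal.ofReal c ≤ 0 := h0
        _ ≤ μ O := zero_le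
    · have hbdd : BddAbove O := by
        by_contra hnb
        have : x ∈ O := by
          obtain ⟨z, hzO, hyz⟩ := not_bddAbove_iff.mp hnb x
          exact lt_of_le_of_lt (hmono hyz.le) hzO
        exact absurd this (by simp [hO, hc])
      set u := sSup O with hu
      have hfu : c ≤ f u := by
        have hseq : ∀ n : ℕ, c ≤ f (u + 1/(n+1)) := by
          intro n
          by_contra hlt
          have hmem : u + 1/(n+1) ∈ O := not_le.mp hlt
          have := le_csSup hbdd hmem
          have hpos : (0:ℝ) < 1/(n+1) := by positivity
          linarith
        have htend : Filter.Tendsto (fun n : ℕ => f (u + 1/(n+1))) Filter.atTop (nhds (f u)) := by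
          apply Filter.Tendsto.comp (hf.tendsto _)
          have : Filter.Tendsto (fun n : ℕ => (1:ℝ)/(n+1)) Filter.atTop (nhds 0) :=
            tendsto_one_div_add_atTop_nhds_zero_nat
          have := (tendsto_const_nhds (x := u) (f := Filter.atTop (α := ℕ))).add this
          simpa using this
        exact ge_of_tendsto htend (Filter.Eventually.of_forall hseq)
      have hIio : Set.Iio u ⊆ O := by
        intro y hy
        obtain ⟨z, hzO, hyz⟩ := exists_lt_of_lt_csSup hOne hy
        exact lt_of_le_of_lt (hmono hyz.le) hzO
      calc ENNReal.ofReal c ≤ ENNReal.ofReal (f u) := ENNReal.ofReal_le_ofReal hfu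
        _ = μ (Set.Iio u) := (aux_cdf_Iio μ f hf hcdf u).symm
        _ ≤ μ O := measure_mono hIio
  -- combine
  have hdisj : Disjoint {y | f y = c} O := by
    rw [Set.disjoint_left]
    intro y hy hyO
    rw [Set.mem_setOf_eq] at hy
    rw [hO, Set.mem_setOf_eq, hy] at hyO
    exact lt_irrefl c hyO
  have hsubD : {y | f y = c} ∪ O ⊆ D := by
    rintro y (hy | hy)
    · exact le_of_eq hy
    · exact le_of_lt (show f y < c from hy)
  have hun : μ {y | f y = c} + μ O = μ ({y | f y = c} ∪ O) :=
    (measure_union hdisj hOmeas).symm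
  have hle : μ {y | f y = c} + μ O ≤ 0 + μ O := by
    rw [zero_add]
    calc μ {y | f y = c} + μ O = μ ({y | f y = c} ∪ O) := hun
      _ ≤ μ D := measure_mono hsubD
      _ ≤ ENNReal.ofReal c := hD
      _ ≤ μ O := hOc
  have := (ENNReal.add_le_add_iff_right hOfin).mp hle
  exact le_antisymm this zero_le

set_option maxHeartbeats 3200000 in
/-- Let `Z 0 = X, Z 1 = X₁, Z 2 = X₂` be i.i.d. with continuous
distribution function `F` and `Z 3 = Y, Z 4 = Y₁, Z 5 = Y₂` i.i.d. with continuous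
distribution function `G`, all six independent.  With `H = τF + (1-τ)G`,
`E|H(X) - H(Y)| - (1/2)E|H(X₁) - H(X₂)| - (1/2)E|H(Y₁) - H(Y₂)| ≥ 0`,
with equality iff `F = G`. -/
theorem stmt0
    {Ω : Type*} [MeasurableSpace Ω] (P : Measure Ω) [IsProbabilityMeasure P]
    (Z : Fin 6 → Ω → ℝ) (hmeas : ∀ i, Measurable (Z i))
    (hIndep : iIndepFun Z P)
    (F G : ℝ → ℝ) (hFcont : Continuous F) (hGcont : Continuous G)
    (hF : ∀ i : Fin 6, i.val < 3 → ∀ x : ℝ, (P {ω | Z i ω ≤ x}).toReal = F x)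
    (hG : ∀ i : Fin 6, 3 ≤ i.val → ∀ x : ℝ, (P {ω | Z i ω ≤ x}).toReal = G x)
    (τ : ℝ) (hτ : τ ∈ Set.Icc (0:ℝ) 1)
    (H : ℝ → ℝ) (hH : ∀ x, H x = τ * F x + (1 - τ) * G x)
    (D : ℝ)
    (hD : D = (∫ ω, |H (Z 0 ω) - H (Z 3 ω)| ∂P)
        - (1/2) * (∫ ω, |H (Z 1 ω) - H (Z 2 ω)| ∂P)
        - (1/2) * (∫ ω, |H (Z 4 ω) - H (Z 5 ω)| ∂P)) :
    0 ≤ D ∧ (D = 0 ↔ F = G) := by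
  obtain ⟨hτ0, hτ1⟩ := hτ
  -- basic facts about F, G, H
  have hcdfF : ∀ i : Fin 6, i.val < 3 → ∀ x, P {ω | Z i ω ≤ x} = ENNReal.ofReal (F x) := by
    intro i hi x
    rw [← hF i hi x, ENNReal.ofReal_toReal (measure_ne_top P _)]
  have hcdfG : ∀ i : Fin 6, 3 ≤ i.val → ∀ x, P {ω | Z i ω ≤ x} = ENNReal.ofReal (G x) := by
    intro i hi x
    rw [← hG i hi x, ENNReal.ofReal_toReal (measure_ne_top P _)]
  have hFnn : ∀ x, 0 ≤ F x := fun x => (hF 0 (by decide) x) ▸ ENNReal.toReal_nonneg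
  have hGnn : ∀ x, 0 ≤ G x := fun x => (hG 3 (by decide) x) ▸ ENNReal.toReal_nonneg
  have hFle1 : ∀ x, F x ≤ 1 := by
    intro x
    rw [← hF 0 (by decide) x]
    exact ENNReal.toReal_le_of_le_ofReal zero_le_one (by simpa using prob_le_one)
  have hGle1 : ∀ x, G x ≤ 1 := by
    intro x
    rw [← hG 3 (by decide) x]
    exact ENNReal.toReal_le_of_le_ofReal zero_le_one (by simpa using prob_le_one)
  have hFmono : Monotone F := by
    intro x y hxy
    rw [← hF 0 (by decide) x, ← hF 0 (by decide) y]
    exact ENNReal.toReal_mono (measure_ne_top P _)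
      (measure_mono fun ω h => le_trans h hxy)
  have hGmono : Monotone G := by
    intro x y hxy
    rw [← hG 3 (by decide) x, ← hG 3 (by decide) y]
    exact ENNReal.toReal_mono (measure_ne_top P _)
      (measure_mono fun ω h => le_trans h hxy)
  have hHcont : Continuous H := by
    rw [funext hH]
    exact (continuous_const.mul hFcont).add (continuous_const.mul hGcont)
  have hHmeas : Measurable H := hHcont.measurable
  have hHmono : Monotone H := by
    intro x y hxy
    rw [hH x, hH y]
    have := hFmono hxy; have := hGmono hxy
    nlinarith
  have hH01 : ∀ y, H y ∈ Set.Icc (0:ℝ) 1 := by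
    intro y
    rw [Set.mem_Icc, hH y]
    constructor
    · have := hFnn y; have := hGnn y; nlinarith
    · have := hFle1 y; have := hGle1 y; nlinarith
  have hmS : ∀ t : ℝ, MeasurableSet {y : ℝ | H y ≤ t} := fun t => hHmeas measurableSet_Iic
  -- law transfer
  have hmapeq : ∀ i j : Fin 6, (∀ x, P {ω | Z i ω ≤ x} = P {ω | Z j ω ≤ x}) →
      ∀ S : Set ℝ, MeasurableSet S → P (Z i ⁻¹' S) = P (Z j ⁻¹' S) := by
    intro i j hij S hS
    have hmap : P.map (Z i) = P.map (Z j) := by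
      haveI : IsProbabilityMeasure (P.map (Z i)) :=
        Measure.isProbabilityMeasure_map (hmeas i).aemeasurable
      apply MeasureTheory.Measure.ext_of_Iic
      intro x
      rw [Measure.map_apply (hmeas i) measurableSet_Iic,
        Measure.map_apply (hmeas j) measurableSet_Iic]
      exact hij x
    rw [← Measure.map_apply (hmeas i) hS, hmap, Measure.map_apply (hmeas j) hS]
  have hXlaw : ∀ i : Fin 6, i.val < 3 → ∀ S : Set ℝ, MeasurableSet S →
      P (Z i ⁻¹' S) = P (Z 0 ⁻¹' S) := by
    intro i hi S hS
    exact hmapeq i 0 (fun x => by rw [hcdfF i hi x, hcdfF 0 (by decide) x]) S hS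
  have hYlaw : ∀ i : Fin 6, 3 ≤ i.val → ∀ S : Set ℝ, MeasurableSet S →
      P (Z i ⁻¹' S) = P (Z 3 ⁻¹' S) := by
    intro i hi S hS
    exact hmapeq i 3 (fun x => by rw [hcdfG i hi x, hcdfG 3 (by decide) x]) S hS
  -- cdfs of H(Z0), H(Z3)
  set a : ℝ → ℝ := fun t => (P {ω | H (Z 0 ω) ≤ t}).toReal with ha
  set b : ℝ → ℝ := fun t => (P {ω | H (Z 3 ω) ≤ t}).toReal with hb
  have haZ : ∀ i : Fin 6, i.val < 3 → ∀ t, P {ω | H (Z i ω) ≤ t} = P {ω | H (Z 0 ω) ≤ t} :=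
    fun i hi t => hXlaw i hi {y | H y ≤ t} (hmS t)
  have hbZ : ∀ i : Fin 6, 3 ≤ i.val → ∀ t, P {ω | H (Z i ω) ≤ t} = P {ω | H (Z 3 ω) ≤ t} :=
    fun i hi t => hYlaw i hi {y | H y ≤ t} (hmS t)
  -- independence
  have hUm : ∀ i, Measurable fun ω => H (Z i ω) := fun i => hHmeas.comp (hmeas i)
  have hprod : ∀ i j : Fin 6, i ≠ j → ∀ s t : Set ℝ, MeasurableSet s → MeasurableSet t →
      P ((fun ω => H (Z i ω)) ⁻¹' s ∩ (fun ω => H (Z j ω)) ⁻¹' t)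
        = P ((fun ω => H (Z i ω)) ⁻¹' s) * P ((fun ω => H (Z j ω)) ⁻¹' t) := by
    intro i j hij s t hs ht
    exact ((hIndep.indepFun hij).comp hHmeas hHmeas).measure_inter_preimage_eq_mul s t hs ht
  -- the three expectations
  have E03 : ∫ ω, |H (Z 0 ω) - H (Z 3 ω)| ∂P
      = ∫ t in Set.Ioc (0:ℝ) 1, (a t + b t - 2 * (a t * b t)) := by
    simp only [ha, hb]
    simpa using aux_pair P (fun ω => H (Z 0 ω)) (fun ω => H (Z 3 ω)) (hUm 0) (hUm 3)
      (hprod 0 3 (by decide)) (fun ω => hH01 _) (fun ω => hH01 _)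
  have E12 : ∫ ω, |H (Z 1 ω) - H (Z 2 ω)| ∂P
      = ∫ t in Set.Ioc (0:ℝ) 1, (a t + a t - 2 * (a t * a t)) := by
    simp only [ha]
    have := aux_pair P (fun ω => H (Z 1 ω)) (fun ω => H (Z 2 ω)) (hUm 1) (hUm 2)
      (hprod 1 2 (by decide)) (fun ω => hH01 _) (fun ω => hH01 _)
    simpa [haZ 1 (by decide), haZ 2 (by decide)] using this
  have E45 : ∫ ω, |H (Z 4 ω) - H (Z 5 ω)| ∂P
      = ∫ t in Set.Ioc (0:ℝ) 1, (b t + b t - 2 * (b t * b t)) := by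
    simp only [hb]
    have := aux_pair P (fun ω => H (Z 4 ω)) (fun ω => H (Z 5 ω)) (hUm 4) (hUm 5)
      (hprod 4 5 (by decide)) (fun ω => hH01 _) (fun ω => hH01 _)
    simpa [hbZ 4 (by decide), hbZ 5 (by decide)] using this
  -- integrability
  set ν := volume.restrict (Set.Ioc (0:ℝ) 1) with hν
  haveI : IsFiniteMeasure ν := ⟨by
    rw [hν, Measure.restrict_apply_univ, Real.volume_Ioc]
    exact ENNReal.ofReal_lt_top⟩
  have hamono : Monotone a := by
    intro s t hst
    exact ENNReal.toReal_mono (measure_ne_top P _) (measure_mono fun ω h => le_trans h hst)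
  have hbmono : Monotone b := by
    intro s t hst
    exact ENNReal.toReal_mono (measure_ne_top P _) (measure_mono fun ω h => le_trans h hst)
  have hameas : Measurable a := hamono.measurable
  have hbmeas : Measurable b := hbmono.measurable
  have ha01 : ∀ t, 0 ≤ a t ∧ a t ≤ 1 := by
    intro t
    refine ⟨ENNReal.toReal_nonneg, ?_⟩
    exact ENNReal.toReal_le_of_le_ofReal zero_le_one (by simpa using prob_le_one)
  have hb01 : ∀ t, 0 ≤ b t ∧ b t ≤ 1 := by
    intro t
    refine ⟨ENNReal.toReal_nonneg, ?_⟩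
    exact ENNReal.toReal_le_of_le_ofReal zero_le_one (by simpa using prob_le_one)
  have hintb : ∀ φ : ℝ → ℝ, Measurable φ → (∀ t, ‖φ t‖ ≤ 4) → Integrable φ ν := by
    intro φ hφ hbd
    exact (integrable_const (4:ℝ)).mono' hφ.aestronglyMeasurable (Filter.Eventually.of_forall hbd)
  have hbd4 : ∀ u v : ℝ, 0 ≤ u → u ≤ 1 → 0 ≤ v → v ≤ 1 → ‖u + v - 2 * (u * v)‖ ≤ 4 := by
    intro u v h1 h2 h3 h4
    rw [Real.norm_eq_abs, abs_le]
    constructor <;> nlinarith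
  have i1 : Integrable (fun t => a t + b t - 2 * (a t * b t)) ν :=
    hintb _ ((hameas.add hbmeas).sub ((hameas.mul hbmeas).const_mul 2))
      (fun t => hbd4 _ _ (ha01 t).1 (ha01 t).2 (hb01 t).1 (hb01 t).2)
  have i2 : Integrable (fun t => a t + a t - 2 * (a t * a t)) ν :=
    hintb _ ((hameas.add hameas).sub ((hameas.mul hameas).const_mul 2))
      (fun t => hbd4 _ _ (ha01 t).1 (ha01 t).2 (ha01 t).1 (ha01 t).2)
  have i3 : Integrable (fun t => b t + b t - 2 * (b t * b t)) ν :=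
    hintb _ ((hbmeas.add hbmeas).sub ((hbmeas.mul hbmeas).const_mul 2))
      (fun t => hbd4 _ _ (hb01 t).1 (hb01 t).2 (hb01 t).1 (hb01 t).2)
  have i2' : Integrable (fun t => (1/2 : ℝ) * (a t + a t - 2 * (a t * a t))) ν := i2.const_mul _
  have i3' : Integrable (fun t => (1/2 : ℝ) * (b t + b t - 2 * (b t * b t))) ν := i3.const_mul _
  have isq : Integrable (fun t => (a t - b t)^2) ν := by
    apply hintb _ ((hameas.sub hbmeas).pow measurable_const)
    intro t
    rw [Real.norm_eq_abs, abs_le]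
    simp only [Pi.sub_apply]
    have := ha01 t; have := hb01 t
    constructor <;> nlinarith
  -- the key formula : D = ∫ (a - b)²
  have hDf : D = ∫ t in Set.Ioc (0:ℝ) 1, (a t - b t)^2 := by
    rw [hD, E03, E12, E45,
      show (1/2 : ℝ) * (∫ t in Set.Ioc (0:ℝ) 1, (a t + a t - 2 * (a t * a t)))
          = ∫ t in Set.Ioc (0:ℝ) 1, (1/2 : ℝ) * (a t + a t - 2 * (a t * a t)) from
        (MeasureTheory.integral_const_mul _ _).symm,
      show (1/2 : ℝ) * (∫ t in Set.Ioc (0:ℝ) 1, (b t + b t - 2 * (b t * b t)))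
          = ∫ t in Set.Ioc (0:ℝ) 1, (1/2 : ℝ) * (b t + b t - 2 * (b t * b t)) from
        (MeasureTheory.integral_const_mul _ _).symm,
      ← integral_sub i1 i2',
      ← integral_sub (show Integrable (fun t => (a t + b t - 2 * (a t * b t))
          - (1/2 : ℝ) * (a t + a t - 2 * (a t * a t))) ν from i1.sub i2') i3']
    apply integral_congr_ae (Filter.Eventually.of_forall fun t => ?_)
    ring
  have hDnn : 0 ≤ D := by
    rw [hDf]
    exact integral_nonneg fun t => sq_nonneg _
  refine ⟨hDnn, ?_, ?_⟩
  · -- D = 0 → F = G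
    intro hD0
    have hae : (fun t => (a t - b t)^2) =ᵐ[ν] 0 :=
      (integral_eq_zero_iff_of_nonneg (fun t => sq_nonneg _) isq).mp (by rw [← hDf]; exact hD0)
    have hNmeas : MeasurableSet {t : ℝ | ¬ a t = b t} :=
      (measurableSet_eq_fun hameas hbmeas).compl
    have hN : volume ({t : ℝ | ¬ a t = b t} ∩ Set.Ioc (0:ℝ) 1) = 0 := by
      have h1 : ν {t : ℝ | ¬ (a t - b t)^2 = 0} = 0 := by
        rw [Filter.EventuallyEq, ae_iff] at hae
        simpa using hae
      have h2 : {t : ℝ | ¬ (a t - b t)^2 = 0} = {t : ℝ | ¬ a t = b t} := by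
        ext t
        simp [sub_eq_zero, pow_eq_zero_iff]
      rw [h2] at h1
      rwa [hν, Measure.restrict_apply hNmeas] at h1
    -- a good point in every interval
    have hW : ∀ α β : ℝ, 0 ≤ α → β ≤ 1 → α < β → ∃ t, a t = b t ∧ α < t ∧ t < β := by
      intro α β hα hβ hαβ
      by_contra hcon
      push_neg at hcon
      have hsub : Set.Ioo α β ⊆ {t : ℝ | ¬ a t = b t} ∩ Set.Ioc (0:ℝ) 1 := by
        intro t ht
        exact ⟨fun heq => absurd (hcon t heq ht.1) (not_le.mpr ht.2), lt_of_le_of_lt hα ht.1,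
          le_trans ht.2.le hβ⟩
      have hle := measure_mono (μ := volume) hsub
      rw [hN, Real.volume_Ioo] at hle
      have : β - α ≤ 0 := by
        by_contra hpos
        push_neg at hpos
        simp [ENNReal.ofReal_eq_zero, le_zero_iff] at hle
        linarith
      linarith
    -- measure equalities at every point of [0,1]
    have hsm0 : ∀ t : ℝ, MeasurableSet {ω | H (Z 0 ω) ≤ t} := fun t => (hUm 0) measurableSet_Iic
    have hsm3 : ∀ t : ℝ, MeasurableSet {ω | H (Z 3 ω) ≤ t} := fun t => (hUm 3) measurableSet_Iic
    have hIic : ∀ c : ℝ, 0 ≤ c → c ≤ 1 →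
        P {ω | H (Z 0 ω) ≤ c} = P {ω | H (Z 3 ω) ≤ c} := by
      intro c hc0 hc1
      rcases eq_or_lt_of_le hc1 with h1 | h1
      · have hu : ∀ W : Ω → ℝ, (∀ ω, H (W ω) ∈ Set.Icc (0:ℝ) 1) →
            {ω | H (W ω) ≤ c} = Set.univ := by
          intro W hW01
          apply Set.eq_univ_of_forall
          intro ω
          exact le_trans (hW01 ω).2 h1.ge
        rw [hu (Z 0) (fun ω => hH01 _), hu (Z 3) (fun ω => hH01 _)]
      · have hch : ∀ n : ℕ, ∃ t, a t = b t ∧ c < t ∧ t < min (c + 1/(n+1)) 1 := by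
          intro n
          exact hW c (min (c + 1/(n+1)) 1) hc0 (min_le_right _ _)
            (lt_min (lt_add_of_pos_right c (by positivity)) h1)
        choose ts hts1 hts2 hts3 using hch
        have htsub : ∀ n : ℕ, ts n ≤ c + 1/(n+1) :=
          fun n => le_trans (hts3 n).le (min_le_left _ _)
        have hseteq : ∀ W : Ω → ℝ,
            {ω | H (W ω) ≤ c} = ⋂ n : ℕ, {ω | H (W ω) ≤ ts n} := by
          intro W
          ext ω
          simp only [Set.mem_setOf_eq, Set.mem_iInter]
          constructor
          · intro h n
            exact le_trans h (hts2 n).le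
          · intro h
            apply le_of_forall_pos_le_add
            intro ε hε
            obtain ⟨n, hn⟩ := exists_nat_one_div_lt hε
            exact le_trans (h n) (by have := htsub n; linarith)
        have hdir : ∀ W : Ω → ℝ, Directed (· ⊇ ·) fun n : ℕ => {ω | H (W ω) ≤ ts n} := by
          intro W m n
          rcases le_total (ts m) (ts n) with h | h
          · exact ⟨m, subset_rfl, fun ω hω => le_trans hω h⟩
          · exact ⟨n, fun ω hω => le_trans hω h, subset_rfl⟩
        rw [hseteq (Z 0), hseteq (Z 3),
          Directed.measure_iInter (fun n => (hsm0 (ts n)).nullMeasurableSet) (hdir (Z 0))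
            ⟨0, measure_ne_top P _⟩,
          Directed.measure_iInter (fun n => (hsm3 (ts n)).nullMeasurableSet) (hdir (Z 3))
            ⟨0, measure_ne_top P _⟩]
        apply iInf_congr
        intro n
        exact (ENNReal.toReal_eq_toReal_iff' (measure_ne_top P _) (measure_ne_top P _)).mp (hts1 n)
    have hIio : ∀ c : ℝ, 0 ≤ c → c ≤ 1 →
        P {ω | H (Z 0 ω) < c} = P {ω | H (Z 3 ω) < c} := by
      intro c hc0 hc1
      rcases eq_or_lt_of_le hc0 with h0 | h0
      · have hu : ∀ W : Ω → ℝ, (∀ ω, H (W ω) ∈ Set.Icc (0:ℝ) 1) →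
            {ω | H (W ω) < c} = (∅ : Set Ω) := by
          intro W hW01
          apply Set.eq_empty_iff_forall_notMem.mpr
          intro ω hω
          exact absurd (Set.mem_setOf_eq ▸ hω) (not_lt.mpr (h0 ▸ (hW01 ω).1))
        rw [hu (Z 0) (fun ω => hH01 _), hu (Z 3) (fun ω => hH01 _)]
      · have hch : ∀ n : ℕ, ∃ t, a t = b t ∧ max 0 (c - 1/(n+1)) < t ∧ t < c := by
          intro n
          exact hW (max 0 (c - 1/(n+1))) c (le_max_left _ _) hc1
            (max_lt h0 (sub_lt_self c (by positivity)))
        choose ts hts1 hts2 hts3 using hch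
        have htlb : ∀ n : ℕ, c - 1/(n+1) < ts n :=
          fun n => lt_of_le_of_lt (le_max_right _ _) (hts2 n)
        have hseteq : ∀ W : Ω → ℝ,
            {ω | H (W ω) < c} = ⋃ n : ℕ, {ω | H (W ω) ≤ ts n} := by
          intro W
          ext ω
          simp only [Set.mem_setOf_eq, Set.mem_iUnion]
          constructor
          · intro h
            obtain ⟨n, hn⟩ := exists_nat_one_div_lt (show (0:ℝ) < c - H (W ω) by linarith)
            exact ⟨n, le_of_lt (by have := htlb n; linarith)⟩
          · rintro ⟨n, hn⟩
            exact lt_of_le_of_lt hn (hts3 n)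
        have hdir : ∀ W : Ω → ℝ, Directed (· ⊆ ·) fun n : ℕ => {ω | H (W ω) ≤ ts n} := by
          intro W m n
          rcases le_total (ts m) (ts n) with h | h
          · exact ⟨n, fun ω hω => le_trans hω h, subset_rfl⟩
          · exact ⟨m, subset_rfl, fun ω hω => le_trans hω h⟩
        rw [hseteq (Z 0), hseteq (Z 3),
          Directed.measure_iUnion (hdir (Z 0)), Directed.measure_iUnion (hdir (Z 3))]
        apply iSup_congr
        intro n
        exact (ENNReal.toReal_eq_toReal_iff' (measure_ne_top P _) (measure_ne_top P _)).mp (hts1 n)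
    -- now prove F = G pointwise
    funext x
    set c := H x with hcdefn
    have hc0 : 0 ≤ c := (hH01 x).1
    have hc1 : c ≤ 1 := (hH01 x).2
    set q := P {ω | H (Z 0 ω) ≤ c} with hq
    set q' := P {ω | H (Z 0 ω) < c} with hq'
    -- sandwich bounds
    have hFub : ENNReal.ofReal (F x) ≤ q := by
      rw [← hcdfF 0 (by decide) x]
      exact measure_mono fun ω (h : Z 0 ω ≤ x) => hHmono h
    have hFlb : q' ≤ ENNReal.ofReal (F x) := by
      rw [← hcdfF 0 (by decide) x]
      exact measure_mono fun ω (h : H (Z 0 ω) < c) =>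
        le_of_not_gt fun hgt => absurd h (not_lt.mpr (hHmono hgt.le))
    have hGub : ENNReal.ofReal (G x) ≤ q := by
      rw [hq, hIic c hc0 hc1, ← hcdfG 3 (by decide) x]
      exact measure_mono fun ω (h : Z 3 ω ≤ x) => hHmono h
    have hGlb : q' ≤ ENNReal.ofReal (G x) := by
      rw [hq', hIio c hc0 hc1, ← hcdfG 3 (by decide) x]
      exact measure_mono fun ω (h : H (Z 3 ω) < c) =>
        le_of_not_gt fun hgt => absurd h (not_lt.mpr (hHmono hgt.le))
    -- atom of H(Z0) at c equals atom of H(Z3) at c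
    have hmeq0 : MeasurableSet {ω | H (Z 0 ω) = c} := (hUm 0) (measurableSet_singleton c)
    have hmeq3 : MeasurableSet {ω | H (Z 3 ω) = c} := (hUm 3) (measurableSet_singleton c)
    have hsplit : ∀ W : Ω → ℝ, Measurable (fun ω => H (W ω)) →
        P {ω | H (W ω) ≤ c} = P {ω | H (W ω) < c} + P {ω | H (W ω) = c} := by
      intro W hWm
      have hset : {ω | H (W ω) ≤ c} = {ω | H (W ω) < c} ∪ {ω | H (W ω) = c} := by
        ext ω
        simp only [Set.mem_setOf_eq, Set.mem_union]
        exact le_iff_lt_or_eq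
      rw [hset]
      exact measure_union (by
          rw [Set.disjoint_left]
          intro ω h1 h2
          exact absurd (Set.mem_setOf_eq ▸ h2) (ne_of_lt (Set.mem_setOf_eq ▸ h1)))
        (show MeasurableSet {ω | H (W ω) = c} from hWm (measurableSet_singleton c))
    have hsplit0 := hsplit (Z 0) (hUm 0)
    have hsplit3 := hsplit (Z 3) (hUm 3)
    have hatomeq : P {ω | H (Z 0 ω) = c} = P {ω | H (Z 3 ω) = c} := by
      have h1 : P {ω | H (Z 3 ω) < c} + P {ω | H (Z 0 ω) = c}
          = P {ω | H (Z 3 ω) < c} + P {ω | H (Z 3 ω) = c} := by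
        rw [← hsplit3, ← hIio c hc0 hc1, ← hsplit0, hIic c hc0 hc1]
      exact (ENNReal.add_right_inj (measure_ne_top P _)).mp h1
    -- the atom vanishes
    have hatom0 : P {ω | H (Z 0 ω) = c} = 0 ∨ P {ω | H (Z 3 ω) = c} = 0 := by
      rcases lt_or_eq_of_le hτ0 with hτpos | hτzero
      · left
        have hsubF : {y : ℝ | H y = c} ⊆ {y : ℝ | F y = F x} := by
          intro y hy
          have hy' : H y = H x := hy
          have heq : τ * F y + (1 - τ) * G y = τ * F x + (1 - τ) * G x := by
            rw [← hH y, ← hH x, hy']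
          rcases le_total y x with hyx | hxy
          · have e1 : F y ≤ F x := hFmono hyx
            have e2 : G y ≤ G x := hGmono hyx
            have : F y = F x := by nlinarith
            exact this
          · have e1 : F x ≤ F y := hFmono hxy
            have e2 : G x ≤ G y := hGmono hxy
            have : F y = F x := by nlinarith
            exact this
        haveI : IsProbabilityMeasure (P.map (Z 0)) :=
          Measure.isProbabilityMeasure_map (hmeas 0).aemeasurable
        have hflat : (P.map (Z 0)) {y | F y = F x} = 0 := by
          apply aux_flat (P.map (Z 0)) F hFcont hFnn
          intro y
          rw [Measure.map_apply (hmeas 0) measurableSet_Iic]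
          exact hcdfF 0 (by decide) y
        have hFsetm : MeasurableSet {y : ℝ | F y = F x} :=
          hFcont.measurable (measurableSet_singleton (F x))
        have : P (Z 0 ⁻¹' {y | F y = F x}) = 0 := by
          rw [Measure.map_apply (hmeas 0) hFsetm] at hflat
          exact hflat
        have hle : P {ω | H (Z 0 ω) = c} ≤ P (Z 0 ⁻¹' {y | F y = F x}) :=
          measure_mono fun ω h => hsubF h
        exact le_antisymm (this ▸ hle) zero_le
      · right
        have hsubG : {y : ℝ | H y = c} ⊆ {y : ℝ | G y = G x} := by
          intro y hy
          have hy' : H y = H x := hy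
          have heq : τ * F y + (1 - τ) * G y = τ * F x + (1 - τ) * G x := by
            rw [← hH y, ← hH x, hy']
          rcases le_total y x with hyx | hxy
          · have e1 : F y ≤ F x := hFmono hyx
            have e2 : G y ≤ G x := hGmono hyx
            have : G y = G x := by nlinarith [hτzero]
            exact this
          · have e1 : F x ≤ F y := hFmono hxy
            have e2 : G x ≤ G y := hGmono hxy
            have : G y = G x := by nlinarith [hτzero]
            exact this
        haveI : IsProbabilityMeasure (P.map (Z 3)) :=
          Measure.isProbabilityMeasure_map (hmeas 3).aemeasurable
        have hflat : (P.map (Z 3)) {y | G y = G x} = 0 := by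
          apply aux_flat (P.map (Z 3)) G hGcont hGnn
          intro y
          rw [Measure.map_apply (hmeas 3) measurableSet_Iic]
          exact hcdfG 3 (by decide) y
        have hGsetm : MeasurableSet {y : ℝ | G y = G x} :=
          hGcont.measurable (measurableSet_singleton (G x))
        have : P (Z 3 ⁻¹' {y | G y = G x}) = 0 := by
          rw [Measure.map_apply (hmeas 3) hGsetm] at hflat
          exact hflat
        have hle : P {ω | H (Z 3 ω) = c} ≤ P (Z 3 ⁻¹' {y | G y = G x}) :=
          measure_mono fun ω h => hsubG h
        exact le_antisymm (this ▸ hle) zero_le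
    have hatom : P {ω | H (Z 0 ω) = c} = 0 := by
      rcases hatom0 with h | h
      · exact h
      · rw [hatomeq, h]
    -- conclude q = q' and squeeze
    have hqq' : q = q' := by
      rw [hq, hq', hsplit0, hatom, add_zero]
    have h1 : ENNReal.ofReal (F x) = q := le_antisymm hFub (hqq' ▸ hFlb)
    have h2 : ENNReal.ofReal (G x) = q := le_antisymm hGub (hqq' ▸ hGlb)
    have : ENNReal.ofReal (F x) = ENNReal.ofReal (G x) := by rw [h1, h2]
    have := congrArg ENNReal.toReal this
    rwa [ENNReal.toReal_ofReal (hFnn x), ENNReal.toReal_ofReal (hGnn x)] at this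
  · -- F = G → D = 0
    intro hFG
    have hall : ∀ x, P {ω | Z 3 ω ≤ x} = P {ω | Z 0 ω ≤ x} := by
      intro x
      rw [hcdfG 3 (by decide) x, hcdfF 0 (by decide) x, hFG]
    have hba : ∀ t, b t = a t := by
      intro t
      simp only [ha, hb]
      exact congrArg ENNReal.toReal (hmapeq 3 0 hall {y | H y ≤ t} (hmS t))
    rw [hDf]
    have : ∀ t : ℝ, (a t - b t)^2 = 0 := by
      intro t; rw [hba t]; ring
    simp [this]
end

section
/- Let X, X_1, X_2 be i.i.d. random variables with continuous distribution function F and Y, Y_1, Y_2 be i.i.d. random variables with continuous distribution function G, with all six variables independent. Let H = τF + (1−τ)G for some τ ∈ [0,1]. Then E|H(X) − H(Y)| − (1/2)E|H(X_1) − H(X_2)| − (1/2)E|H(Y_1) − H(Y_2)| = ∫_{−∞}^{∞} (F(x) − G(x))² d(τF(x) + (1−τ)G(x)), where the right-hand side is the integral of (F−G)² with respect to the mixture measure with distribution function H. -/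
open MeasureTheory ProbabilityTheory

/-- If the cdf of a probability measure is continuous, the measure has no atoms
(stated for a single point). -/
lemma no_atom_of_cont_cdf (μ : Measure ℝ) [IsProbabilityMeasure μ]
    (F : ℝ → ℝ) (hF : ∀ x, F x = (μ (Set.Iic x)).toReal) (hFcont : Continuous F)
    (t : ℝ) : μ {t} = 0 := by
  have hIoc : ∀ s : ℝ, s ≤ t → (μ (Set.Ioc s t)).toReal = F t - F s := by
    intro s hs
    have hsub : Set.Iic s ⊆ Set.Iic t := Set.Iic_subset_Iic.mpr hs
    have hd : μ (Set.Iic t \ Set.Iic s) = μ (Set.Iic t) - μ (Set.Iic s) :=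
      measure_diff hsub measurableSet_Iic.nullMeasurableSet (measure_ne_top μ _)
    rw [Set.Iic_sdiff_Iic] at hd
    rw [hd, ENNReal.toReal_sub_of_le (measure_mono hsub) (measure_ne_top μ _), hF, hF]
  have hbound : ∀ s : ℝ, s < t → (μ {t}).toReal ≤ F t - F s := by
    intro s hs
    rw [← hIoc s hs.le]
    exact ENNReal.toReal_mono (measure_ne_top μ _)
      (measure_mono (Set.singleton_subset_iff.mpr ⟨hs, le_rfl⟩))
  have htend : Filter.Tendsto (fun s => F t - F s) (nhdsWithin t (Set.Iio t)) (nhds 0) := by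
    have h1 : Filter.Tendsto F (nhdsWithin t (Set.Iio t)) (nhds (F t)) :=
      (hFcont.tendsto t).mono_left nhdsWithin_le_nhds
    simpa using Filter.Tendsto.const_sub (F t) h1
  have hle : (μ {t}).toReal ≤ 0 := by
    refine ge_of_tendsto htend ?_
    filter_upwards [self_mem_nhdsWithin] with s hs
    exact hbound s hs
  have h0 : (μ {t}).toReal = 0 := le_antisymm hle ENNReal.toReal_nonneg
  exact (ENNReal.toReal_eq_zero_iff _).mp h0 |>.resolve_right (measure_ne_top μ _)

lemma Ici_toReal (μ : Measure ℝ) [IsProbabilityMeasure μ]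
    (F : ℝ → ℝ) (hF : ∀ x, F x = (μ (Set.Iic x)).toReal) (hFcont : Continuous F)
    (t : ℝ) : (μ (Set.Ici t)).toReal = 1 - F t ∧ (μ (Set.Iio t)).toReal = F t := by
  have hatom := no_atom_of_cont_cdf μ F hF hFcont t
  have hiio : μ (Set.Iio t) = μ (Set.Iic t) := by
    refine le_antisymm (measure_mono Set.Iio_subset_Iic_self) ?_
    calc μ (Set.Iic t) = μ (Set.Iio t ∪ {t}) := by rw [Set.Iio_union_right]
      _ ≤ μ (Set.Iio t) + μ {t} := measure_union_le _ _
      _ = μ (Set.Iio t) := by rw [hatom, add_zero]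
  constructor
  · have hcompl : μ (Set.Ici t) = 1 - μ (Set.Iio t) := by
      have hc := measure_compl (μ := μ) (measurableSet_Iio (a := t)) (measure_ne_top μ _)
      rw [Set.compl_Iio] at hc
      rw [hc, measure_univ]
    rw [hcompl, ENNReal.toReal_sub_of_le prob_le_one ENNReal.one_ne_top, hiio,
      ENNReal.toReal_one, hF]
  · rw [hiio, hF]

/-- The key per-pair computation: for independent `X, Y` and a probability
measure `h` whose "cdf" `H` satisfies the Ioc formula,
`E|H(X) - H(Y)| = ∫ (P(X ≥ t) P(Y < t) + P(Y ≥ t) P(X < t)) dh(t)`. -/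
lemma pair_integral {Ω : Type*} [MeasurableSpace Ω] (P : Measure Ω) [IsProbabilityMeasure P]
    (X Y : Ω → ℝ) (hX : Measurable X) (hY : Measurable Y) (hXY : IndepFun X Y P)
    (h : Measure ℝ) [IsProbabilityMeasure h]
    (H : ℝ → ℝ) (hHIoc : ∀ a b : ℝ, a ≤ b → (h (Set.Ioc a b)).toReal = H b - H a)
    (hHmono : Monotone H) :
    ∫ ω, |H (X ω) - H (Y ω)| ∂P
      = ∫ t, ((P.map X (Set.Ici t)).toReal * (P.map Y (Set.Iio t)).toReal
          + (P.map Y (Set.Ici t)).toReal * (P.map X (Set.Iio t)).toReal) ∂h := by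
  set T : Set (Ω × ℝ) :=
    {p : Ω × ℝ | min (X p.1) (Y p.1) < p.2 ∧ p.2 ≤ max (X p.1) (Y p.1)} with hT
  have hTmeas : MeasurableSet T := by
    apply MeasurableSet.inter
    · exact measurableSet_lt (((hX.comp measurable_fst).min (hY.comp measurable_fst)))
        measurable_snd
    · exact measurableSet_le measurable_snd
        ((hX.comp measurable_fst).max (hY.comp measurable_fst))
  have hint : Integrable (Function.uncurry fun ω t => T.indicator (fun _ => (1:ℝ)) (ω, t))
      (P.prod h) := by
    have : (Function.uncurry fun ω t => T.indicator (fun _ => (1:ℝ)) (ω, t))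
        = T.indicator (fun _ => (1:ℝ)) := by
      funext p; rfl
    rw [this]
    exact (integrable_const (1:ℝ)).indicator hTmeas
  have step1 : ∀ ω, |H (X ω) - H (Y ω)|
      = ∫ t, T.indicator (fun _ => (1:ℝ)) (ω, t) ∂h := by
    intro ω
    have hsec : ∀ t : ℝ, T.indicator (fun _ => (1:ℝ)) (ω, t)
        = (Set.Ioc (min (X ω) (Y ω)) (max (X ω) (Y ω))).indicator (fun _ => (1:ℝ)) t := by
      intro t; rfl
    rw [show (fun t => T.indicator (fun _ => (1:ℝ)) (ω, t))
        = (Set.Ioc (min (X ω) (Y ω)) (max (X ω) (Y ω))).indicator (fun _ => (1:ℝ))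
      from funext hsec]
    rw [integral_indicator_const (1:ℝ) measurableSet_Ioc, smul_eq_mul, mul_one]
    rcases le_total (X ω) (Y ω) with hxy | hxy
    · rw [min_eq_left hxy, max_eq_right hxy, measureReal_def, hHIoc _ _ hxy,
        abs_of_nonpos (by linarith [hHmono hxy])]
      ring
    · rw [min_eq_right hxy, max_eq_left hxy, measureReal_def, hHIoc _ _ hxy,
        abs_of_nonneg (by linarith [hHmono hxy])]
  have step2 : ∀ t : ℝ, ∫ ω, T.indicator (fun _ => (1:ℝ)) (ω, t) ∂P
      = (P.map X (Set.Ici t)).toReal * (P.map Y (Set.Iio t)).toReal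
        + (P.map Y (Set.Ici t)).toReal * (P.map X (Set.Iio t)).toReal := by
    intro t
    set U : Set Ω := (X ⁻¹' Set.Ici t ∩ Y ⁻¹' Set.Iio t) ∪ (Y ⁻¹' Set.Ici t ∩ X ⁻¹' Set.Iio t)
      with hU
    have hsec : ∀ ω : Ω, T.indicator (fun _ => (1:ℝ)) (ω, t)
        = U.indicator (fun _ => (1:ℝ)) ω := by
      intro ω
      have hmem : (ω, t) ∈ T ↔ ω ∈ U := by
        simp only [hT, hU, Set.mem_setOf_eq, Set.mem_union, Set.mem_inter_iff,
          Set.mem_preimage, Set.mem_Ici, Set.mem_Iio, min_lt_iff, le_max_iff]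
        constructor
        · rintro ⟨h1 | h1, h2 | h2⟩ <;> [exact absurd h2 (not_le.mpr h1);
            exact Or.inr ⟨h2, h1⟩; exact Or.inl ⟨h2, h1⟩; exact absurd h2 (not_le.mpr h1)]
        · rintro (⟨h1, h2⟩ | ⟨h1, h2⟩)
          · exact ⟨Or.inr h2, Or.inl h1⟩
          · exact ⟨Or.inl h2, Or.inr h1⟩
      by_cases hc : (ω, t) ∈ T
      · rw [Set.indicator_of_mem hc, Set.indicator_of_mem (hmem.mp hc)]
      · rw [Set.indicator_of_notMem hc, Set.indicator_of_notMem (fun hh => hc (hmem.mpr hh))]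
    rw [show (fun ω => T.indicator (fun _ => (1:ℝ)) (ω, t))
        = U.indicator (fun _ => (1:ℝ)) from funext hsec]
    have hUmeas : MeasurableSet U :=
      ((hX measurableSet_Ici).inter (hY measurableSet_Iio)).union
        ((hY measurableSet_Ici).inter (hX measurableSet_Iio))
    rw [integral_indicator_const (1:ℝ) hUmeas, smul_eq_mul, mul_one]
    have hdisj : Disjoint (X ⁻¹' Set.Ici t ∩ Y ⁻¹' Set.Iio t)
        (Y ⁻¹' Set.Ici t ∩ X ⁻¹' Set.Iio t) := by
      rw [Set.disjoint_left]
      rintro ω ⟨h1, h2⟩ ⟨h3, h4⟩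
      simp only [Set.mem_preimage, Set.mem_Ici, Set.mem_Iio] at h2 h3
      exact absurd h3 (not_le.mpr h2)
    rw [measureReal_def, hU, measure_union hdisj ((hY measurableSet_Ici).inter (hX measurableSet_Iio)),
      hXY.measure_inter_preimage_eq_mul _ _ measurableSet_Ici measurableSet_Iio,
      hXY.symm.measure_inter_preimage_eq_mul _ _ measurableSet_Ici measurableSet_Iio,
      ENNReal.toReal_add (by finiteness) (by finiteness), ENNReal.toReal_mul,
      ENNReal.toReal_mul,
      Measure.map_apply hX measurableSet_Ici, Measure.map_apply hY measurableSet_Iio,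
      Measure.map_apply hY measurableSet_Ici, Measure.map_apply hX measurableSet_Iio]
  calc ∫ ω, |H (X ω) - H (Y ω)| ∂P
      = ∫ ω, ∫ t, T.indicator (fun _ => (1:ℝ)) (ω, t) ∂h ∂P := by
        exact integral_congr_ae (Filter.Eventually.of_forall fun ω => step1 ω)
    _ = ∫ t, ∫ ω, T.indicator (fun _ => (1:ℝ)) (ω, t) ∂P ∂h :=
        integral_integral_swap hint
    _ = _ := integral_congr_ae (Filter.Eventually.of_forall fun t => step2 t)

/-- With `X, X₁, X₂` i.i.d. from `μ` (continuous cdf `F`) and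
`Y, Y₁, Y₂` i.i.d. from `ν` (continuous cdf `G`), all six independent, and
`H = τF + (1-τ)G`, one has
`E|H(X) - H(Y)| - (1/2)E|H(X₁) - H(X₂)| - (1/2)E|H(Y₁) - H(Y₂)|
  = ∫ (F - G)² d(τμ + (1-τ)ν)`. -/
theorem stmt1
    {Ω : Type*} [MeasurableSpace Ω] (P : Measure Ω) [IsProbabilityMeasure P]
    (Z : Fin 6 → Ω → ℝ) (hmeas : ∀ i, Measurable (Z i))
    (hIndep : iIndepFun Z P)
    (μ ν : Measure ℝ) [IsProbabilityMeasure μ] [IsProbabilityMeasure ν]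
    (hμ : ∀ i : Fin 6, i.val < 3 → P.map (Z i) = μ)
    (hν : ∀ i : Fin 6, 3 ≤ i.val → P.map (Z i) = ν)
    (F G : ℝ → ℝ)
    (hF : ∀ x, F x = (μ (Set.Iic x)).toReal)
    (hG : ∀ x, G x = (ν (Set.Iic x)).toReal)
    (hFcont : Continuous F) (hGcont : Continuous G)
    (τ : ℝ) (hτ : τ ∈ Set.Icc (0:ℝ) 1)
    (H : ℝ → ℝ) (hH : ∀ x, H x = τ * F x + (1 - τ) * G x) :
    (∫ ω, |H (Z 0 ω) - H (Z 3 ω)| ∂P)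
        - (1/2) * (∫ ω, |H (Z 1 ω) - H (Z 2 ω)| ∂P)
        - (1/2) * (∫ ω, |H (Z 4 ω) - H (Z 5 ω)| ∂P)
      = ∫ x, (F x - G x)^2
          ∂(ENNReal.ofReal τ • μ + ENNReal.ofReal (1 - τ) • ν) := by
  obtain ⟨hτ0, hτ1⟩ := hτ
  set h : Measure ℝ := ENNReal.ofReal τ • μ + ENNReal.ofReal (1 - τ) • ν with hh
  haveI : IsProbabilityMeasure h := by
    constructor
    rw [hh]
    simp only [Measure.add_apply, Measure.smul_apply, smul_eq_mul, measure_univ, mul_one]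
    rw [← ENNReal.ofReal_add hτ0 (by linarith : (0:ℝ) ≤ 1 - τ)]
    norm_num
  -- the cdf of h is H
  have hcdf : ∀ x, (h (Set.Iic x)).toReal = H x := by
    intro x
    rw [hh]
    simp only [Measure.add_apply, Measure.smul_apply, smul_eq_mul]
    rw [ENNReal.toReal_add (by finiteness) (by finiteness), ENNReal.toReal_mul,
      ENNReal.toReal_mul, ENNReal.toReal_ofReal hτ0, ENNReal.toReal_ofReal (by linarith),
      hH, hF, hG]
  have hHmono : Monotone H := by
    intro a b hab
    rw [← hcdf a, ← hcdf b]
    exact ENNReal.toReal_mono (measure_ne_top h _) (measure_mono (Set.Iic_subset_Iic.mpr hab))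
  have hHIoc : ∀ a b : ℝ, a ≤ b → (h (Set.Ioc a b)).toReal = H b - H a := by
    intro a b hab
    have hsub : Set.Iic a ⊆ Set.Iic b := Set.Iic_subset_Iic.mpr hab
    have hd : h (Set.Iic b \ Set.Iic a) = h (Set.Iic b) - h (Set.Iic a) :=
      measure_diff hsub measurableSet_Iic.nullMeasurableSet (measure_ne_top h _)
    rw [Set.Iic_sdiff_Iic] at hd
    rw [hd, ENNReal.toReal_sub_of_le (measure_mono hsub) (measure_ne_top h _), hcdf, hcdf]
  -- bounds on F and G
  have hF01 : ∀ t, 0 ≤ F t ∧ F t ≤ 1 := by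
    intro t
    rw [hF]
    exact ⟨ENNReal.toReal_nonneg, by
      simpa using ENNReal.toReal_mono ENNReal.one_ne_top (prob_le_one (μ := μ))⟩
  have hG01 : ∀ t, 0 ≤ G t ∧ G t ≤ 1 := by
    intro t
    rw [hG]
    exact ⟨ENNReal.toReal_nonneg, by
      simpa using ENNReal.toReal_mono ENNReal.one_ne_top (prob_le_one (μ := ν))⟩
  -- translations for μ and ν
  have hμI := fun t => Ici_toReal μ F hF hFcont t
  have hνI := fun t => Ici_toReal ν G hG hGcont t
  -- the three pair integrals
  have h03 : ∫ ω, |H (Z 0 ω) - H (Z 3 ω)| ∂P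
      = ∫ t, ((1 - F t) * G t + (1 - G t) * F t) ∂h := by
    rw [pair_integral P (Z 0) (Z 3) (hmeas 0) (hmeas 3)
      (hIndep.indepFun (by decide)) h H hHIoc hHmono]
    refine integral_congr_ae (Filter.Eventually.of_forall fun t => ?_)
    simp only [hμ 0 (by decide), hν 3 (by decide), (hμI t).1, (hμI t).2, (hνI t).1, (hνI t).2]
  have h12 : ∫ ω, |H (Z 1 ω) - H (Z 2 ω)| ∂P
      = ∫ t, ((1 - F t) * F t + (1 - F t) * F t) ∂h := by
    rw [pair_integral P (Z 1) (Z 2) (hmeas 1) (hmeas 2)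
      (hIndep.indepFun (by decide)) h H hHIoc hHmono]
    refine integral_congr_ae (Filter.Eventually.of_forall fun t => ?_)
    simp only [hμ 1 (by decide), hμ 2 (by decide), (hμI t).1, (hμI t).2]
  have h45 : ∫ ω, |H (Z 4 ω) - H (Z 5 ω)| ∂P
      = ∫ t, ((1 - G t) * G t + (1 - G t) * G t) ∂h := by
    rw [pair_integral P (Z 4) (Z 5) (hmeas 4) (hmeas 5)
      (hIndep.indepFun (by decide)) h H hHIoc hHmono]
    refine integral_congr_ae (Filter.Eventually.of_forall fun t => ?_)
    simp only [hν 4 (by decide), hν 5 (by decide), (hνI t).1, (hνI t).2]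
  rw [h03, h12, h45]
  -- integrability
  have hmF : AEStronglyMeasurable F h := hFcont.aestronglyMeasurable
  have hmG : AEStronglyMeasurable G h := hGcont.aestronglyMeasurable
  have hintA : Integrable (fun t => (1 - F t) * G t + (1 - G t) * F t) h := by
    refine Integrable.mono' (integrable_const (2:ℝ))
      (((aestronglyMeasurable_const.sub hmF).mul hmG).add
        ((aestronglyMeasurable_const.sub hmG).mul hmF))
      (Filter.Eventually.of_forall fun t => ?_)
    have := hF01 t; have := hG01 t
    rw [Real.norm_eq_abs, abs_le]
    constructor <;> nlinarith [hF01 t, hG01 t]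
  have hintB : Integrable (fun t => (1 - F t) * F t + (1 - F t) * F t) h := by
    refine Integrable.mono' (integrable_const (2:ℝ))
      (((aestronglyMeasurable_const.sub hmF).mul hmF).add
        ((aestronglyMeasurable_const.sub hmF).mul hmF))
      (Filter.Eventually.of_forall fun t => ?_)
    rw [Real.norm_eq_abs, abs_le]
    constructor <;> nlinarith [hF01 t]
  have hintC : Integrable (fun t => (1 - G t) * G t + (1 - G t) * G t) h := by
    refine Integrable.mono' (integrable_const (2:ℝ))
      (((aestronglyMeasurable_const.sub hmG).mul hmG).add
        ((aestronglyMeasurable_const.sub hmG).mul hmG))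
      (Filter.Eventually.of_forall fun t => ?_)
    rw [Real.norm_eq_abs, abs_le]
    constructor <;> nlinarith [hG01 t]
  have key : (∫ t, ((1 - F t) * G t + (1 - G t) * F t) ∂h)
      - 1/2 * (∫ t, ((1 - F t) * F t + (1 - F t) * F t) ∂h)
      - 1/2 * (∫ t, ((1 - G t) * G t + (1 - G t) * G t) ∂h)
    = ∫ t, (((1 - F t) * G t + (1 - G t) * F t)
        - 1/2 * ((1 - F t) * F t + (1 - F t) * F t)
        - 1/2 * ((1 - G t) * G t + (1 - G t) * G t)) ∂h := by
    have hAB : Integrable (fun t => ((1 - F t) * G t + (1 - G t) * F t)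
        - 1/2 * ((1 - F t) * F t + (1 - F t) * F t)) h :=
      hintA.sub (hintB.const_mul _)
    have hC2 : Integrable (fun t => 1/2 * ((1 - G t) * G t + (1 - G t) * G t)) h :=
      hintC.const_mul _
    have hB2 : Integrable (fun t => 1/2 * ((1 - F t) * F t + (1 - F t) * F t)) h :=
      hintB.const_mul _
    rw [integral_sub hAB hC2, integral_sub hintA hB2, integral_const_mul, integral_const_mul]
  rw [key]
  exact integral_congr_ae (Filter.Eventually.of_forall fun t => by ring)
end

section
/- Let X_1, X_2, ... be i.i.d. with continuous distribution function F and Y_1, Y_2, ... be i.i.d. with continuous distribution function G, the two sequences independent. For sample sizes m and n with N = m + n, let H_N be the empirical distribution function of the combined sample X_1,...,X_m,Y_1,...,Y_n and set D̂ = (1/(mn)) Σ_{i=1}^m Σ_{j=1}^n |H_N(X_i) − H_N(Y_j)| − (1/(2m²)) Σ_{i=1}^m Σ_{j=1}^m |H_N(X_i) − H_N(X_j)| − (1/(2n²)) Σ_{i=1}^n Σ_{j=1}^n |H_N(Y_i) − H_N(Y_j)|. Let H = τF + (1−τ)G and D = E|H(X) − H(Y)| − (1/2)E|H(X_1) − H(X_2)|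 − (1/2)E|H(Y_1) − H(Y_2)| where X, X_1, X_2 ~ F and Y, Y_1, Y_2 ~ G are independent. If m, n → ∞ with m/(m+n) → τ, then D̂ → D almost surely. -/
open MeasureTheory ProbabilityTheory Filter

namespace Stmt3Aux
open Set Finset
open scoped ENNReal


/-- combined empirical count function (normalized). -/
noncomputable def Cfun (M N : ℕ) (a b : ℕ → ℝ) (z : ℝ) : ℝ :=
  ((∑ i ∈ Finset.range M, if a i ≤ z then (1:ℝ) else 0)
    + ∑ j ∈ Finset.range N, if b j ≤ z then (1:ℝ) else 0) / ((M : ℝ) + (N : ℝ))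

noncomputable def psi (M N : ℕ) (a b : ℕ → ℝ) (t : ℝ) : ℝ :=
  ((∑ i ∈ Finset.range M, if a i < t then (1:ℝ) else 0) / M
    - (∑ j ∈ Finset.range N, if b j < t then (1:ℝ) else 0) / N) ^ 2

lemma ind_sub {u v t : ℝ} (h : v ≤ u) :
    (if t ≤ u then (1:ℝ) else 0) - (if t ≤ v then (1:ℝ) else 0)
      = (if v < t ∧ t ≤ u then (1:ℝ) else 0) + (if u < t ∧ t ≤ v then (1:ℝ) else 0) := by
  split_ifs with h1 h2 h3 h4 h5 h6 h7 <;> simp_all <;> linarith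

lemma sum_ind_sub {ι : Type*} (s : Finset ι) (z : ι → ℝ) {u v : ℝ} (h : v ≤ u) :
    (∑ l ∈ s, if z l ≤ u then (1:ℝ) else 0) - (∑ l ∈ s, if z l ≤ v then (1:ℝ) else 0)
      = ∑ l ∈ s, ((if v < z l ∧ z l ≤ u then (1:ℝ) else 0)
          + (if u < z l ∧ z l ≤ v then (1:ℝ) else 0)) := by
  rw [← Finset.sum_sub_distrib]
  exact Finset.sum_congr rfl fun l _ => ind_sub h


lemma count_abs_le (M N : ℕ) (a b : ℕ → ℝ) {u v : ℝ} (h : v ≤ u) :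
    |((∑ i ∈ Finset.range M, if a i ≤ u then (1:ℝ) else 0)
        + ∑ j ∈ Finset.range N, if b j ≤ u then (1:ℝ) else 0)
      - ((∑ i ∈ Finset.range M, if a i ≤ v then (1:ℝ) else 0)
        + ∑ j ∈ Finset.range N, if b j ≤ v then (1:ℝ) else 0)|
    = (∑ l ∈ Finset.range M, ((if v < a l ∧ a l ≤ u then (1:ℝ) else 0)
          + (if u < a l ∧ a l ≤ v then (1:ℝ) else 0)))
      + ∑ l ∈ Finset.range N, ((if v < b l ∧ b l ≤ u then (1:ℝ) else 0)
          + (if u < b l ∧ b l ≤ v then (1:ℝ) else 0)) := by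
  have e : ((∑ i ∈ Finset.range M, if a i ≤ u then (1:ℝ) else 0)
        + ∑ j ∈ Finset.range N, if b j ≤ u then (1:ℝ) else 0)
      - ((∑ i ∈ Finset.range M, if a i ≤ v then (1:ℝ) else 0)
        + ∑ j ∈ Finset.range N, if b j ≤ v then (1:ℝ) else 0)
      = ((∑ i ∈ Finset.range M, if a i ≤ u then (1:ℝ) else 0)
          - ∑ i ∈ Finset.range M, if a i ≤ v then (1:ℝ) else 0)
        + ((∑ j ∈ Finset.range N, if b j ≤ u then (1:ℝ) else 0)
          - ∑ j ∈ Finset.range N, if b j ≤ v then (1:ℝ) else 0) := by ring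
  rw [e, sum_ind_sub _ _ h, sum_ind_sub _ _ h, abs_of_nonneg]
  positivity

lemma count_abs (M N : ℕ) (a b : ℕ → ℝ) (u v : ℝ) :
    |((∑ i ∈ Finset.range M, if a i ≤ u then (1:ℝ) else 0)
        + ∑ j ∈ Finset.range N, if b j ≤ u then (1:ℝ) else 0)
      - ((∑ i ∈ Finset.range M, if a i ≤ v then (1:ℝ) else 0)
        + ∑ j ∈ Finset.range N, if b j ≤ v then (1:ℝ) else 0)|
    = (∑ l ∈ Finset.range M, ((if v < a l ∧ a l ≤ u then (1:ℝ) else 0)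
          + (if u < a l ∧ a l ≤ v then (1:ℝ) else 0)))
      + ∑ l ∈ Finset.range N, ((if v < b l ∧ b l ≤ u then (1:ℝ) else 0)
          + (if u < b l ∧ b l ≤ v then (1:ℝ) else 0)) := by
  rcases le_total v u with h | h
  · exact count_abs_le M N a b h
  · rw [abs_sub_comm, count_abs_le M N a b h]
    congr 1 <;> exact Finset.sum_congr rfl fun l _ => add_comm _ _


lemma ind_and {P Q : Prop} [Decidable P] [Decidable Q] :
    (if P ∧ Q then (1:ℝ) else 0) = (if P then (1:ℝ) else 0) * (if Q then (1:ℝ) else 0) := by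
  split_ifs <;> simp_all

lemma double_sum (P Q : ℕ) (c d : ℕ → ℝ) (t : ℝ) :
    ∑ i ∈ Finset.range P, ∑ j ∈ Finset.range Q,
        ((if d j < t ∧ t ≤ c i then (1:ℝ) else 0) + (if c i < t ∧ t ≤ d j then (1:ℝ) else 0))
    = (∑ j ∈ Finset.range Q, if d j < t then (1:ℝ) else 0)
        * (∑ i ∈ Finset.range P, if t ≤ c i then (1:ℝ) else 0)
      + (∑ i ∈ Finset.range P, if c i < t then (1:ℝ) else 0)
        * (∑ j ∈ Finset.range Q, if t ≤ d j then (1:ℝ) else 0) := by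
  simp only [ind_and, Finset.sum_add_distrib, ← Finset.sum_mul, ← Finset.mul_sum]
  try ring

lemma sum2_add (P Q : ℕ) (g h : ℕ → ℕ → ℝ) :
    ∑ i ∈ Finset.range P, ∑ j ∈ Finset.range Q, (g i j + h i j)
    = (∑ i ∈ Finset.range P, ∑ j ∈ Finset.range Q, g i j)
      + ∑ i ∈ Finset.range P, ∑ j ∈ Finset.range Q, h i j := by
  rw [← Finset.sum_add_distrib]
  exact Finset.sum_congr rfl fun i _ => Finset.sum_add_distrib

lemma swap3 (P Q L : ℕ) (f : ℕ → ℕ → ℕ → ℝ) :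
    ∑ i ∈ Finset.range P, ∑ j ∈ Finset.range Q, ∑ l ∈ Finset.range L, f i j l
    = ∑ l ∈ Finset.range L, ∑ i ∈ Finset.range P, ∑ j ∈ Finset.range Q, f i j l := by
  calc ∑ i ∈ Finset.range P, ∑ j ∈ Finset.range Q, ∑ l ∈ Finset.range L, f i j l
      = ∑ i ∈ Finset.range P, ∑ l ∈ Finset.range L, ∑ j ∈ Finset.range Q, f i j l :=
        Finset.sum_congr rfl fun i _ => Finset.sum_comm
    _ = _ := Finset.sum_comm

lemma T_gen (M N P Q : ℕ) (a b c d : ℕ → ℝ) :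
    ∑ i ∈ Finset.range P, ∑ j ∈ Finset.range Q,
      |((∑ i' ∈ Finset.range M, if a i' ≤ c i then (1:ℝ) else 0)
          + ∑ j' ∈ Finset.range N, if b j' ≤ c i then (1:ℝ) else 0)
        - ((∑ i' ∈ Finset.range M, if a i' ≤ d j then (1:ℝ) else 0)
          + ∑ j' ∈ Finset.range N, if b j' ≤ d j then (1:ℝ) else 0)|
    = (∑ l ∈ Finset.range M,
        ((∑ j ∈ Finset.range Q, if d j < a l then (1:ℝ) else 0)
          * (∑ i ∈ Finset.range P, if a l ≤ c i then (1:ℝ) else 0)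
        + (∑ i ∈ Finset.range P, if c i < a l then (1:ℝ) else 0)
          * (∑ j ∈ Finset.range Q, if a l ≤ d j then (1:ℝ) else 0)))
      + ∑ l ∈ Finset.range N,
        ((∑ j ∈ Finset.range Q, if d j < b l then (1:ℝ) else 0)
          * (∑ i ∈ Finset.range P, if b l ≤ c i then (1:ℝ) else 0)
        + (∑ i ∈ Finset.range P, if c i < b l then (1:ℝ) else 0)
          * (∑ j ∈ Finset.range Q, if b l ≤ d j then (1:ℝ) else 0)) := by
  have e2 : ∑ i ∈ Finset.range P, ∑ j ∈ Finset.range Q,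
      |((∑ i' ∈ Finset.range M, if a i' ≤ c i then (1:ℝ) else 0)
          + ∑ j' ∈ Finset.range N, if b j' ≤ c i then (1:ℝ) else 0)
        - ((∑ i' ∈ Finset.range M, if a i' ≤ d j then (1:ℝ) else 0)
          + ∑ j' ∈ Finset.range N, if b j' ≤ d j then (1:ℝ) else 0)|
      = ∑ i ∈ Finset.range P, ∑ j ∈ Finset.range Q,
          ((∑ l ∈ Finset.range M, ((if d j < a l ∧ a l ≤ c i then (1:ℝ) else 0)
            + (if c i < a l ∧ a l ≤ d j then (1:ℝ) else 0)))
          + ∑ l ∈ Finset.range N, ((if d j < b l ∧ b l ≤ c i then (1:ℝ) else 0)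
            + (if c i < b l ∧ b l ≤ d j then (1:ℝ) else 0))) :=
    Finset.sum_congr rfl fun i _ => Finset.sum_congr rfl fun j _ => count_abs M N a b (c i) (d j)
  rw [e2, sum2_add]
  congr 1 <;>
  · rw [swap3]
    exact Finset.sum_congr rfl fun l _ => double_sum P Q c d _

lemma sum_ge_eq (P : ℕ) (c : ℕ → ℝ) (t : ℝ) :
    (∑ i ∈ Finset.range P, if t ≤ c i then (1:ℝ) else 0)
      = (P : ℝ) - ∑ i ∈ Finset.range P, if c i < t then (1:ℝ) else 0 := by
  have e : ∀ i, (if t ≤ c i then (1:ℝ) else 0) = 1 - (if c i < t then (1:ℝ) else 0) := by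
    intro i; split_ifs <;> norm_num <;> linarith
  rw [Finset.sum_congr rfl fun i _ => e i, Finset.sum_sub_distrib]
  simp

lemma det_id (M N : ℕ) (hM : 0 < M) (hN : 0 < N) (a b : ℕ → ℝ) :
    (1 / ((M:ℝ) * (N:ℝ))) *
        (∑ i ∈ Finset.range M, ∑ j ∈ Finset.range N, |Cfun M N a b (a i) - Cfun M N a b (b j)|)
      - (1 / (2 * (M:ℝ)^2)) *
        (∑ i ∈ Finset.range M, ∑ j ∈ Finset.range M, |Cfun M N a b (a i) - Cfun M N a b (a j)|)
      - (1 / (2 * (N:ℝ)^2)) *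
        (∑ i ∈ Finset.range N, ∑ j ∈ Finset.range N, |Cfun M N a b (b i) - Cfun M N a b (b j)|)
    = ((M:ℝ) + (N:ℝ))⁻¹ *
        ((∑ l ∈ Finset.range M, psi M N a b (a l)) + ∑ l ∈ Finset.range N, psi M N a b (b l)) := by
  have hMR : (0:ℝ) < M := by exact_mod_cast hM
  have hNR : (0:ℝ) < N := by exact_mod_cast hN
  have hRpos : (0:ℝ) < (M:ℝ) + (N:ℝ) := by linarith
  have habs : ∀ z w : ℝ, |Cfun M N a b z - Cfun M N a b w|
      = |((∑ i ∈ Finset.range M, if a i ≤ z then (1:ℝ) else 0)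
            + ∑ j ∈ Finset.range N, if b j ≤ z then (1:ℝ) else 0)
          - ((∑ i ∈ Finset.range M, if a i ≤ w then (1:ℝ) else 0)
            + ∑ j ∈ Finset.range N, if b j ≤ w then (1:ℝ) else 0)| / ((M:ℝ) + (N:ℝ)) := by
    intro z w
    simp only [Cfun]
    rw [div_sub_div_same, abs_div, abs_of_pos hRpos]
  have hsum : ∀ (P Q : ℕ) (c d : ℕ → ℝ),
      (∑ i ∈ Finset.range P, ∑ j ∈ Finset.range Q, |Cfun M N a b (c i) - Cfun M N a b (d j)|)
      = (∑ i ∈ Finset.range P, ∑ j ∈ Finset.range Q,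
          |((∑ i' ∈ Finset.range M, if a i' ≤ c i then (1:ℝ) else 0)
              + ∑ j' ∈ Finset.range N, if b j' ≤ c i then (1:ℝ) else 0)
            - ((∑ i' ∈ Finset.range M, if a i' ≤ d j then (1:ℝ) else 0)
              + ∑ j' ∈ Finset.range N, if b j' ≤ d j then (1:ℝ) else 0)|) / ((M:ℝ) + (N:ℝ)) := by
    intro P Q c d
    simp only [habs, ← Finset.sum_div]
  rw [hsum M N a b, hsum M M a a, hsum N N b b, T_gen M N M N a b a b,
    T_gen M N M M a b a a, T_gen M N N N a b b b]
  simp only [sum_ge_eq]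
  have hW : ∀ (c : ℕ → ℝ) (P : ℕ),
      (1 / ((M:ℝ) * (N:ℝ))) * (∑ l ∈ Finset.range P,
          ((∑ j ∈ Finset.range N, if b j < c l then (1:ℝ) else 0)
              * ((M:ℝ) - ∑ i ∈ Finset.range M, if a i < c l then (1:ℝ) else 0)
            + (∑ i ∈ Finset.range M, if a i < c l then (1:ℝ) else 0)
              * ((N:ℝ) - ∑ j ∈ Finset.range N, if b j < c l then (1:ℝ) else 0)))
        - (1 / (2 * (M:ℝ)^2)) * (∑ l ∈ Finset.range P,
          ((∑ j ∈ Finset.range M, if a j < c l then (1:ℝ) else 0)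
              * ((M:ℝ) - ∑ i ∈ Finset.range M, if a i < c l then (1:ℝ) else 0)
            + (∑ i ∈ Finset.range M, if a i < c l then (1:ℝ) else 0)
              * ((M:ℝ) - ∑ j ∈ Finset.range M, if a j < c l then (1:ℝ) else 0)))
        - (1 / (2 * (N:ℝ)^2)) * (∑ l ∈ Finset.range P,
          ((∑ j ∈ Finset.range N, if b j < c l then (1:ℝ) else 0)
              * ((N:ℝ) - ∑ i ∈ Finset.range N, if b i < c l then (1:ℝ) else 0)
            + (∑ i ∈ Finset.range N, if b i < c l then (1:ℝ) else 0)
              * ((N:ℝ) - ∑ j ∈ Finset.range N, if b j < c l then (1:ℝ) else 0)))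
      = ∑ l ∈ Finset.range P, psi M N a b (c l) := by
    intro c P
    rw [Finset.mul_sum, Finset.mul_sum, Finset.mul_sum, ← Finset.sum_sub_distrib,
      ← Finset.sum_sub_distrib]
    refine Finset.sum_congr rfl fun l _ => ?_
    simp only [psi]
    set α := ∑ i ∈ Finset.range M, if a i < c l then (1:ℝ) else 0 with hα
    set β := ∑ j ∈ Finset.range N, if b j < c l then (1:ℝ) else 0 with hβ
    field_simp
    ring
  rw [← hW a M, ← hW b N]
  field_simp
  ring

lemma polya {F : ℝ → ℝ} (hFc : Continuous F) (hFm : Monotone F)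
    (hbot : Tendsto F atBot (nhds 0)) (htop : Tendsto F atTop (nhds 1))
    {A : ℕ → ℚ → ℝ} (hA : ∀ q : ℚ, Tendsto (fun k => A k q) atTop (nhds (F q)))
    {E : ℕ → ℝ → ℝ}
    (hE0 : ∀ k p, 0 ≤ E k p) (hE1 : ∀ k p, E k p ≤ 1)
    (hlb : ∀ k (q : ℚ) (p : ℝ), (q : ℝ) < p → A k q ≤ E k p)
    (hub : ∀ k (q : ℚ) (p : ℝ), p ≤ (q : ℝ) → E k p ≤ A k q)
    {ε : ℝ} (hε : 0 < ε) :
    ∀ᶠ k in atTop, ∀ p : ℝ, |E k p - F p| ≤ ε := by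
  have hF0 : ∀ p, 0 ≤ F p := fun p =>
    le_of_tendsto hbot (eventually_atBot.2 ⟨p, fun x hx => hFm hx⟩)
  have hF1 : ∀ p, F p ≤ 1 := fun p =>
    ge_of_tendsto htop (eventually_atTop.2 ⟨p, fun x hx => hFm hx⟩)
  have hε3 : 0 < ε/3 := by linarith
  -- endpoints
  obtain ⟨xlo', hxlo'⟩ : ∃ x : ℝ, F x < ε/3 := (hbot.eventually_lt_const hε3).exists
  obtain ⟨xhi', hxhi'⟩ : ∃ x : ℝ, 1 - ε/3 < F x :=
    (htop.eventually_const_lt (by linarith)).exists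
  set xlo : ℝ := min xlo' xhi' with hxlo
  set xhi : ℝ := max xhi' xlo' with hxhi
  have hlo : F xlo < ε/3 := lt_of_le_of_lt (hFm (min_le_left _ _)) hxlo'
  have hhi : 1 - ε/3 < F xhi := lt_of_lt_of_le hxhi' (hFm (le_max_left _ _))
  have hlohi : xlo ≤ xhi := le_trans (min_le_right _ _) (le_max_left _ _)
  -- uniform continuity on a compact interval
  have hK : IsCompact (Set.Icc (xlo - 1) (xhi + 2)) := isCompact_Icc
  have hUC : UniformContinuousOn F (Set.Icc (xlo - 1) (xhi + 2)) :=
    hK.uniformContinuousOn_of_continuous hFc.continuousOn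
  obtain ⟨δ, hδpos, hδ⟩ := (Metric.uniformContinuousOn_iff_le.1 hUC) (ε/3) hε3
  -- rational step and start
  obtain ⟨δ', hδ'1, hδ'2⟩ := exists_rat_btwn (lt_min hδpos one_pos)
  have hδ'pos : (0:ℝ) < (δ' : ℝ) := hδ'1
  have hδ'le : (δ' : ℝ) ≤ δ := le_of_lt (lt_of_lt_of_le hδ'2 (min_le_left _ _))
  have hδ'le1 : (δ' : ℝ) ≤ 1 := le_of_lt (lt_of_lt_of_le hδ'2 (min_le_right _ _))
  obtain ⟨q0, hq01, hq02⟩ := exists_rat_btwn (show xlo - 1 < xlo by linarith)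
  -- the grid
  set r : ℕ := ⌈(xhi - (q0:ℝ)) / (δ':ℝ)⌉₊ with hr
  set Q : ℕ → ℚ := fun c => q0 + c * δ' with hQdef
  have hQmono : ∀ {c c' : ℕ}, c ≤ c' → (Q c : ℝ) ≤ (Q c') := by
    intro c c' hcc
    push_cast [hQdef]
    have : (c:ℝ) ≤ (c':ℝ) := by exact_mod_cast hcc
    nlinarith
  have hQr : xhi ≤ (Q r : ℝ) := by
    have := Nat.le_ceil ((xhi - (q0:ℝ)) / (δ':ℝ))
    rw [div_le_iff₀ hδ'pos] at this
    push_cast [hQdef]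
    linarith
  have hQrub : (Q r : ℝ) ≤ xhi + 1 := by
    have hnum : 0 ≤ (xhi - (q0:ℝ)) / (δ':ℝ) := by
      apply div_nonneg _ (le_of_lt hδ'pos); linarith
    have := Nat.ceil_lt_add_one hnum
    rw [← hr] at this
    have h2 : (r:ℝ) * δ' < ((xhi - (q0:ℝ)) / (δ':ℝ) + 1) * δ' := by
      exact mul_lt_mul_of_pos_right this hδ'pos
    rw [add_mul, div_mul_cancel₀ _ (ne_of_gt hδ'pos)] at h2
    push_cast [hQdef]
    nlinarith
  have hQmem : ∀ c ≤ r, (Q c : ℝ) ∈ Set.Icc (xlo - 1) (xhi + 2) := by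
    intro c hc
    constructor
    · have : (q0:ℝ) ≤ Q c := hQmono (Nat.zero_le c) |>.trans_eq' (by push_cast [hQdef]; ring)
      linarith
    · have := hQmono hc
      linarith [hQrub]
  -- eventually all grid values are accurate
  have hev : ∀ᶠ k in atTop, ∀ c ∈ Finset.range (r+1), |A k (Q c) - F (Q c)| ≤ ε/3 := by
    rw [eventually_all_finset]
    intro c _
    have := hA (Q c)
    rw [Metric.tendsto_atTop] at this
    rcases this (ε/3) hε3 with ⟨K, hK⟩
    exact eventually_atTop.2 ⟨K, fun k hk => le_of_lt (by simpa [Real.dist_eq] using hK k hk)⟩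
  filter_upwards [hev] with k hk
  have hacc : ∀ c ≤ r, |A k (Q c) - F (Q c)| ≤ ε/3 := fun c hc =>
    hk c (Finset.mem_range.2 (Nat.lt_succ_of_le hc))
  intro p
  rcases le_or_gt p (Q 0) with hp | hp
  · -- p below the grid
    have h1 : E k p ≤ A k (Q 0) := hub k (Q 0) p hp
    have h2 : F (Q 0 : ℝ) ≤ F xlo := hFm (by rw [hQdef]; push_cast; linarith)
    have h3 : |A k (Q 0) - F (Q 0)| ≤ ε/3 := hacc 0 (Nat.zero_le r)
    have h4 : F p ≤ F (Q 0 : ℝ) := hFm hp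
    rw [abs_le] at h3 ⊢
    constructor <;> [skip; skip] <;>
      [linarith [hE0 k p, hF0 p, hF0 (Q 0 : ℝ)]; linarith [hE0 k p, hF0 p]]
  · rcases le_or_gt p (Q r) with hpr | hpr
    · -- inside the grid
      have hq0p : (q0:ℝ) < p := by
        have h00 : ((Q 0 : ℚ) : ℝ) = (q0:ℝ) := by push_cast [hQdef]; ring
        linarith [h00 ▸ hp]
      have hppos : 0 < (p - (q0:ℝ)) / (δ':ℝ) := div_pos (by linarith) hδ'pos
      have hc1 : 1 ≤ ⌈(p - (q0:ℝ)) / (δ':ℝ)⌉₊ := by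
        rcases Nat.eq_zero_or_pos ⌈(p - (q0:ℝ)) / (δ':ℝ)⌉₊ with h0 | h1
        · exfalso
          have := Nat.ceil_eq_zero.1 h0
          linarith
        · exact h1
      have hcr : ⌈(p - (q0:ℝ)) / (δ':ℝ)⌉₊ ≤ r := by
        apply Nat.ceil_le.2
        rw [div_le_iff₀ hδ'pos]
        push_cast [hQdef] at hpr
        linarith
      have h_le := Nat.le_ceil ((p - (q0:ℝ)) / (δ':ℝ))
      have h_lt := Nat.ceil_lt_add_one (le_of_lt hppos)
      obtain ⟨c', hc'⟩ : ∃ c', ⌈(p - (q0:ℝ)) / (δ':ℝ)⌉₊ = c' + 1 :=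
        ⟨⌈(p - (q0:ℝ)) / (δ':ℝ)⌉₊ - 1, (Nat.succ_pred_eq_of_pos hc1).symm⟩
      rw [hc'] at hcr h_le h_lt
      have hpc : p ≤ (Q (c'+1) : ℝ) := by
        rw [div_le_iff₀ hδ'pos] at h_le
        push_cast [hQdef]
        push_cast at h_le
        linarith
      have hc'p : (Q c' : ℝ) < p := by
        have h3 : (c' : ℝ) * δ' < p - (q0:ℝ) := by
          rw [← lt_div_iff₀ hδ'pos]
          push_cast at h_lt
          linarith
        push_cast [hQdef]
        linarith
      have hgap : |F (Q (c'+1) : ℝ) - F (Q c' : ℝ)| ≤ ε/3 := by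
        have hd : dist ((Q (c'+1) : ℚ) : ℝ) ((Q c' : ℚ) : ℝ) ≤ δ := by
          rw [Real.dist_eq]
          have : ((Q (c'+1) : ℚ) : ℝ) - ((Q c' : ℚ) : ℝ) = (δ' : ℝ) := by
            push_cast [hQdef]; ring
          rw [this, abs_of_pos hδ'pos]
          exact hδ'le
        have := hδ _ (hQmem (c'+1) hcr) _ (hQmem c' (le_trans (Nat.le_succ c') hcr)) hd
        rwa [Real.dist_eq] at this
      have hEub : E k p ≤ A k (Q (c'+1)) := hub k (Q (c'+1)) p hpc
      have hElb : A k (Q c') ≤ E k p := hlb k (Q c') p hc'p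
      have ha1 : |A k (Q (c'+1)) - F (Q (c'+1))| ≤ ε/3 := hacc (c'+1) hcr
      have ha2 : |A k (Q c') - F (Q c')| ≤ ε/3 := hacc c' (le_trans (Nat.le_succ c') hcr)
      have hm1 : F (Q c' : ℝ) ≤ F p := hFm (le_of_lt hc'p)
      have hm2 : F p ≤ F (Q (c'+1) : ℝ) := hFm hpc
      rw [abs_le] at ha1 ha2 hgap ⊢
      constructor <;> [linarith; linarith]
    · -- p above the grid
      have h1 : A k (Q r) ≤ E k p := hlb k (Q r) p hpr
      have h2 : 1 - ε/3 < F (Q r : ℝ) := lt_of_lt_of_le hhi (hFm hQr)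
      have h3 : |A k (Q r) - F (Q r)| ≤ ε/3 := hacc r le_rfl
      have h4 : F (Q r : ℝ) ≤ F p := hFm (le_of_lt hpr)
      rw [abs_le] at h3 ⊢
      constructor <;> [linarith [hE1 k p, hF1 p]; linarith [hE1 k p, hF1 p]]

lemma slln_comp {Ω : Type*} [MeasurableSpace Ω] {P : Measure Ω} [IsProbabilityMeasure P]
    {Z : ℕ → Ω → ℝ} (hmZ : ∀ i, Measurable (Z i))
    (hpair : Pairwise fun i j => IndepFun (Z i) (Z j) P)
    {μ : Measure ℝ} (hZ : ∀ i, P.map (Z i) = μ)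
    {g : ℝ → ℝ} (hg : Measurable g) (hgb : ∀ x, |g x| ≤ 1) :
    ∀ᵐ ω ∂P, Tendsto (fun M => (∑ i ∈ Finset.range M, g (Z i ω)) / M) atTop
      (nhds (∫ x, g x ∂μ)) := by
  have hident : ∀ i, IdentDistrib (fun ω => g (Z i ω)) (fun ω => g (Z 0 ω)) P P := by
    intro i
    exact (IdentDistrib.comp ⟨(hmZ i).aemeasurable, (hmZ 0).aemeasurable,
      (hZ i).trans (hZ 0).symm⟩ hg)
  have hint : Integrable (fun ω => g (Z 0 ω)) P := by
    refine Integrable.mono' (integrable_const (1:ℝ))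
      ((hg.comp (hmZ 0)).aestronglyMeasurable) (ae_of_all _ fun ω => ?_)
    simpa using hgb (Z 0 ω)
  have hindep : Pairwise (Function.onFun (IndepFun · · P) fun i ω => g (Z i ω)) := by
    intro i j hij
    exact (hpair hij).comp hg hg
  have h := strong_law_ae_real (fun i ω => g (Z i ω)) hint hindep hident
  have hval : P[fun ω => g (Z 0 ω)] = ∫ x, g x ∂μ := by
    rw [← hZ 0, integral_map (hmZ 0).aemeasurable hg.aestronglyMeasurable]
  rw [hval] at h
  exact h

lemma atom_zero {μ : Measure ℝ} [IsProbabilityMeasure μ] {F : ℝ → ℝ}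
    (hF : ∀ x, F x = (μ (Set.Iic x)).toReal) (hFc : Continuous F) (t : ℝ) :
    μ {t} = 0 := by
  have hof : ∀ s : ℝ, μ (Set.Iic s) = ENNReal.ofReal (F s) := by
    intro s
    rw [hF s, ENNReal.ofReal_toReal (measure_ne_top μ _)]
  have hIio : μ (Set.Iio t) = μ (Set.Iic t) := by
    have hU : Set.Iio t = ⋃ n : ℕ, Set.Iic (t - 1/(n+1)) := by
      ext x
      simp only [Set.mem_Iio, Set.mem_iUnion, Set.mem_Iic]
      constructor
      · intro hx
        obtain ⟨n, hn⟩ := exists_nat_one_div_lt (show 0 < t - x by linarith)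
        exact ⟨n, by linarith⟩
      · rintro ⟨n, hn⟩
        have : (0:ℝ) < 1/(n+1) := by positivity
        linarith
    have hmono : Monotone fun n : ℕ => Set.Iic (t - 1/(n+1 : ℝ)) := by
      intro i j hij
      apply Set.Iic_subset_Iic.2
      have h1 : (1:ℝ)/(j+1) ≤ 1/(i+1) := by
        apply one_div_le_one_div_of_le (by positivity)
        have : (i:ℝ) ≤ j := by exact_mod_cast hij
        linarith
      linarith
    have h1 : Tendsto (fun n : ℕ => μ (Set.Iic (t - 1/(n+1)))) atTop (nhds (μ (Set.Iio t))) := by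
      rw [hU]
      exact tendsto_measure_iUnion_atTop hmono
    have h2 : Tendsto (fun n : ℕ => μ (Set.Iic (t - 1/(n+1)))) atTop (nhds (μ (Set.Iic t))) := by
      simp only [hof]
      apply (ENNReal.continuous_ofReal.tendsto _).comp
      apply (hFc.tendsto t).comp
      have : Tendsto (fun n : ℕ => t - 1/(n+1 : ℝ)) atTop (nhds (t - 0)) :=
        tendsto_const_nhds.sub (tendsto_one_div_add_atTop_nhds_zero_nat)
      simpa using this
    exact tendsto_nhds_unique h1 h2
  have hunion : μ (Set.Iic t) = μ (Set.Iio t) + μ {t} := by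
    rw [← Set.Iio_union_right]
    exact measure_union (by simp) (measurableSet_singleton t)
  rw [hIio] at hunion
  have h0 : μ (Set.Iic t) + 0 = μ (Set.Iic t) + μ {t} := by
    rw [add_zero]; exact hunion
  exact ((ENNReal.add_right_inj (measure_ne_top μ _)).1 h0).symm

lemma stripe (κ μ' ν' : Measure ℝ) [IsProbabilityMeasure κ] [IsProbabilityMeasure μ']
    [IsProbabilityMeasure ν'] :
    ∫ p : ℝ × ℝ, (κ (Set.Ioc (min p.1 p.2) (max p.1 p.2))).toReal ∂(μ'.prod ν')
      = ∫ t, ((μ' (Set.Iio t)).toReal * (ν' (Set.Ici t)).toReal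
          + (μ' (Set.Ici t)).toReal * (ν' (Set.Iio t)).toReal) ∂κ := by
  set W : Set ((ℝ × ℝ) × ℝ) := {q | min q.1.1 q.1.2 < q.2 ∧ q.2 ≤ max q.1.1 q.1.2} with hW
  have hWm : MeasurableSet W := by
    apply MeasurableSet.inter
    · exact measurableSet_lt ((measurable_fst.fst).min (measurable_fst.snd)) measurable_snd
    · exact measurableSet_le measurable_snd ((measurable_fst.fst).max (measurable_fst.snd))
  have hsec : ∀ p : ℝ × ℝ, κ (Set.Ioc (min p.1 p.2) (max p.1 p.2)) = κ (Prod.mk p ⁻¹' W) := by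
    intro p
    rfl
  have hfm : Measurable (fun p : ℝ × ℝ => κ (Prod.mk p ⁻¹' W)) :=
    measurable_measure_prodMk_left hWm
  have hind : ∀ (p : ℝ × ℝ) (s : ℝ), (Prod.mk p ⁻¹' W).indicator (1 : ℝ → ℝ≥0∞) s
      = W.indicator 1 (p, s) := by
    intro p s
    by_cases h : (p, s) ∈ W <;>
      simp [Set.indicator_apply, Set.mem_preimage, h]
  -- LHS as a lintegral
  have hL : ∫ p : ℝ × ℝ, (κ (Set.Ioc (min p.1 p.2) (max p.1 p.2))).toReal ∂(μ'.prod ν')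
      = (∫⁻ p : ℝ × ℝ, κ (Prod.mk p ⁻¹' W) ∂(μ'.prod ν')).toReal := by
    rw [show (fun p : ℝ × ℝ => (κ (Set.Ioc (min p.1 p.2) (max p.1 p.2))).toReal)
        = fun p => (κ (Prod.mk p ⁻¹' W)).toReal from funext fun p => by rw [hsec p]]
    exact integral_toReal hfm.aemeasurable
      (ae_of_all _ fun p => lt_of_le_of_lt prob_le_one ENNReal.one_lt_top)
  rw [hL]
  -- swap
  have hswap : ∫⁻ p : ℝ × ℝ, κ (Prod.mk p ⁻¹' W) ∂(μ'.prod ν')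
      = ∫⁻ t, (μ'.prod ν') ((fun p : ℝ × ℝ => (p, t)) ⁻¹' W) ∂κ := by
    calc ∫⁻ p : ℝ × ℝ, κ (Prod.mk p ⁻¹' W) ∂(μ'.prod ν')
        = ∫⁻ p : ℝ × ℝ, ∫⁻ t, W.indicator 1 (p, t) ∂κ ∂(μ'.prod ν') := by
          apply lintegral_congr fun p => ?_
          rw [← lintegral_indicator_one (hWm.preimage measurable_prodMk_left)]
          exact lintegral_congr fun s => (hind p s).symm
      _ = ∫⁻ t, ∫⁻ p : ℝ × ℝ, W.indicator 1 (p, t) ∂(μ'.prod ν') ∂κ := by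
          apply lintegral_lintegral_swap
          exact ((measurable_one.indicator hWm).comp measurable_id).aemeasurable
      _ = ∫⁻ t, (μ'.prod ν') ((fun p : ℝ × ℝ => (p, t)) ⁻¹' W) ∂κ := by
          apply lintegral_congr fun t => ?_
          calc ∫⁻ p : ℝ × ℝ, W.indicator 1 (p, t) ∂(μ'.prod ν')
              = ∫⁻ p : ℝ × ℝ, ((fun p : ℝ × ℝ => (p, t)) ⁻¹' W).indicator 1 p ∂(μ'.prod ν') :=
                lintegral_congr fun p => by
                  by_cases h : (p, t) ∈ W <;>
                    simp [Set.indicator_apply, Set.mem_preimage, h]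
            _ = (μ'.prod ν') ((fun p : ℝ × ℝ => (p, t)) ⁻¹' W) :=
                lintegral_indicator_one
                  (hWm.preimage (measurable_id.prodMk measurable_const))
  rw [hswap]
  -- compute the section measure
  have hsection : ∀ t : ℝ, (fun p : ℝ × ℝ => (p, t)) ⁻¹' W
      = (Set.Iio t ×ˢ Set.Ici t) ∪ (Set.Ici t ×ˢ Set.Iio t) := by
    intro t
    ext ⟨x, y⟩
    simp only [Set.mem_preimage, hW, Set.mem_setOf_eq, min_lt_iff, le_max_iff, Set.mem_union,
      Set.mem_prod, Set.mem_Iio, Set.mem_Ici]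
    constructor
    · rintro ⟨h1 | h1, h2 | h2⟩
      · exact absurd h2 (not_le.2 h1)
      · exact Or.inl ⟨h1, h2⟩
      · exact Or.inr ⟨h2, h1⟩
      · exact absurd h2 (not_le.2 h1)
    · rintro (⟨h1, h2⟩ | ⟨h1, h2⟩)
      · exact ⟨Or.inl h1, Or.inr h2⟩
      · exact ⟨Or.inr h2, Or.inl h1⟩
  have hmeas : ∀ t : ℝ, (μ'.prod ν') ((fun p : ℝ × ℝ => (p, t)) ⁻¹' W)
      = μ' (Set.Iio t) * ν' (Set.Ici t) + μ' (Set.Ici t) * ν' (Set.Iio t) := by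
    intro t
    rw [hsection t, measure_union _ (measurableSet_Ici.prod measurableSet_Iio),
      Measure.prod_prod, Measure.prod_prod]
    rw [Set.disjoint_left]
    rintro ⟨x, y⟩ ⟨hx, _⟩ ⟨hx', _⟩
    exact absurd (show x < t from hx) (not_lt.2 (show t ≤ x from hx'))
  rw [lintegral_congr hmeas]
  -- back to Bochner
  have hm1 : Measurable fun t : ℝ => μ' (Set.Iio t) :=
    measurable_measure_prodMk_left (measurableSet_lt measurable_snd measurable_fst)
  have hm2 : Measurable fun t : ℝ => μ' (Set.Ici t) :=
    measurable_measure_prodMk_left (measurableSet_le measurable_fst measurable_snd)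
  have hm3 : Measurable fun t : ℝ => ν' (Set.Iio t) :=
    measurable_measure_prodMk_left (measurableSet_lt measurable_snd measurable_fst)
  have hm4 : Measurable fun t : ℝ => ν' (Set.Ici t) :=
    measurable_measure_prodMk_left (measurableSet_le measurable_fst measurable_snd)
  rw [show (∫ t, ((μ' (Set.Iio t)).toReal * (ν' (Set.Ici t)).toReal
        + (μ' (Set.Ici t)).toReal * (ν' (Set.Iio t)).toReal) ∂κ)
      = ∫ t, ((μ' (Set.Iio t) * ν' (Set.Ici t) + μ' (Set.Ici t) * ν' (Set.Iio t)).toReal) ∂κ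
      from integral_congr_ae (ae_of_all _ fun t => by
        show (μ' (Set.Iio t)).toReal * (ν' (Set.Ici t)).toReal
            + (μ' (Set.Ici t)).toReal * (ν' (Set.Iio t)).toReal
          = (μ' (Set.Iio t) * ν' (Set.Ici t) + μ' (Set.Ici t) * ν' (Set.Iio t)).toReal
        rw [ENNReal.toReal_add (by finiteness) (by finiteness), ENNReal.toReal_mul,
          ENNReal.toReal_mul])]
  rw [integral_toReal]
  · exact ((hm1.mul hm4).add (hm2.mul hm3)).aemeasurable
  · refine ae_of_all _ fun t => ?_
    have h1 : μ' (Set.Iio t) * ν' (Set.Ici t) ≤ 1 * 1 := by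
      exact mul_le_mul' prob_le_one prob_le_one
    have h2 : μ' (Set.Ici t) * ν' (Set.Iio t) ≤ 1 * 1 := by
      exact mul_le_mul' prob_le_one prob_le_one
    calc μ' (Set.Iio t) * ν' (Set.Ici t) + μ' (Set.Ici t) * ν' (Set.Iio t) ≤ 1 * 1 + 1 * 1 :=
          add_le_add h1 h2
      _ < ⊤ := by simp

lemma meas_ioc (κ : Measure ℝ) [IsFiniteMeasure κ] :
    Measurable fun p : ℝ × ℝ => (κ (Set.Ioc (min p.1 p.2) (max p.1 p.2))).toReal := by
  have hWm : MeasurableSet {q : (ℝ × ℝ) × ℝ | min q.1.1 q.1.2 < q.2 ∧ q.2 ≤ max q.1.1 q.1.2} :=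
    MeasurableSet.inter
      (measurableSet_lt ((measurable_fst.fst).min (measurable_fst.snd)) measurable_snd)
      (measurableSet_le measurable_snd ((measurable_fst.fst).max (measurable_fst.snd)))
  exact ENNReal.measurable_toReal.comp (measurable_measure_prodMk_left hWm)

lemma toReal_le_one {μ : Measure ℝ} [IsProbabilityMeasure μ] (s : Set ℝ) :
    (μ s).toReal ≤ 1 := by
  calc (μ s).toReal ≤ (1 : ℝ≥0∞).toReal :=
        ENNReal.toReal_mono (by simp) prob_le_one
    _ = 1 := by simp

lemma cdf_diff {μ : Measure ℝ} [IsProbabilityMeasure μ] {F : ℝ → ℝ}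
    (hF : ∀ x, F x = (μ (Set.Iic x)).toReal) {u v : ℝ} (h : u ≤ v) :
    F v - F u = (μ (Set.Ioc u v)).toReal := by
  have hsplit : μ (Set.Iic v) = μ (Set.Iic u) + μ (Set.Ioc u v) := by
    rw [← Set.Iic_union_Ioc_eq_Iic h]
    exact measure_union (Set.Iic_disjoint_Ioc le_rfl) measurableSet_Ioc
  rw [hF, hF, hsplit, ENNReal.toReal_add (measure_ne_top μ _) (measure_ne_top μ _)]
  ring

lemma mono_of_cdf {μ : Measure ℝ} [IsProbabilityMeasure μ] {F : ℝ → ℝ}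
    (hF : ∀ x, F x = (μ (Set.Iic x)).toReal) : Monotone F := by
  intro u v huv
  rw [hF, hF]
  exact ENNReal.toReal_mono (measure_ne_top μ _) (measure_mono (Set.Iic_subset_Iic.2 huv))

lemma integral_absH (μ' ν' : Measure ℝ) [IsProbabilityMeasure μ'] [IsProbabilityMeasure ν']
    (μ ν : Measure ℝ) [IsProbabilityMeasure μ] [IsProbabilityMeasure ν]
    {F G H : ℝ → ℝ} (hF : ∀ x, F x = (μ (Set.Iic x)).toReal)
    (hG : ∀ x, G x = (ν (Set.Iic x)).toReal)
    {τ : ℝ} (hτ0 : 0 ≤ τ) (hτ1 : τ ≤ 1) (hH : ∀ x, H x = τ * F x + (1 - τ) * G x)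
    {F' G' : ℝ → ℝ} (hF' : ∀ x, F' x = (μ' (Set.Iic x)).toReal)
    (hG' : ∀ x, G' x = (ν' (Set.Iic x)).toReal)
    (hF'c : Continuous F') (hG'c : Continuous G') :
    ∫ p : ℝ × ℝ, |H p.1 - H p.2| ∂(μ'.prod ν')
      = τ * (∫ t, (F' t * (1 - G' t) + (1 - F' t) * G' t) ∂μ)
        + (1 - τ) * (∫ t, (F' t * (1 - G' t) + (1 - F' t) * G' t) ∂ν) := by
  have hFm : Monotone F := mono_of_cdf hF
  have hGm : Monotone G := mono_of_cdf hG
  -- pointwise identity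
  have hpt : ∀ p : ℝ × ℝ, |H p.1 - H p.2|
      = τ * (μ (Set.Ioc (min p.1 p.2) (max p.1 p.2))).toReal
        + (1 - τ) * (ν (Set.Ioc (min p.1 p.2) (max p.1 p.2))).toReal := by
    rintro ⟨x, y⟩
    simp only
    rcases le_total x y with hxy | hxy
    · rw [min_eq_left hxy, max_eq_right hxy, ← cdf_diff hF hxy, ← cdf_diff hG hxy,
        hH x, hH y, abs_of_nonpos (by nlinarith [hFm hxy, hGm hxy])]
      ring
    · rw [min_eq_right hxy, max_eq_left hxy, ← cdf_diff hF hxy, ← cdf_diff hG hxy,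
        hH x, hH y, abs_of_nonneg (by nlinarith [hFm hxy, hGm hxy])]
      ring
  rw [integral_congr_ae (ae_of_all _ hpt)]
  -- integrability of the two pieces
  have hint : ∀ (κ : Measure ℝ), IsProbabilityMeasure κ →
      Integrable (fun p : ℝ × ℝ => (κ (Set.Ioc (min p.1 p.2) (max p.1 p.2))).toReal)
        (μ'.prod ν') := by
    intro κ hκ
    refine Integrable.mono' (integrable_const (1:ℝ)) (meas_ioc κ).aestronglyMeasurable
      (ae_of_all _ fun p => ?_)
    rw [Real.norm_eq_abs, abs_of_nonneg ENNReal.toReal_nonneg]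
    exact toReal_le_one _
  have hswap : ∀ (κ : Measure ℝ) (hκ : IsProbabilityMeasure κ),
      ∫ p : ℝ × ℝ, (κ (Set.Ioc (min p.1 p.2) (max p.1 p.2))).toReal ∂(μ'.prod ν')
        = ∫ t, (F' t * (1 - G' t) + (1 - F' t) * G' t) ∂κ := by
    intro κ hκ
    rw [stripe κ μ' ν']
    refine integral_congr_ae (ae_of_all _ fun t => ?_)
    have hμIio : μ' (Set.Iio t) = μ' (Set.Iic t) :=
      measure_congr (Iio_ae_eq_Iic' (atom_zero hF' hF'c t))
    have hνIio : ν' (Set.Iio t) = ν' (Set.Iic t) :=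
      measure_congr (Iio_ae_eq_Iic' (atom_zero hG' hG'c t))
    have hμIci : (μ' (Set.Ici t)).toReal = 1 - F' t := by
      have hcompl : μ' (Set.Iio t) + μ' (Set.Ici t) = 1 := by
        rw [← Set.compl_Iio]
        rw [measure_add_measure_compl measurableSet_Iio]
        simp
      have := ENNReal.toReal_add (measure_ne_top μ' (Set.Iio t)) (measure_ne_top μ' (Set.Ici t))
      rw [hcompl] at this
      simp only [ENNReal.toReal_one] at this
      rw [hμIio] at this
      rw [hF']
      linarith [this]
    have hνIci : (ν' (Set.Ici t)).toReal = 1 - G' t := by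
      have hcompl : ν' (Set.Iio t) + ν' (Set.Ici t) = 1 := by
        rw [← Set.compl_Iio]
        rw [measure_add_measure_compl measurableSet_Iio]
        simp
      have := ENNReal.toReal_add (measure_ne_top ν' (Set.Iio t)) (measure_ne_top ν' (Set.Ici t))
      rw [hcompl] at this
      simp only [ENNReal.toReal_one] at this
      rw [hνIio] at this
      rw [hG']
      linarith [this]
    show (μ' (Set.Iio t)).toReal * (ν' (Set.Ici t)).toReal
        + (μ' (Set.Ici t)).toReal * (ν' (Set.Iio t)).toReal
      = F' t * (1 - G' t) + (1 - F' t) * G' t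
    rw [hμIio, hνIio, hμIci, hνIci, ← hF', ← hG']
  rw [integral_add ((hint μ inferInstance).const_mul τ) ((hint ν inferInstance).const_mul (1-τ)),
    integral_const_mul, integral_const_mul, hswap μ inferInstance, hswap ν inferInstance]

lemma div_mono_nonneg {x y c : ℝ} (h : x ≤ y) (hc : 0 ≤ c) : x / c ≤ y / c := by
  rcases eq_or_lt_of_le hc with rfl | h'
  · simp
  · exact (div_le_div_iff_of_pos_right h').2 h

lemma sq_diff_bound {A B C D e : ℝ} (hA0 : 0 ≤ A) (hA1 : A ≤ 1) (hB0 : 0 ≤ B) (hB1 : B ≤ 1)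
    (hC0 : 0 ≤ C) (hC1 : C ≤ 1) (hD0 : 0 ≤ D) (hD1 : D ≤ 1)
    (h1 : |A - C| ≤ e) (h2 : |B - D| ≤ e) : |(A - B)^2 - (C - D)^2| ≤ 4 * e := by
  have he : 0 ≤ e := le_trans (abs_nonneg _) h1
  have key : (A - B)^2 - (C - D)^2 = ((A - C) - (B - D)) * ((A - B) + (C - D)) := by ring
  rw [key, abs_mul]
  have hb1 : |(A - C) - (B - D)| ≤ 2 * e :=
    le_trans (abs_sub _ _) (by linarith)
  have hb2 : |(A - B) + (C - D)| ≤ 2 := abs_le.2 ⟨by linarith, by linarith⟩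
  calc |(A - C) - (B - D)| * |(A - B) + (C - D)| ≤ (2 * e) * 2 :=
        mul_le_mul hb1 hb2 (abs_nonneg _) (by linarith)
    _ = 4 * e := by ring

lemma avg_diff_bound (M : ℕ) (f h : ℕ → ℝ) {e : ℝ} (he : 0 ≤ e)
    (hb : ∀ l ∈ Finset.range M, |f l - h l| ≤ e) :
    |(∑ l ∈ Finset.range M, f l) / M - (∑ l ∈ Finset.range M, h l) / M| ≤ e := by
  rcases Nat.eq_zero_or_pos M with h0 | hM
  · simp [h0, he]
  have hMR : (0:ℝ) < M := by exact_mod_cast hM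
  rw [div_sub_div_same, ← Finset.sum_sub_distrib, abs_div, abs_of_pos hMR]
  calc |∑ l ∈ Finset.range M, (f l - h l)| / (M:ℝ)
      ≤ (∑ l ∈ Finset.range M, |f l - h l|) / (M:ℝ) :=
        div_mono_nonneg (Finset.abs_sum_le_sum_abs _ _) (le_of_lt hMR)
    _ ≤ ((M:ℝ) * e) / (M:ℝ) := by
        apply div_mono_nonneg _ (le_of_lt hMR)
        calc ∑ l ∈ Finset.range M, |f l - h l| ≤ ∑ _l ∈ Finset.range M, e :=
              Finset.sum_le_sum hb
          _ = (M:ℝ) * e := by simp [mul_comm]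
    _ = e := by field_simp

end Stmt3Aux

/-- Strong consistency: with `X₁, X₂, …` i.i.d. from `μ` (cdf `F`),
`Y₁, Y₂, …` i.i.d. from `ν` (cdf `G`), all independent, sample sizes
`m k, n k → ∞` with `m/(m+n) → τ`, the statistic `D̂` built from the standardized
ranks w.r.t. the combined empirical cdf converges almost surely to
`D = E|H(X)-H(Y)| - (1/2)E|H(X₁)-H(X₂)| - (1/2)E|H(Y₁)-H(Y₂)|`, `H = τF + (1-τ)G`. -/
theorem stmt3
    {Ω : Type*} [MeasurableSpace Ω] (P : Measure Ω) [IsProbabilityMeasure P]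
    (X Y : ℕ → Ω → ℝ)
    (hmX : ∀ i, Measurable (X i)) (hmY : ∀ j, Measurable (Y j))
    (hIndep : iIndepFun (Sum.elim X Y) P)
    (μ ν : Measure ℝ) [IsProbabilityMeasure μ] [IsProbabilityMeasure ν]
    (hX : ∀ i, P.map (X i) = μ) (hY : ∀ j, P.map (Y j) = ν)
    (F G : ℝ → ℝ)
    (hF : ∀ x, F x = (μ (Set.Iic x)).toReal)
    (hG : ∀ x, G x = (ν (Set.Iic x)).toReal)
    (hFcont : Continuous F) (hGcont : Continuous G)
    (τ : ℝ) (m n : ℕ → ℕ)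
    (hm : Tendsto m atTop atTop) (hn : Tendsto n atTop atTop)
    (hτ : Tendsto (fun k => (m k : ℝ) / ((m k : ℝ) + (n k : ℝ))) atTop (nhds τ))
    (H : ℝ → ℝ) (hH : ∀ x, H x = τ * F x + (1 - τ) * G x)
    (D : ℝ)
    (hD : D = (∫ p, |H p.1 - H p.2| ∂(μ.prod ν))
        - (1/2) * (∫ p, |H p.1 - H p.2| ∂(μ.prod μ))
        - (1/2) * (∫ p, |H p.1 - H p.2| ∂(ν.prod ν)))
    -- the empirical cdf of the combined sample `X 0, …, X (m k - 1), Y 0, …, Y (n k - 1)`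
    (HN : ℕ → Ω → ℝ → ℝ)
    (hHN : ∀ k ω z, HN k ω z =
      ((∑ i ∈ Finset.range (m k), if X i ω ≤ z then (1:ℝ) else 0)
        + ∑ j ∈ Finset.range (n k), if Y j ω ≤ z then (1:ℝ) else 0)
        / ((m k : ℝ) + (n k : ℝ)))
    (Dhat : ℕ → Ω → ℝ)
    (hDhat : ∀ k ω, Dhat k ω =
      (1 / ((m k : ℝ) * (n k : ℝ))) *
        ∑ i ∈ Finset.range (m k), ∑ j ∈ Finset.range (n k),
          |HN k ω (X i ω) - HN k ω (Y j ω)|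
      - (1 / (2 * (m k : ℝ)^2)) *
        ∑ i ∈ Finset.range (m k), ∑ j ∈ Finset.range (m k),
          |HN k ω (X i ω) - HN k ω (X j ω)|
      - (1 / (2 * (n k : ℝ)^2)) *
        ∑ i ∈ Finset.range (n k), ∑ j ∈ Finset.range (n k),
          |HN k ω (Y i ω) - HN k ω (Y j ω)|) :
    ∀ᵐ ω ∂P, Tendsto (fun k => Dhat k ω) atTop (nhds D) := by
  classical
  -- basic cdf facts
  have hF0 : ∀ x, 0 ≤ F x := fun x => by rw [hF]; exact ENNReal.toReal_nonneg
  have hF1 : ∀ x, F x ≤ 1 := fun x => by rw [hF]; exact Stmt3Aux.toReal_le_one _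
  have hG0 : ∀ x, 0 ≤ G x := fun x => by rw [hG]; exact ENNReal.toReal_nonneg
  have hG1 : ∀ x, G x ≤ 1 := fun x => by rw [hG]; exact Stmt3Aux.toReal_le_one _
  have hFmono : Monotone F := Stmt3Aux.mono_of_cdf hF
  have hGmono : Monotone G := Stmt3Aux.mono_of_cdf hG
  have hFeq : F = fun x => ProbabilityTheory.cdf μ x :=
    funext fun x => by rw [hF, ProbabilityTheory.cdf_eq_real, measureReal_def]
  have hGeq : G = fun x => ProbabilityTheory.cdf ν x :=
    funext fun x => by rw [hG, ProbabilityTheory.cdf_eq_real, measureReal_def]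
  have hFbot : Tendsto F atBot (nhds 0) := by
    rw [hFeq]; exact ProbabilityTheory.tendsto_cdf_atBot μ
  have hFtop : Tendsto F atTop (nhds 1) := by
    rw [hFeq]; exact ProbabilityTheory.tendsto_cdf_atTop μ
  have hGbot : Tendsto G atBot (nhds 0) := by
    rw [hGeq]; exact ProbabilityTheory.tendsto_cdf_atBot ν
  have hGtop : Tendsto G atTop (nhds 1) := by
    rw [hGeq]; exact ProbabilityTheory.tendsto_cdf_atTop ν
  -- bounds on τ
  have hτ0 : 0 ≤ τ := ge_of_tendsto' hτ fun k => by positivity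
  have hτ1 : τ ≤ 1 := le_of_tendsto' hτ fun k => by
    have hden : (0:ℝ) ≤ (m k : ℝ) + (n k : ℝ) := by positivity
    rcases eq_or_lt_of_le hden with h | h
    · rw [← h]; simp
    · rw [div_le_one h]
      have : (0:ℝ) ≤ (n k : ℝ) := by positivity
      linarith
  -- the limit function
  set g : ℝ → ℝ := fun t => (F t - G t)^2 with hgdef
  have hgc : Continuous g := (hFcont.sub hGcont).pow 2
  have hgb : ∀ x, |g x| ≤ 1 := fun x => by
    have hgx : g x = (F x - G x)^2 := rfl
    rw [hgx, abs_of_nonneg (sq_nonneg _)]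
    nlinarith [hF0 x, hF1 x, hG0 x, hG1 x]
  -- identify D
  have hDL : D = τ * (∫ t, g t ∂μ) + (1 - τ) * (∫ t, g t ∂ν) := by
    have e1 := Stmt3Aux.integral_absH μ ν μ ν hF hG hτ0 hτ1 hH hF hG hFcont hGcont
    have e2 := Stmt3Aux.integral_absH μ μ μ ν hF hG hτ0 hτ1 hH hF hF hFcont hFcont
    have e3 := Stmt3Aux.integral_absH ν ν μ ν hF hG hτ0 hτ1 hH hG hG hGcont hGcont
    rw [hD, e1, e2, e3]
    have key : ∀ (ρ : Measure ℝ), IsProbabilityMeasure ρ →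
        (∫ t, (F t * (1 - G t) + (1 - F t) * G t) ∂ρ)
          - (1/2) * (∫ t, (F t * (1 - F t) + (1 - F t) * F t) ∂ρ)
          - (1/2) * (∫ t, (G t * (1 - G t) + (1 - G t) * G t) ∂ρ)
        = ∫ t, g t ∂ρ := by
      intro ρ hρ
      have hint : ∀ φ : ℝ → ℝ, Continuous φ → (∀ x, |φ x| ≤ 2) → Integrable φ ρ := fun φ hφ hb =>
        Integrable.mono' (integrable_const 2) hφ.aestronglyMeasurable
          (ae_of_all _ fun x => by simpa using hb x)
      have hi1 : Integrable (fun t => F t * (1 - G t) + (1 - F t) * G t) ρ :=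
        hint _ ((hFcont.mul (continuous_const.sub hGcont)).add
          ((continuous_const.sub hFcont).mul hGcont)) (fun x => by
            rw [abs_le]; constructor <;> nlinarith [hF0 x, hF1 x, hG0 x, hG1 x])
      have hi2 : Integrable (fun t => F t * (1 - F t) + (1 - F t) * F t) ρ :=
        hint _ ((hFcont.mul (continuous_const.sub hFcont)).add
          ((continuous_const.sub hFcont).mul hFcont)) (fun x => by
            rw [abs_le]; constructor <;> nlinarith [hF0 x, hF1 x])
      have hi3 : Integrable (fun t => G t * (1 - G t) + (1 - G t) * G t) ρ :=
        hint _ ((hGcont.mul (continuous_const.sub hGcont)).add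
          ((continuous_const.sub hGcont).mul hGcont)) (fun x => by
            rw [abs_le]; constructor <;> nlinarith [hG0 x, hG1 x])
      have hig : Integrable g ρ :=
        Integrable.mono' (integrable_const 1) hgc.aestronglyMeasurable
          (ae_of_all _ fun x => by simpa using hgb x)
      have hcalc : (∫ t, (F t * (1 - G t) + (1 - F t) * G t) ∂ρ)
          = (∫ t, g t ∂ρ) + (1/2) * (∫ t, (F t * (1 - F t) + (1 - F t) * F t) ∂ρ)
            + (1/2) * (∫ t, (G t * (1 - G t) + (1 - G t) * G t) ∂ρ) := by
        have hsplit : ∀ t, F t * (1 - G t) + (1 - F t) * G t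
            = g t + (1/2) * (F t * (1 - F t) + (1 - F t) * F t)
              + (1/2) * (G t * (1 - G t) + (1 - G t) * G t) := fun t => by
          have hgx : g t = (F t - G t)^2 := rfl
          rw [hgx]; ring
        calc (∫ t, (F t * (1 - G t) + (1 - F t) * G t) ∂ρ)
            = ∫ t, (g t + (1/2) * (F t * (1 - F t) + (1 - F t) * F t)
                + (1/2) * (G t * (1 - G t) + (1 - G t) * G t)) ∂ρ :=
              integral_congr_ae (ae_of_all _ hsplit)
          _ = (∫ t, (g t + (1/2) * (F t * (1 - F t) + (1 - F t) * F t)) ∂ρ)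
                + ∫ t, (1/2) * (G t * (1 - G t) + (1 - G t) * G t) ∂ρ :=
              integral_add (hig.add (hi2.const_mul (1/2))) (hi3.const_mul (1/2))
          _ = (∫ t, g t ∂ρ) + (∫ t, (1/2) * (F t * (1 - F t) + (1 - F t) * F t) ∂ρ)
                + ∫ t, (1/2) * (G t * (1 - G t) + (1 - G t) * G t) ∂ρ := by
              rw [integral_add hig (hi2.const_mul (1/2))]
          _ = (∫ t, g t ∂ρ) + (1/2) * (∫ t, (F t * (1 - F t) + (1 - F t) * F t) ∂ρ)
                + (1/2) * (∫ t, (G t * (1 - G t) + (1 - G t) * G t) ∂ρ) := by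
              rw [integral_const_mul, integral_const_mul]
      rw [hcalc]
      ring
    rw [← key μ inferInstance, ← key ν inferInstance]
    ring
  rw [hDL]
  -- independence of the coordinates
  have hpairX : Pairwise (Function.onFun (IndepFun · · P) X) := fun i j hij => by
    have := hIndep.indepFun (show (Sum.inl i : ℕ ⊕ ℕ) ≠ Sum.inl j by simpa using hij)
    simpa using this
  have hpairY : Pairwise (Function.onFun (IndepFun · · P) Y) := fun i j hij => by
    have := hIndep.indepFun (show (Sum.inr i : ℕ ⊕ ℕ) ≠ Sum.inr j by simpa using hij)
    simpa using this
  -- almost sure events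
  have eventA : ∀ᵐ ω ∂P, ∀ q : ℚ, Tendsto
      (fun M => (∑ i ∈ Finset.range M, if X i ω ≤ (q:ℝ) then (1:ℝ) else 0) / M)
      atTop (nhds (F q)) := by
    rw [ae_all_iff]
    intro q
    have hmq : Measurable fun x : ℝ => if x ≤ (q:ℝ) then (1:ℝ) else 0 :=
      Measurable.ite measurableSet_Iic measurable_const measurable_const
    have hbq : ∀ x : ℝ, |if x ≤ (q:ℝ) then (1:ℝ) else 0| ≤ 1 := fun x => by
      split_ifs <;> norm_num
    have h := Stmt3Aux.slln_comp hmX hpairX hX hmq hbq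
    have hval : ∫ x, (if x ≤ (q:ℝ) then (1:ℝ) else 0) ∂μ = F (q:ℝ) := by
      rw [show (fun x : ℝ => if x ≤ (q:ℝ) then (1:ℝ) else 0)
          = Set.indicator (Set.Iic (q:ℝ)) (fun _ => (1:ℝ))
          from funext fun x => by simp [Set.indicator_apply, Set.mem_Iic],
        MeasureTheory.integral_indicator_const (1:ℝ) measurableSet_Iic, hF]
      simp [measureReal_def]
    rw [hval] at h
    exact h
  have eventB : ∀ᵐ ω ∂P, ∀ q : ℚ, Tendsto
      (fun M => (∑ j ∈ Finset.range M, if Y j ω ≤ (q:ℝ) then (1:ℝ) else 0) / M)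
      atTop (nhds (G q)) := by
    rw [ae_all_iff]
    intro q
    have hmq : Measurable fun x : ℝ => if x ≤ (q:ℝ) then (1:ℝ) else 0 :=
      Measurable.ite measurableSet_Iic measurable_const measurable_const
    have hbq : ∀ x : ℝ, |if x ≤ (q:ℝ) then (1:ℝ) else 0| ≤ 1 := fun x => by
      split_ifs <;> norm_num
    have h := Stmt3Aux.slln_comp hmY hpairY hY hmq hbq
    have hval : ∫ x, (if x ≤ (q:ℝ) then (1:ℝ) else 0) ∂ν = G (q:ℝ) := by
      rw [show (fun x : ℝ => if x ≤ (q:ℝ) then (1:ℝ) else 0)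
          = Set.indicator (Set.Iic (q:ℝ)) (fun _ => (1:ℝ))
          from funext fun x => by simp [Set.indicator_apply, Set.mem_Iic],
        MeasureTheory.integral_indicator_const (1:ℝ) measurableSet_Iic, hG]
      simp [measureReal_def]
    rw [hval] at h
    exact h
  have eventCX : ∀ᵐ ω ∂P, Tendsto
      (fun M => (∑ i ∈ Finset.range M, g (X i ω)) / M) atTop (nhds (∫ x, g x ∂μ)) :=
    Stmt3Aux.slln_comp hmX hpairX hX hgc.measurable hgb
  have eventCY : ∀ᵐ ω ∂P, Tendsto
      (fun M => (∑ j ∈ Finset.range M, g (Y j ω)) / M) atTop (nhds (∫ x, g x ∂ν)) :=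
    Stmt3Aux.slln_comp hmY hpairY hY hgc.measurable hgb
  filter_upwards [eventA, eventB, eventCX, eventCY] with ω hAq hBq hCX hCY
  -- uniform convergence of the empirical strict cdfs (Pólya)
  have hE0X : ∀ (k : ℕ) (p : ℝ),
      0 ≤ (∑ i ∈ Finset.range (m k), if X i ω < p then (1:ℝ) else 0) / (m k : ℝ) :=
    fun k p => div_nonneg (Finset.sum_nonneg fun i _ => by split_ifs <;> norm_num)
      (Nat.cast_nonneg _)
  have hE1X : ∀ (k : ℕ) (p : ℝ),
      (∑ i ∈ Finset.range (m k), if X i ω < p then (1:ℝ) else 0) / (m k : ℝ) ≤ 1 := by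
    intro k p
    have hle : (∑ i ∈ Finset.range (m k), if X i ω < p then (1:ℝ) else 0) ≤ (m k : ℝ) := by
      calc (∑ i ∈ Finset.range (m k), if X i ω < p then (1:ℝ) else 0)
          ≤ ∑ _i ∈ Finset.range (m k), (1:ℝ) :=
            Finset.sum_le_sum fun i _ => by split_ifs <;> norm_num
        _ = (m k : ℝ) := by simp
    rcases Nat.eq_zero_or_pos (m k) with h0 | hpos
    · simp [h0]
    · exact (div_le_one (by exact_mod_cast hpos)).2 hle
  have hE0Y : ∀ (k : ℕ) (p : ℝ),
      0 ≤ (∑ j ∈ Finset.range (n k), if Y j ω < p then (1:ℝ) else 0) / (n k : ℝ) :=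
    fun k p => div_nonneg (Finset.sum_nonneg fun j _ => by split_ifs <;> norm_num)
      (Nat.cast_nonneg _)
  have hE1Y : ∀ (k : ℕ) (p : ℝ),
      (∑ j ∈ Finset.range (n k), if Y j ω < p then (1:ℝ) else 0) / (n k : ℝ) ≤ 1 := by
    intro k p
    have hle : (∑ j ∈ Finset.range (n k), if Y j ω < p then (1:ℝ) else 0) ≤ (n k : ℝ) := by
      calc (∑ j ∈ Finset.range (n k), if Y j ω < p then (1:ℝ) else 0)
          ≤ ∑ _j ∈ Finset.range (n k), (1:ℝ) :=
            Finset.sum_le_sum fun j _ => by split_ifs <;> norm_num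
        _ = (n k : ℝ) := by simp
    rcases Nat.eq_zero_or_pos (n k) with h0 | hpos
    · simp [h0]
    · exact (div_le_one (by exact_mod_cast hpos)).2 hle
  have hAX : ∀ q : ℚ, Tendsto
      (fun k => (∑ i ∈ Finset.range (m k), if X i ω ≤ (q:ℝ) then (1:ℝ) else 0) / (m k : ℝ))
      atTop (nhds (F q)) := fun q => (hAq q).comp hm
  have hAY : ∀ q : ℚ, Tendsto
      (fun k => (∑ j ∈ Finset.range (n k), if Y j ω ≤ (q:ℝ) then (1:ℝ) else 0) / (n k : ℝ))
      atTop (nhds (G q)) := fun q => (hBq q).comp hn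
  have hlbX : ∀ (k : ℕ) (q : ℚ) (p : ℝ), (q:ℝ) < p →
      (∑ i ∈ Finset.range (m k), if X i ω ≤ (q:ℝ) then (1:ℝ) else 0) / (m k : ℝ)
        ≤ (∑ i ∈ Finset.range (m k), if X i ω < p then (1:ℝ) else 0) / (m k : ℝ) := by
    intro k q p hqp
    refine Stmt3Aux.div_mono_nonneg (Finset.sum_le_sum fun i _ => ?_) (Nat.cast_nonneg _)
    split_ifs with h1 h2
    · norm_num
    · exact absurd (lt_of_le_of_lt h1 hqp) h2
    · norm_num
    · norm_num
  have hubX : ∀ (k : ℕ) (q : ℚ) (p : ℝ), p ≤ (q:ℝ) →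
      (∑ i ∈ Finset.range (m k), if X i ω < p then (1:ℝ) else 0) / (m k : ℝ)
        ≤ (∑ i ∈ Finset.range (m k), if X i ω ≤ (q:ℝ) then (1:ℝ) else 0) / (m k : ℝ) := by
    intro k q p hpq
    refine Stmt3Aux.div_mono_nonneg (Finset.sum_le_sum fun i _ => ?_) (Nat.cast_nonneg _)
    split_ifs with h1 h2
    · norm_num
    · exact absurd (le_trans h1.le hpq) h2
    · norm_num
    · norm_num
  have hlbY : ∀ (k : ℕ) (q : ℚ) (p : ℝ), (q:ℝ) < p →
      (∑ j ∈ Finset.range (n k), if Y j ω ≤ (q:ℝ) then (1:ℝ) else 0) / (n k : ℝ)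
        ≤ (∑ j ∈ Finset.range (n k), if Y j ω < p then (1:ℝ) else 0) / (n k : ℝ) := by
    intro k q p hqp
    refine Stmt3Aux.div_mono_nonneg (Finset.sum_le_sum fun j _ => ?_) (Nat.cast_nonneg _)
    split_ifs with h1 h2
    · norm_num
    · exact absurd (lt_of_le_of_lt h1 hqp) h2
    · norm_num
    · norm_num
  have hubY : ∀ (k : ℕ) (q : ℚ) (p : ℝ), p ≤ (q:ℝ) →
      (∑ j ∈ Finset.range (n k), if Y j ω < p then (1:ℝ) else 0) / (n k : ℝ)
        ≤ (∑ j ∈ Finset.range (n k), if Y j ω ≤ (q:ℝ) then (1:ℝ) else 0) / (n k : ℝ) := by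
    intro k q p hpq
    refine Stmt3Aux.div_mono_nonneg (Finset.sum_le_sum fun j _ => ?_) (Nat.cast_nonneg _)
    split_ifs with h1 h2
    · norm_num
    · exact absurd (le_trans h1.le hpq) h2
    · norm_num
    · norm_num
  have hPX : ∀ ε : ℝ, 0 < ε → ∀ᶠ k in atTop, ∀ p : ℝ,
      |(∑ i ∈ Finset.range (m k), if X i ω < p then (1:ℝ) else 0) / (m k : ℝ) - F p| ≤ ε :=
    fun ε hε => Stmt3Aux.polya hFcont hFmono hFbot hFtop hAX hE0X hE1X hlbX hubX hε
  have hPY : ∀ ε : ℝ, 0 < ε → ∀ᶠ k in atTop, ∀ p : ℝ,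
      |(∑ j ∈ Finset.range (n k), if Y j ω < p then (1:ℝ) else 0) / (n k : ℝ) - G p| ≤ ε :=
    fun ε hε => Stmt3Aux.polya hGcont hGmono hGbot hGtop hAY hE0Y hE1Y hlbY hubY hε
  -- pointwise comparison of psi with g
  have hpsi_bound : ∀ (k : ℕ) (ε : ℝ),
      (∀ p : ℝ, |(∑ i ∈ Finset.range (m k), if X i ω < p then (1:ℝ) else 0) / (m k : ℝ) - F p| ≤ ε) →
      (∀ p : ℝ, |(∑ j ∈ Finset.range (n k), if Y j ω < p then (1:ℝ) else 0) / (n k : ℝ) - G p| ≤ ε) →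
      ∀ t : ℝ, |Stmt3Aux.psi (m k) (n k) (fun i => X i ω) (fun j => Y j ω) t - g t| ≤ 4 * ε := by
    intro k ε hx hy t
    have hps : Stmt3Aux.psi (m k) (n k) (fun i => X i ω) (fun j => Y j ω) t
        = ((∑ i ∈ Finset.range (m k), if X i ω < t then (1:ℝ) else 0) / (m k : ℝ)
            - (∑ j ∈ Finset.range (n k), if Y j ω < t then (1:ℝ) else 0) / (n k : ℝ))^2 := rfl
    have hgt : g t = (F t - G t)^2 := rfl
    rw [hps, hgt]
    exact Stmt3Aux.sq_diff_bound (hE0X k t) (hE1X k t) (hE0Y k t) (hE1Y k t)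
      (hF0 t) (hF1 t) (hG0 t) (hG1 t) (hx t) (hy t)
  -- convergence of the two averaged psi-sums
  have hSx : Tendsto (fun k => (∑ l ∈ Finset.range (m k),
      Stmt3Aux.psi (m k) (n k) (fun i => X i ω) (fun j => Y j ω) (X l ω)) / (m k : ℝ))
      atTop (nhds (∫ x, g x ∂μ)) := by
    have hAvg : Tendsto (fun k => (∑ l ∈ Finset.range (m k), g (X l ω)) / (m k : ℝ))
        atTop (nhds (∫ x, g x ∂μ)) := hCX.comp hm
    have hdiff : Tendsto (fun k => (∑ l ∈ Finset.range (m k),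
        Stmt3Aux.psi (m k) (n k) (fun i => X i ω) (fun j => Y j ω) (X l ω)) / (m k : ℝ)
        - (∑ l ∈ Finset.range (m k), g (X l ω)) / (m k : ℝ)) atTop (nhds 0) := by
      rw [Metric.tendsto_atTop]
      intro ε hε
      have hε9 : 0 < ε/9 := by linarith
      obtain ⟨N, hN⟩ := eventually_atTop.1 ((hPX (ε/9) hε9).and (hPY (ε/9) hε9))
      refine ⟨N, fun k hk => ?_⟩
      obtain ⟨hPXk, hPYk⟩ := hN k hk
      rw [Real.dist_eq, sub_zero]
      have hb := Stmt3Aux.avg_diff_bound (m k)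
        (fun l => Stmt3Aux.psi (m k) (n k) (fun i => X i ω) (fun j => Y j ω) (X l ω))
        (fun l => g (X l ω)) (by linarith : (0:ℝ) ≤ 4 * (ε/9))
        (fun l _ => hpsi_bound k (ε/9) hPXk hPYk (X l ω))
      calc |(∑ l ∈ Finset.range (m k),
            Stmt3Aux.psi (m k) (n k) (fun i => X i ω) (fun j => Y j ω) (X l ω)) / (m k : ℝ)
            - (∑ l ∈ Finset.range (m k), g (X l ω)) / (m k : ℝ)| ≤ 4 * (ε/9) := hb
        _ < ε := by linarith
    have := hAvg.add hdiff
    rw [add_zero] at this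
    refine this.congr fun k => ?_
    ring
  have hSy : Tendsto (fun k => (∑ l ∈ Finset.range (n k),
      Stmt3Aux.psi (m k) (n k) (fun i => X i ω) (fun j => Y j ω) (Y l ω)) / (n k : ℝ))
      atTop (nhds (∫ x, g x ∂ν)) := by
    have hAvg : Tendsto (fun k => (∑ l ∈ Finset.range (n k), g (Y l ω)) / (n k : ℝ))
        atTop (nhds (∫ x, g x ∂ν)) := hCY.comp hn
    have hdiff : Tendsto (fun k => (∑ l ∈ Finset.range (n k),
        Stmt3Aux.psi (m k) (n k) (fun i => X i ω) (fun j => Y j ω) (Y l ω)) / (n k : ℝ)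
        - (∑ l ∈ Finset.range (n k), g (Y l ω)) / (n k : ℝ)) atTop (nhds 0) := by
      rw [Metric.tendsto_atTop]
      intro ε hε
      have hε9 : 0 < ε/9 := by linarith
      obtain ⟨N, hN⟩ := eventually_atTop.1 ((hPX (ε/9) hε9).and (hPY (ε/9) hε9))
      refine ⟨N, fun k hk => ?_⟩
      obtain ⟨hPXk, hPYk⟩ := hN k hk
      rw [Real.dist_eq, sub_zero]
      have hb := Stmt3Aux.avg_diff_bound (n k)
        (fun l => Stmt3Aux.psi (m k) (n k) (fun i => X i ω) (fun j => Y j ω) (Y l ω))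
        (fun l => g (Y l ω)) (by linarith : (0:ℝ) ≤ 4 * (ε/9))
        (fun l _ => hpsi_bound k (ε/9) hPXk hPYk (Y l ω))
      calc |(∑ l ∈ Finset.range (n k),
            Stmt3Aux.psi (m k) (n k) (fun i => X i ω) (fun j => Y j ω) (Y l ω)) / (n k : ℝ)
            - (∑ l ∈ Finset.range (n k), g (Y l ω)) / (n k : ℝ)| ≤ 4 * (ε/9) := hb
        _ < ε := by linarith
    have := hAvg.add hdiff
    rw [add_zero] at this
    refine this.congr fun k => ?_
    ring
  -- coefficient limits
  have hmk1 : ∀ᶠ k in atTop, 1 ≤ m k := hm.eventually_ge_atTop 1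
  have hnk1 : ∀ᶠ k in atTop, 1 ≤ n k := hn.eventually_ge_atTop 1
  have hcn : Tendsto (fun k => (n k : ℝ) / ((m k : ℝ) + (n k : ℝ))) atTop (nhds (1 - τ)) := by
    refine Tendsto.congr' ?_ (tendsto_const_nhds.sub hτ)
    filter_upwards [hmk1, hnk1] with k hk1 hk2
    have h1 : (0:ℝ) < m k := by exact_mod_cast hk1
    have h2 : (0:ℝ) < n k := by exact_mod_cast hk2
    have hN0 : (m k : ℝ) + (n k : ℝ) ≠ 0 := by linarith
    field_simp
    ring
  have hlim : Tendsto (fun k => ((m k : ℝ) / ((m k : ℝ) + (n k : ℝ)))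
      * ((∑ l ∈ Finset.range (m k),
          Stmt3Aux.psi (m k) (n k) (fun i => X i ω) (fun j => Y j ω) (X l ω)) / (m k : ℝ))
      + ((n k : ℝ) / ((m k : ℝ) + (n k : ℝ)))
      * ((∑ l ∈ Finset.range (n k),
          Stmt3Aux.psi (m k) (n k) (fun i => X i ω) (fun j => Y j ω) (Y l ω)) / (n k : ℝ)))
      atTop (nhds (τ * (∫ x, g x ∂μ) + (1 - τ) * (∫ x, g x ∂ν))) := (hτ.mul hSx).add (hcn.mul hSy)
  refine Filter.Tendsto.congr' ?_ hlim
  filter_upwards [hmk1, hnk1] with k hk1 hk2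
  have hk1' : 0 < m k := hk1
  have hk2' : 0 < n k := hk2
  have hm0 : (m k : ℝ) ≠ 0 := by
    have : (0:ℝ) < m k := by exact_mod_cast hk1'
    linarith
  have hn0 : (n k : ℝ) ≠ 0 := by
    have : (0:ℝ) < n k := by exact_mod_cast hk2'
    linarith
  have hN0 : (m k : ℝ) + (n k : ℝ) ≠ 0 := by
    have h1 : (0:ℝ) < m k := by exact_mod_cast hk1'
    have h2 : (0:ℝ) < n k := by exact_mod_cast hk2'
    linarith
  have hdet : Dhat k ω = ((m k : ℝ) + (n k : ℝ))⁻¹ *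
      ((∑ l ∈ Finset.range (m k),
        Stmt3Aux.psi (m k) (n k) (fun i => X i ω) (fun j => Y j ω) (X l ω))
      + ∑ l ∈ Finset.range (n k),
        Stmt3Aux.psi (m k) (n k) (fun i => X i ω) (fun j => Y j ω) (Y l ω)) := by
    rw [hDhat]
    have hCf : ∀ z, HN k ω z
        = Stmt3Aux.Cfun (m k) (n k) (fun i => X i ω) (fun j => Y j ω) z := fun z => by
      rw [hHN]; rfl
    simp only [hCf]
    exact Stmt3Aux.det_id (m k) (n k) hk1' hk2' (fun i => X i ω) (fun j => Y j ω)
  rw [hdet]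
  field_simp
end

section
/- Let m, n be positive integers with N = m + n. For a continuous distribution function F, let T(F) denote the law of the statistic T computed from independent samples X_1,...,X_m and Y_1,...,Y_n all i.i.d. from F (i.e., under the null hypothesis F = G). Then for any two continuous distribution functions F and F', the law of T under F equals the law of T under F'; that is, T is distribution free under the null hypothesis. -/
open MeasureTheory ProbabilityTheory

/-- The empirical cdf `H_N` of the combined sample `x₁,…,x_m, y₁,…,y_n`. -/
noncomputable def empCDF {m n : ℕ} (x : Fin m → ℝ) (y : Fin n → ℝ) (z : ℝ) : ℝ :=
  ((∑ i, if x i ≤ z then (1:ℝ) else 0) + ∑ j, if y j ≤ z then (1:ℝ) else 0)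
    / ((m : ℝ) + (n : ℝ))

/-- The rank-based two-sample test statistic
`T = (mn/N){ (1/(mn)) Σᵢⱼ |R(xᵢ) - R(yⱼ)| - (1/(2m²)) Σᵢⱼ |R(xᵢ) - R(xⱼ)|
  - (1/(2n²)) Σᵢⱼ |R(yᵢ) - R(yⱼ)| }` where `R(z) = H_N(z)`. -/
noncomputable def TStat {m n : ℕ} (x : Fin m → ℝ) (y : Fin n → ℝ) : ℝ :=
  ((m : ℝ) * (n : ℝ) / ((m : ℝ) + (n : ℝ))) *
    ((1 / ((m : ℝ) * (n : ℝ))) * ∑ i, ∑ j, |empCDF x y (x i) - empCDF x y (y j)|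
      - (1 / (2 * (m : ℝ)^2)) * ∑ i, ∑ j, |empCDF x y (x i) - empCDF x y (x j)|
      - (1 / (2 * (n : ℝ)^2)) * ∑ i, ∑ j, |empCDF x y (y i) - empCDF x y (y j)|)

namespace Stmt4Aux

open Set Filter Topology
open scoped ENNReal

/-- The cumulative distribution function of `μ`. -/
noncomputable def F (μ : Measure ℝ) (x : ℝ) : ℝ := (μ (Set.Iic x)).toReal

/-- The set of points lying strictly above another point with the same `F`-value. -/
def D (μ : Measure ℝ) : Set ℝ := {t | ∃ s, s < t ∧ F μ s = F μ t}

variable (μ : Measure ℝ) [IsProbabilityMeasure μ]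

lemma F_mono : Monotone (F μ) := fun _ _ hab =>
  ENNReal.toReal_mono (measure_ne_top _ _) (measure_mono (Iic_subset_Iic.mpr hab))

lemma F_le_one (x : ℝ) : F μ x ≤ 1 :=
  ENNReal.toReal_le_of_le_ofReal zero_le_one (by simpa using prob_le_one (μ := μ) (s := Iic x))

lemma F_tendsto_atTop : Tendsto (F μ) atTop (𝓝 1) := by
  have h := tendsto_measure_Iic_atTop (μ := μ)
  rw [measure_univ] at h
  have := (ENNReal.tendsto_toReal (by norm_num : (1:ℝ≥0∞) ≠ ⊤)).comp h
  exact this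

lemma exists_F_le {t : ℝ} (ht : 0 < t) : ∃ x, F μ x ≤ t := by
  by_contra h
  push_neg at h
  have h2 : Tendsto (fun k : ℕ => μ (Iic (-(k:ℝ)))) atTop (𝓝 (μ (⋂ k : ℕ, Iic (-(k:ℝ))))) := by
    apply tendsto_measure_iInter_atTop
    · intro k; exact nullMeasurableSet_Iic
    · intro a b hab
      exact Iic_subset_Iic.mpr (by exact_mod_cast neg_le_neg (by exact_mod_cast hab))
    · exact ⟨0, measure_ne_top _ _⟩
  have hempty : (⋂ k : ℕ, Iic (-(k:ℝ))) = ∅ := by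
    ext x
    simp only [mem_iInter, mem_Iic, mem_empty_iff_false, iff_false, not_forall, not_le]
    obtain ⟨k, hk⟩ := exists_nat_gt (-x)
    exact ⟨k, by linarith⟩
  rw [hempty, measure_empty] at h2
  have h3 : Tendsto (fun k : ℕ => F μ (-(k:ℝ))) atTop (𝓝 0) := by
    have := (ENNReal.tendsto_toReal (by norm_num : (0:ℝ≥0∞) ≠ ⊤)).comp h2
    simpa [F, Function.comp_def] using this
  obtain ⟨k, hk⟩ := (h3.eventually (eventually_lt_nhds ht)).exists
  exact absurd (h (-(k:ℝ))) (not_lt.mpr hk.le)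

/-- The distribution of `F` under `μ`: the probability integral transform. -/
lemma measure_F_le (hF : Continuous (F μ)) (t : ℝ) :
    μ {x | F μ x ≤ t} = if t < 1 then ENNReal.ofReal t else 1 := by
  by_cases ht1 : t < 1
  · rw [if_pos ht1]
    rcases eq_empty_or_nonempty {x | F μ x ≤ t} with hS | hS
    · rw [hS, measure_empty]
      have ht0 : t ≤ 0 := by
        by_contra h
        push_neg at h
        obtain ⟨x, hx⟩ := exists_F_le μ h
        exact absurd hS (nonempty_iff_ne_empty.mp ⟨x, hx⟩)
      rw [ENNReal.ofReal_eq_zero.mpr ht0]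
    · obtain ⟨x₁, hx₁⟩ := ((F_tendsto_atTop μ).eventually (eventually_gt_nhds ht1)).exists
      have hbdd : BddAbove {x | F μ x ≤ t} := by
        refine ⟨x₁, fun s hs => ?_⟩
        by_contra h
        push_neg at h
        exact absurd (le_trans (F_mono μ h.le) hs) (not_le.mpr hx₁)
      have hclosed : IsClosed {x | F μ x ≤ t} := isClosed_le hF continuous_const
      set c := sSup {x | F μ x ≤ t} with hc_def
      have hc : c ∈ {x | F μ x ≤ t} := hclosed.csSup_mem hS hbdd
      have hSc : {x | F μ x ≤ t} = Iic c := by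
        apply Subset.antisymm
        · exact fun s hs => le_csSup hbdd hs
        · exact fun s hs => le_trans (F_mono μ hs) hc
      have hFc : F μ c = t := by
        refine le_antisymm hc ?_
        by_contra hlt
        push_neg at hlt
        have hcx : c ≤ x₁ := le_of_lt ((F_mono μ).reflect_lt (lt_trans hlt hx₁))
        obtain ⟨x, hxmem, hxval⟩ := intermediate_value_Icc hcx hF.continuousOn ⟨hlt.le, hx₁.le⟩
        have : x ≤ c := le_csSup hbdd (by simp [hxval.le])
        exact absurd (hxval ▸ F_mono μ this) (not_le.mpr hlt)
      rw [hSc, ← hFc, F, ENNReal.ofReal_toReal (measure_ne_top _ _)]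
  · rw [if_neg ht1]
    push_neg at ht1
    have : {x | F μ x ≤ t} = univ := eq_univ_of_forall fun x => le_trans (F_le_one μ x) ht1
    rw [this, measure_univ]

lemma measure_Dq_null (hF : Continuous (F μ)) (q : ℚ) :
    μ {t | (q:ℝ) < t ∧ F μ t = F μ (q:ℝ)} = 0 := by
  set S := {t | (q:ℝ) < t ∧ F μ t = F μ (q:ℝ)} with hS_def
  rcases eq_empty_or_nonempty S with h | hne
  · rw [h, measure_empty]
  by_cases hbdd : BddAbove S
  · set c := sSup S with hc_def
    have hsub : S ⊆ Ioc (q:ℝ) c := fun t ht => ⟨ht.1, le_csSup hbdd ht⟩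
    have hFc : F μ c = F μ (q:ℝ) := by
      have hclosed : IsClosed {t : ℝ | F μ t = F μ (q:ℝ)} :=
        isClosed_eq hF continuous_const
      exact hclosed.closure_subset
        (closure_mono (fun t (ht : t ∈ S) => ht.2) (csSup_mem_closure hne hbdd))
    have hIoc : μ (Ioc (q:ℝ) c) = 0 := by
      have h1 : Iic c \ Iic (q:ℝ) = Ioc (q:ℝ) c := Iic_sdiff_Iic
      have h2 : μ (Iic c) = μ (Iic (q:ℝ)) :=
        (ENNReal.toReal_eq_toReal_iff' (measure_ne_top _ _) (measure_ne_top _ _)).mp hFc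
      rw [← h1, measure_diff (Iic_subset_Iic.mpr ?_) nullMeasurableSet_Iic (measure_ne_top _ _),
        h2, tsub_self]
      obtain ⟨t, ht⟩ := hne
      exact le_trans ht.1.le (le_csSup hbdd ht)
    exact measure_mono_null hsub hIoc
  · have hconst : ∀ x, (q:ℝ) ≤ x → F μ x = F μ (q:ℝ) := by
      intro x hx
      obtain ⟨t, htS, hxt⟩ : ∃ t ∈ S, x ≤ t := by
        by_contra h
        push_neg at h
        exact hbdd ⟨x, fun t ht => (h t ht).le⟩
      exact le_antisymm (htS.2 ▸ F_mono μ hxt) (F_mono μ hx)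
    have hFq : F μ (q:ℝ) = 1 := by
      refine tendsto_nhds_unique ?_ (F_tendsto_atTop μ)
      refine Tendsto.congr' ?_ (tendsto_const_nhds (x := F μ (q:ℝ)) (f := atTop))
      filter_upwards [eventually_ge_atTop (q:ℝ)] with x hx
      exact (hconst x hx).symm
    have h1 : μ (Iic (q:ℝ)) = 1 := by
      have hq : (μ (Iic (q:ℝ))).toReal = 1 := hFq
      rw [← ENNReal.ofReal_toReal (measure_ne_top μ (Iic (q:ℝ))), hq]
      simp
    have h0 : μ (Ioi (q:ℝ)) = 0 := by
      rw [show Ioi (q:ℝ) = (Iic (q:ℝ))ᶜ from compl_Iic.symm,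
        measure_compl measurableSet_Iic (measure_ne_top _ _), h1, measure_univ, tsub_self]
    exact measure_mono_null (fun t ht => ht.1) h0

lemma measure_D_null (hF : Continuous (F μ)) : μ (D μ) = 0 := by
  have hsub : D μ ⊆ ⋃ q : ℚ, {t | (q:ℝ) < t ∧ F μ t = F μ (q:ℝ)} := by
    rintro t ⟨s, hst, hFs⟩
    obtain ⟨q, hq1, hq2⟩ := exists_rat_btwn hst
    have hq : F μ (q:ℝ) = F μ t :=
      le_antisymm (F_mono μ hq2.le) (hFs ▸ F_mono μ hq1.le)
    exact mem_iUnion.mpr ⟨q, hq2, hq.symm ▸ rfl⟩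
  exact measure_mono_null hsub (measure_iUnion_null fun q => measure_Dq_null μ hF q)

lemma le_iff_of_not_mem_D {a b : ℝ} (ha : a ∉ D μ) : a ≤ b ↔ F μ a ≤ F μ b := by
  constructor
  · exact fun h => F_mono μ h
  · intro h
    by_contra hab
    push_neg at hab
    exact ha ⟨b, hab, le_antisymm (F_mono μ hab.le) h⟩

lemma empCDF_comp {m n : ℕ} (x : Fin m → ℝ) (y : Fin n → ℝ) (f : ℝ → ℝ) (z : ℝ)
    (hx : ∀ i, (x i ≤ z ↔ f (x i) ≤ f z)) (hy : ∀ j, (y j ≤ z ↔ f (y j) ≤ f z)) :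
    empCDF (f ∘ x) (f ∘ y) (f z) = empCDF x y z := by
  unfold empCDF
  congr 2
  · exact Finset.sum_congr rfl fun i _ => if_congr (hx i).symm rfl rfl
  · exact Finset.sum_congr rfl fun j _ => if_congr (hy j).symm rfl rfl

lemma TStat_comp {m n : ℕ} (x : Fin m → ℝ) (y : Fin n → ℝ) (f : ℝ → ℝ)
    (h : ∀ a b : ℝ, ((∃ i, x i = a) ∨ (∃ j, y j = a)) → (a ≤ b ↔ f a ≤ f b)) :
    TStat (f ∘ x) (f ∘ y) = TStat x y := by
  have key : ∀ z : ℝ, empCDF (f ∘ x) (f ∘ y) (f z) = empCDF x y z := fun z =>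
    empCDF_comp x y f z (fun i => h (x i) z (Or.inl ⟨i, rfl⟩))
      (fun j => h (y j) z (Or.inr ⟨j, rfl⟩))
  unfold TStat
  simp only [Function.comp_apply, key]

lemma measurable_TStat {m n : ℕ} :
    Measurable fun p : (Fin m → ℝ) × (Fin n → ℝ) => TStat p.1 p.2 := by
  have hind : ∀ g h : ((Fin m → ℝ) × (Fin n → ℝ)) → ℝ, Measurable g → Measurable h →
      Measurable (fun p => if g p ≤ h p then (1:ℝ) else 0) :=
    fun g h hg hh => Measurable.ite (measurableSet_le hg hh) measurable_const measurable_const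
  have hx : ∀ i : Fin m, Measurable fun p : (Fin m → ℝ) × (Fin n → ℝ) => p.1 i :=
    fun i => (measurable_pi_apply i).comp measurable_fst
  have hy : ∀ j : Fin n, Measurable fun p : (Fin m → ℝ) × (Fin n → ℝ) => p.2 j :=
    fun j => (measurable_pi_apply j).comp measurable_snd
  have hemp : ∀ f : ((Fin m → ℝ) × (Fin n → ℝ)) → ℝ, Measurable f →
      Measurable (fun p => empCDF p.1 p.2 (f p)) := by
    intro f hf
    unfold empCDF
    apply Measurable.div _ measurable_const
    exact Measurable.add
      (Finset.measurable_sum _ fun i _ => hind _ _ (hx i) hf)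
      (Finset.measurable_sum _ fun j _ => hind _ _ (hy j) hf)
  unfold TStat
  apply Measurable.const_mul
  refine Measurable.sub (Measurable.sub ?_ ?_) ?_
  · refine Measurable.const_mul ?_ _
    exact Finset.measurable_sum _ fun i _ => Finset.measurable_sum _ fun j _ =>
      ((hemp _ (hx i)).sub (hemp _ (hy j))).abs
  · refine Measurable.const_mul ?_ _
    exact Finset.measurable_sum _ fun i _ => Finset.measurable_sum _ fun j _ =>
      ((hemp _ (hx i)).sub (hemp _ (hx j))).abs
  · refine Measurable.const_mul ?_ _
    exact Finset.measurable_sum _ fun i _ => Finset.measurable_sum _ fun j _ =>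
      ((hemp _ (hy i)).sub (hemp _ (hy j))).abs

/-- Replacing each observation by its `F`-value does not change the law of `T`. -/
lemma key_map (m n : ℕ) (ν : Measure ℝ) [IsProbabilityMeasure ν] (hFc : Continuous (F ν)) :
    Measure.map (fun p : (Fin m → ℝ) × (Fin n → ℝ) => TStat p.1 p.2)
        ((Measure.pi fun _ : Fin m => ν).prod (Measure.pi fun _ : Fin n => ν))
      = Measure.map (fun p : (Fin m → ℝ) × (Fin n → ℝ) => TStat p.1 p.2)
        ((Measure.pi fun _ : Fin m => Measure.map (F ν) ν).prod
          (Measure.pi fun _ : Fin n => Measure.map (F ν) ν)) := by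
  set G := F ν with hG
  have hGmeas : Measurable G := hFc.measurable
  haveI : IsProbabilityMeasure (Measure.map G ν) :=
    Measure.isProbabilityMeasure_map hGmeas.aemeasurable
  set P := (Measure.pi fun _ : Fin m => ν).prod (Measure.pi fun _ : Fin n => ν) with hP
  have hD := measure_D_null ν hFc
  have hxi : ∀ i : Fin m, ∀ᵐ p : (Fin m → ℝ) × (Fin n → ℝ) ∂P, p.1 i ∉ D ν := by
    intro i
    rw [ae_iff]
    have hset : {p : (Fin m → ℝ) × (Fin n → ℝ) | ¬ p.1 i ∉ D ν}
        = ((Function.eval i) ⁻¹' (D ν)) ×ˢ (Set.univ : Set (Fin n → ℝ)) := by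
      ext p; simp [Function.eval]
    rw [hset, hP, Measure.prod_prod, Measure.pi_eval_preimage_null _ hD, zero_mul]
  have hyj : ∀ j : Fin n, ∀ᵐ p : (Fin m → ℝ) × (Fin n → ℝ) ∂P, p.2 j ∉ D ν := by
    intro j
    rw [ae_iff]
    have hset : {p : (Fin m → ℝ) × (Fin n → ℝ) | ¬ p.2 j ∉ D ν}
        = (Set.univ : Set (Fin m → ℝ)) ×ˢ ((Function.eval j) ⁻¹' (D ν)) := by
      ext p; simp [Function.eval]
    rw [hset, hP, Measure.prod_prod, Measure.pi_eval_preimage_null _ hD, mul_zero]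
  have hgood : ∀ᵐ p : (Fin m → ℝ) × (Fin n → ℝ) ∂P,
      (∀ i, p.1 i ∉ D ν) ∧ (∀ j, p.2 j ∉ D ν) :=
    (ae_all_iff.mpr hxi).and (ae_all_iff.mpr hyj)
  have hae : (fun p : (Fin m → ℝ) × (Fin n → ℝ) => TStat p.1 p.2)
      =ᵐ[P] (fun p => TStat (G ∘ p.1) (G ∘ p.2)) := by
    filter_upwards [hgood] with p hp
    refine (TStat_comp p.1 p.2 G ?_).symm
    rintro a b (⟨i, rfl⟩ | ⟨j, rfl⟩)
    · exact le_iff_of_not_mem_D ν (hp.1 i)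
    · exact le_iff_of_not_mem_D ν (hp.2 j)
  rw [Measure.map_congr hae]
  have hfm : Measurable fun x : Fin m → ℝ => G ∘ x :=
    measurable_pi_iff.mpr fun i => hGmeas.comp (measurable_pi_apply i)
  have hfn : Measurable fun y : Fin n → ℝ => G ∘ y :=
    measurable_pi_iff.mpr fun j => hGmeas.comp (measurable_pi_apply j)
  have hΦ : Measurable (fun p : (Fin m → ℝ) × (Fin n → ℝ) => (G ∘ p.1, G ∘ p.2)) :=
    (hfm.comp measurable_fst).prodMk (hfn.comp measurable_snd)
  have hcomp : (fun p : (Fin m → ℝ) × (Fin n → ℝ) => TStat (G ∘ p.1) (G ∘ p.2))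
      = (fun p : (Fin m → ℝ) × (Fin n → ℝ) => TStat p.1 p.2)
        ∘ (fun p => (G ∘ p.1, G ∘ p.2)) := rfl
  rw [hcomp, ← Measure.map_map measurable_TStat hΦ]
  congr 1
  have h1 : Measure.map (fun x : Fin m → ℝ => G ∘ x) (Measure.pi fun _ : Fin m => ν)
      = Measure.pi (fun _ : Fin m => Measure.map G ν) :=
    (measurePreserving_pi (fun _ : Fin m => ν) (fun _ => Measure.map G ν)
      (fun _ => ⟨hGmeas, rfl⟩)).map_eq
  have h2 : Measure.map (fun y : Fin n → ℝ => G ∘ y) (Measure.pi fun _ : Fin n => ν)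
      = Measure.pi (fun _ : Fin n => Measure.map G ν) :=
    (measurePreserving_pi (fun _ : Fin n => ν) (fun _ => Measure.map G ν)
      (fun _ => ⟨hGmeas, rfl⟩)).map_eq
  rw [← h1, ← h2, hP]
  exact (Measure.map_prod_map _ _ hfm hfn).symm

end Stmt4Aux

/-- Under the null hypothesis the statistic `T` is distribution free:
for any two probability measures `μ`, `μ'` on `ℝ` with continuous distribution
functions, the law of `T` computed from `m + n` i.i.d. observations from `μ`
coincides with the law of `T` computed from `m + n` i.i.d. observations from `μ'`. -/
theorem stmt4
    (m n : ℕ) (hm : 0 < m) (hn : 0 < n)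
    (μ μ' : Measure ℝ) [IsProbabilityMeasure μ] [IsProbabilityMeasure μ']
    (hμ : Continuous fun x => (μ (Set.Iic x)).toReal)
    (hμ' : Continuous fun x => (μ' (Set.Iic x)).toReal) :
    Measure.map (fun p : (Fin m → ℝ) × (Fin n → ℝ) => TStat p.1 p.2)
        ((Measure.pi fun _ : Fin m => μ).prod (Measure.pi fun _ : Fin n => μ))
      = Measure.map (fun p : (Fin m → ℝ) × (Fin n → ℝ) => TStat p.1 p.2)
        ((Measure.pi fun _ : Fin m => μ').prod (Measure.pi fun _ : Fin n => μ')) := by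
  have hμc : Continuous (Stmt4Aux.F μ) := hμ
  have hμ'c : Continuous (Stmt4Aux.F μ') := hμ'
  haveI : IsProbabilityMeasure (Measure.map (Stmt4Aux.F μ) μ) :=
    Measure.isProbabilityMeasure_map hμc.measurable.aemeasurable
  haveI : IsProbabilityMeasure (Measure.map (Stmt4Aux.F μ') μ') :=
    Measure.isProbabilityMeasure_map hμ'c.measurable.aemeasurable
  have huu : Measure.map (Stmt4Aux.F μ) μ = Measure.map (Stmt4Aux.F μ') μ' := by
    refine Measure.ext_of_Iic _ _ fun a => ?_
    rw [Measure.map_apply hμc.measurable measurableSet_Iic,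
      Measure.map_apply hμ'c.measurable measurableSet_Iic]
    show μ {x | Stmt4Aux.F μ x ≤ a} = μ' {x | Stmt4Aux.F μ' x ≤ a}
    rw [Stmt4Aux.measure_F_le μ hμc a, Stmt4Aux.measure_F_le μ' hμ'c a]
  rw [Stmt4Aux.key_map m n μ hμc, Stmt4Aux.key_map m n μ' hμ'c, huu]
end

section
/- Let X_1,...,X_m, Y_1,...,Y_n be i.i.d. random variables with common continuous distribution function F (the null hypothesis F = G), and let N = m + n. Then the expected value of the test statistic T satisfies E T = (N+1)/(6N). -/
open MeasureTheory ProbabilityTheory Set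
open scoped ENNReal

lemma helper_ind_diff {s z w : ℝ} (h : w ≤ z) :
    ((if s ≤ z then (1:ℝ) else 0) - if s ≤ w then 1 else 0)
      = if (w < s ∧ s ≤ z) ∨ (z < s ∧ s ≤ w) then 1 else 0 := by
  by_cases h1 : s ≤ z <;> by_cases h2 : s ≤ w
  · rw [if_pos h1, if_pos h2, if_neg (by rintro (⟨hw, _⟩ | ⟨hz, _⟩) <;> linarith)]; ring
  · rw [if_pos h1, if_neg h2, if_pos (Or.inl ⟨lt_of_not_ge h2, h1⟩)]; ring
  · exact absurd (h2.trans h) h1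
  · rw [if_neg h1, if_neg h2, if_neg (by rintro (⟨_, hz⟩ | ⟨_, hw⟩) <;> [exact h1 hz; exact h2 hw])]
    ring

lemma emp_abs_of_le {m n : ℕ} (hmn : 0 < m + n) (x : Fin m → ℝ) (y : Fin n → ℝ)
    {z w : ℝ} (h : w ≤ z) :
    |empCDF x y z - empCDF x y w| =
      ((∑ i, if (w < x i ∧ x i ≤ z) ∨ (z < x i ∧ x i ≤ w) then (1:ℝ) else 0)
        + ∑ j, if (w < y j ∧ y j ≤ z) ∨ (z < y j ∧ y j ≤ w) then (1:ℝ) else 0)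
        / ((m:ℝ) + n) := by
  have hN : (0:ℝ) < (m:ℝ) + n := by exact_mod_cast hmn
  have e1 : ∑ i, (if (w < x i ∧ x i ≤ z) ∨ (z < x i ∧ x i ≤ w) then (1:ℝ) else 0)
      = ∑ i, ((if x i ≤ z then (1:ℝ) else 0) - if x i ≤ w then 1 else 0) :=
    Finset.sum_congr rfl fun i _ => (helper_ind_diff h).symm
  have e2 : ∑ j, (if (w < y j ∧ y j ≤ z) ∨ (z < y j ∧ y j ≤ w) then (1:ℝ) else 0)
      = ∑ j, ((if y j ≤ z then (1:ℝ) else 0) - if y j ≤ w then 1 else 0) :=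
    Finset.sum_congr rfl fun j _ => (helper_ind_diff h).symm
  have hsub : empCDF x y z - empCDF x y w =
      ((∑ i, if (w < x i ∧ x i ≤ z) ∨ (z < x i ∧ x i ≤ w) then (1:ℝ) else 0)
        + ∑ j, if (w < y j ∧ y j ≤ z) ∨ (z < y j ∧ y j ≤ w) then (1:ℝ) else 0)
        / ((m:ℝ) + n) := by
    unfold empCDF
    rw [div_sub_div_same, e1, e2, Finset.sum_sub_distrib, Finset.sum_sub_distrib]
    ring_nf
  rw [hsub, abs_div, abs_of_pos hN, abs_of_nonneg]
  apply add_nonneg <;> exact Finset.sum_nonneg fun i _ => by positivity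

lemma emp_abs {m n : ℕ} (hmn : 0 < m + n) (x : Fin m → ℝ) (y : Fin n → ℝ) (z w : ℝ) :
    |empCDF x y z - empCDF x y w| =
      ((∑ i, if (w < x i ∧ x i ≤ z) ∨ (z < x i ∧ x i ≤ w) then (1:ℝ) else 0)
        + ∑ j, if (w < y j ∧ y j ≤ z) ∨ (z < y j ∧ y j ≤ w) then (1:ℝ) else 0)
        / ((m:ℝ) + n) := by
  rcases le_total w z with h | h
  · exact emp_abs_of_le hmn x y h
  · rw [abs_sub_comm, emp_abs_of_le hmn x y h]
    congr 1
    congr 1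
    · exact Finset.sum_congr rfl fun i _ => if_congr or_comm rfl rfl
    · exact Finset.sum_congr rfl fun j _ => if_congr or_comm rfl rfl

lemma atoms_zero (μ : Measure ℝ) [IsProbabilityMeasure μ] {F : ℝ → ℝ} (hF : Continuous F)
    (h : ∀ x, (μ (Iic x)).toReal = F x) (x : ℝ) : μ {x} = 0 := by
  have hne : ∀ s : Set ℝ, μ s ≠ ⊤ := fun s => measure_ne_top μ s
  have key : ∀ ε ∈ Ioi (0:ℝ), (μ {x}).toReal ≤ F x - F (x - ε) := by
    intro ε hε
    rw [mem_Ioi] at hε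
    have hsub : {x} ⊆ Ioc (x - ε) x := by
      intro y hy; rw [mem_singleton_iff] at hy; subst hy
      exact ⟨by linarith, le_refl _⟩
    have hIocE : Ioc (x - ε) x = Iic x \ Iic (x - ε) := (Iic_sdiff_Iic).symm
    have hle : Iic (x - ε) ⊆ Iic x := Iic_subset_Iic.2 (by linarith)
    have hIoc : (μ (Ioc (x - ε) x)).toReal = F x - F (x - ε) := by
      rw [hIocE, measure_diff hle nullMeasurableSet_Iic (hne _),
        ENNReal.toReal_sub_of_le (measure_mono hle) (hne _), h, h]
    calc (μ {x}).toReal ≤ (μ (Ioc (x - ε) x)).toReal :=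
          ENNReal.toReal_mono (hne _) (measure_mono hsub)
      _ = F x - F (x - ε) := hIoc
  have hc : Continuous fun ε : ℝ => F x - F (x - ε) :=
    continuous_const.sub (hF.comp (continuous_const.sub continuous_id))
  have hlim : Filter.Tendsto (fun ε : ℝ => F x - F (x - ε)) (nhdsWithin 0 (Ioi 0)) (nhds 0) := by
    have := hc.tendsto 0
    simp only [sub_zero, sub_self] at this
    exact this.mono_left nhdsWithin_le_nhds
  have h0 : (μ {x}).toReal ≤ 0 :=
    ge_of_tendsto hlim (eventually_mem_nhdsWithin.mono key)
  have : (μ {x}).toReal = 0 := le_antisymm h0 ENNReal.toReal_nonneg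
  rcases (ENNReal.toReal_eq_zero_iff _).1 this with h' | h'
  · exact h'
  · exact absurd h' (hne _)

lemma prod_diag_null (μ : Measure ℝ) [IsProbabilityMeasure μ] (hA : ∀ x : ℝ, μ {x} = 0) :
    (μ.prod μ) {p : ℝ × ℝ | p.1 = p.2} = 0 := by
  rw [Measure.prod_apply (measurableSet_eq_fun measurable_fst measurable_snd)]
  have h : ∀ x : ℝ, μ (Prod.mk x ⁻¹' {p : ℝ × ℝ | p.1 = p.2}) = 0 := by
    intro x
    have : Prod.mk x ⁻¹' {p : ℝ × ℝ | p.1 = p.2} = {x} := by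
      ext y; simp [eq_comm]
    rw [this]; exact hA x
  simp [h, hA]

lemma prod_lt_half (μ : Measure ℝ) [IsProbabilityMeasure μ] (hA : ∀ x : ℝ, μ {x} = 0) :
    ((μ.prod μ) {p : ℝ × ℝ | p.2 < p.1}).toReal = 1 / 2 := by
  set ν := μ.prod μ with hν
  have hAm : MeasurableSet {p : ℝ × ℝ | p.2 < p.1} := measurableSet_lt measurable_snd measurable_fst
  have hBm : MeasurableSet {p : ℝ × ℝ | p.1 < p.2} := measurableSet_lt measurable_fst measurable_snd
  have hswap : ν {p : ℝ × ℝ | p.1 < p.2} = ν {p : ℝ × ℝ | p.2 < p.1} := by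
    have hpre : {p : ℝ × ℝ | p.1 < p.2} = Prod.swap ⁻¹' {p : ℝ × ℝ | p.2 < p.1} := by
      ext p; simp
    rw [hpre, Measure.measurePreserving_swap.measure_preimage hAm.nullMeasurableSet]
  have hd : Disjoint {p : ℝ × ℝ | p.2 < p.1} {p : ℝ × ℝ | p.1 < p.2} := by
    rw [Set.disjoint_left]; intro p hp hp'
    simp only [mem_setOf_eq] at hp hp'
    exact absurd (hp.trans hp') (lt_irrefl _)
  have hcover : (univ : Set (ℝ × ℝ)) ⊆
      ({p : ℝ × ℝ | p.2 < p.1} ∪ {p : ℝ × ℝ | p.1 < p.2}) ∪ {p : ℝ × ℝ | p.1 = p.2} := by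
    intro p _
    rcases lt_trichotomy p.1 p.2 with h | h | h
    · exact Or.inl (Or.inr h)
    · exact Or.inr h
    · exact Or.inl (Or.inl h)
  have h1 : (1 : ℝ≥0∞) = ν {p : ℝ × ℝ | p.2 < p.1} + ν {p : ℝ × ℝ | p.1 < p.2} := by
    have hle : (1 : ℝ≥0∞) ≤ ν ({p : ℝ × ℝ | p.2 < p.1} ∪ {p : ℝ × ℝ | p.1 < p.2}) := by
      calc (1 : ℝ≥0∞) = ν univ := (measure_univ).symm
        _ ≤ ν (({p : ℝ × ℝ | p.2 < p.1} ∪ {p : ℝ × ℝ | p.1 < p.2}) ∪ {p : ℝ × ℝ | p.1 = p.2}) :=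
            measure_mono hcover
        _ ≤ ν ({p : ℝ × ℝ | p.2 < p.1} ∪ {p : ℝ × ℝ | p.1 < p.2}) + ν {p : ℝ × ℝ | p.1 = p.2} :=
            measure_union_le _ _
        _ = ν ({p : ℝ × ℝ | p.2 < p.1} ∪ {p : ℝ × ℝ | p.1 < p.2}) := by
            rw [prod_diag_null μ hA, add_zero]
    have hge : ν ({p : ℝ × ℝ | p.2 < p.1} ∪ {p : ℝ × ℝ | p.1 < p.2}) ≤ 1 := prob_le_one
    rw [← measure_union hd hBm]
    exact le_antisymm hle hge
  rw [hswap] at h1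
  have hfin : ν {p : ℝ × ℝ | p.2 < p.1} ≠ ⊤ := measure_ne_top _ _
  have := congrArg ENNReal.toReal h1
  rw [ENNReal.toReal_one, ENNReal.toReal_add hfin hfin] at this
  linarith

lemma prod_lt_half' (μ : Measure ℝ) [IsProbabilityMeasure μ] (hA : ∀ x : ℝ, μ {x} = 0) :
    ((μ.prod μ) {p : ℝ × ℝ | p.1 < p.2}).toReal = 1 / 2 := by
  have hAm : MeasurableSet {p : ℝ × ℝ | p.2 < p.1} := measurableSet_lt measurable_snd measurable_fst
  have hpre : {p : ℝ × ℝ | p.1 < p.2} = Prod.swap ⁻¹' {p : ℝ × ℝ | p.2 < p.1} := by ext p; simp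
  rw [hpre, Measure.measurePreserving_swap.measure_preimage hAm.nullMeasurableSet]
  exact prod_lt_half μ hA

set_option maxHeartbeats 1600000 in
lemma triple_middle (μ : Measure ℝ) [IsProbabilityMeasure μ] (hA : ∀ x : ℝ, μ {x} = 0) :
    (((μ.prod μ).prod μ) {p : (ℝ × ℝ) × ℝ |
        (p.2 < p.1.2 ∧ p.1.2 ≤ p.1.1) ∨ (p.1.1 < p.1.2 ∧ p.1.2 ≤ p.2)}).toReal = 1 / 3 := by
  set κ := (μ.prod μ).prod μ with hκ
  -- coordinate measurability
  have mu : Measurable fun p : (ℝ × ℝ) × ℝ => p.1.1 := measurable_fst.fst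
  have mv : Measurable fun p : (ℝ × ℝ) × ℝ => p.1.2 := measurable_fst.snd
  have mw : Measurable fun p : (ℝ × ℝ) × ℝ => p.2 := measurable_snd
  -- middle sets
  set M1 : Set ((ℝ × ℝ) × ℝ) :=
    {p | (p.1.2 < p.1.1 ∧ p.1.1 < p.2) ∨ (p.2 < p.1.1 ∧ p.1.1 < p.1.2)} with hM1
  set M2 : Set ((ℝ × ℝ) × ℝ) :=
    {p | (p.2 < p.1.2 ∧ p.1.2 < p.1.1) ∨ (p.1.1 < p.1.2 ∧ p.1.2 < p.2)} with hM2
  set M3 : Set ((ℝ × ℝ) × ℝ) :=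
    {p | (p.1.1 < p.2 ∧ p.2 < p.1.2) ∨ (p.1.2 < p.2 ∧ p.2 < p.1.1)} with hM3
  have hM1m : MeasurableSet M1 :=
    ((measurableSet_lt mv mu).inter (measurableSet_lt mu mw)).union
      ((measurableSet_lt mw mu).inter (measurableSet_lt mu mv))
  have hM2m : MeasurableSet M2 :=
    ((measurableSet_lt mw mv).inter (measurableSet_lt mv mu)).union
      ((measurableSet_lt mu mv).inter (measurableSet_lt mv mw))
  have hM3m : MeasurableSet M3 :=
    ((measurableSet_lt mu mw).inter (measurableSet_lt mw mv)).union
      ((measurableSet_lt mv mw).inter (measurableSet_lt mw mu))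
  -- tie sets are null
  have hT12 : κ {p : (ℝ × ℝ) × ℝ | p.1.1 = p.1.2} = 0 := by
    rw [hκ, Measure.prod_apply (measurableSet_eq_fun mu mv)]
    have hD : (μ.prod μ) {q : ℝ × ℝ | q.1 = q.2} = 0 := prod_diag_null μ hA
    have hae : ∀ᵐ q ∂(μ.prod μ), q.1 ≠ q.2 := by
      rw [ae_iff]
      simpa using hD
    have : ∀ᵐ q ∂(μ.prod μ),
        μ (Prod.mk q ⁻¹' {p : (ℝ × ℝ) × ℝ | p.1.1 = p.1.2}) = 0 := by
      filter_upwards [hae] with q hq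
      have : Prod.mk q ⁻¹' {p : (ℝ × ℝ) × ℝ | p.1.1 = p.1.2} = (∅ : Set ℝ) := by
        ext w; simp [hq]
      rw [this, measure_empty]
    rw [lintegral_congr_ae this, lintegral_zero]
  have hT13 : κ {p : (ℝ × ℝ) × ℝ | p.1.1 = p.2} = 0 := by
    rw [hκ, Measure.prod_apply (measurableSet_eq_fun mu mw)]
    have : ∀ q : ℝ × ℝ, μ (Prod.mk q ⁻¹' {p : (ℝ × ℝ) × ℝ | p.1.1 = p.2}) = 0 := by
      intro q
      have : Prod.mk q ⁻¹' {p : (ℝ × ℝ) × ℝ | p.1.1 = p.2} = {q.1} := by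
        ext w; simp [eq_comm]
      rw [this]; exact hA q.1
    simp [this, hA]
  have hT23 : κ {p : (ℝ × ℝ) × ℝ | p.1.2 = p.2} = 0 := by
    rw [hκ, Measure.prod_apply (measurableSet_eq_fun mv mw)]
    have : ∀ q : ℝ × ℝ, μ (Prod.mk q ⁻¹' {p : (ℝ × ℝ) × ℝ | p.1.2 = p.2}) = 0 := by
      intro q
      have : Prod.mk q ⁻¹' {p : (ℝ × ℝ) × ℝ | p.1.2 = p.2} = {q.2} := by
        ext w; simp [eq_comm]
      rw [this]; exact hA q.2
    simp [this, hA]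
  -- symmetry: κ M1 = κ M2 = κ M3
  have hf1 : MeasurePreserving (Prod.map (Prod.swap : ℝ × ℝ → ℝ × ℝ) (id : ℝ → ℝ)) κ κ :=
    Measure.measurePreserving_swap.prod (MeasurePreserving.id μ)
  have hpre1 : M1 = Prod.map (Prod.swap : ℝ × ℝ → ℝ × ℝ) (id : ℝ → ℝ) ⁻¹' M2 := by
    ext p
    simp only [hM1, hM2, mem_preimage, Prod.map_apply, Prod.swap_prod_mk, mem_setOf_eq, id_eq,
      Prod.fst_swap, Prod.snd_swap]
    tauto
  have h12 : κ M1 = κ M2 := by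
    rw [hpre1, hf1.measure_preimage hM2m.nullMeasurableSet]
  have hassoc := measurePreserving_prodAssoc μ μ μ
  have hmid : MeasurePreserving (Prod.map (id : ℝ → ℝ) (Prod.swap : ℝ × ℝ → ℝ × ℝ))
      (μ.prod (μ.prod μ)) (μ.prod (μ.prod μ)) :=
    (MeasurePreserving.id μ).prod Measure.measurePreserving_swap
  have hf2 : MeasurePreserving
      ((MeasurableEquiv.prodAssoc.symm : ℝ × ℝ × ℝ ≃ᵐ (ℝ × ℝ) × ℝ) ∘
        (Prod.map (id : ℝ → ℝ) (Prod.swap : ℝ × ℝ → ℝ × ℝ)) ∘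
        (MeasurableEquiv.prodAssoc : (ℝ × ℝ) × ℝ ≃ᵐ ℝ × ℝ × ℝ)) κ κ :=
    (hassoc.symm _).comp (hmid.comp hassoc)
  have hfun2 : ((MeasurableEquiv.prodAssoc.symm : ℝ × ℝ × ℝ ≃ᵐ (ℝ × ℝ) × ℝ) ∘
        (Prod.map (id : ℝ → ℝ) (Prod.swap : ℝ × ℝ → ℝ × ℝ)) ∘
        (MeasurableEquiv.prodAssoc : (ℝ × ℝ) × ℝ ≃ᵐ ℝ × ℝ × ℝ))
      = fun p : (ℝ × ℝ) × ℝ => ((p.1.1, p.2), p.1.2) := rfl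
  have hpre2 : M3 = (fun p : (ℝ × ℝ) × ℝ => ((p.1.1, p.2), p.1.2)) ⁻¹' M2 := by
    ext p
    simp only [hM2, hM3, mem_preimage, mem_setOf_eq]
    tauto
  have h32 : κ M3 = κ M2 := by
    rw [hpre2, ← hfun2, hf2.measure_preimage hM2m.nullMeasurableSet]
  -- disjointness
  have hd12 : Disjoint M1 M2 := by
    rw [Set.disjoint_left]
    rintro p (⟨h1, h2⟩ | ⟨h1, h2⟩) (⟨h3, h4⟩ | ⟨h3, h4⟩) <;> linarith
  have hd13 : Disjoint M1 M3 := by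
    rw [Set.disjoint_left]
    rintro p (⟨h1, h2⟩ | ⟨h1, h2⟩) (⟨h3, h4⟩ | ⟨h3, h4⟩) <;> linarith
  have hd23 : Disjoint M2 M3 := by
    rw [Set.disjoint_left]
    rintro p (⟨h1, h2⟩ | ⟨h1, h2⟩) (⟨h3, h4⟩ | ⟨h3, h4⟩) <;> linarith
  -- cover
  have hcover : (univ : Set ((ℝ × ℝ) × ℝ)) ⊆ (M1 ∪ M2 ∪ M3) ∪
      ({p : (ℝ × ℝ) × ℝ | p.1.1 = p.1.2} ∪ {p : (ℝ × ℝ) × ℝ | p.1.1 = p.2}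
        ∪ {p : (ℝ × ℝ) × ℝ | p.1.2 = p.2}) := by
    intro p _
    simp only [mem_union, hM1, hM2, hM3, mem_setOf_eq]
    rcases lt_trichotomy p.1.1 p.1.2 with h1 | h1 | h1 <;>
      rcases lt_trichotomy p.1.2 p.2 with h2 | h2 | h2 <;>
      rcases lt_trichotomy p.1.1 p.2 with h3 | h3 | h3 <;> tauto
  -- κ (M1 ∪ M2 ∪ M3) = 1
  have hMm : MeasurableSet (M1 ∪ M2 ∪ M3) := (hM1m.union hM2m).union hM3m
  have hTnull : κ ({p : (ℝ × ℝ) × ℝ | p.1.1 = p.1.2} ∪ {p : (ℝ × ℝ) × ℝ | p.1.1 = p.2}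
      ∪ {p : (ℝ × ℝ) × ℝ | p.1.2 = p.2}) = 0 :=
    measure_union_null (measure_union_null hT12 hT13) hT23
  have hone : κ (M1 ∪ M2 ∪ M3) = 1 := by
    refine le_antisymm prob_le_one ?_
    have h1 : (1 : ℝ≥0∞) = κ univ := measure_univ.symm
    rw [h1]
    refine le_trans (measure_mono hcover) ?_
    refine le_trans (measure_union_le _ _) ?_
    rw [hTnull, add_zero]
  have hadd : κ (M1 ∪ M2 ∪ M3) = κ M1 + κ M2 + κ M3 := by
    rw [measure_union (Set.disjoint_union_left.mpr ⟨hd13, hd23⟩) hM3m,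
      measure_union hd12 hM2m]
  have ht : κ M2 ≠ ⊤ := measure_ne_top _ _
  have hh : κ M2 + κ M2 + κ M2 = 1 := by
    rw [← hone, hadd, h12, h32]
  have hxr : (κ M2 + κ M2 + κ M2).toReal = 1 := by rw [hh]; simp
  rw [ENNReal.toReal_add (ENNReal.add_ne_top.2 ⟨ht, ht⟩) ht, ENNReal.toReal_add ht ht] at hxr
  have hSM : κ {p : (ℝ × ℝ) × ℝ |
      (p.2 < p.1.2 ∧ p.1.2 ≤ p.1.1) ∨ (p.1.1 < p.1.2 ∧ p.1.2 ≤ p.2)} = κ M2 := by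
    apply measure_congr
    rw [ae_eq_set]
    constructor
    · apply measure_mono_null
        (?_ : _ ⊆ {p : (ℝ × ℝ) × ℝ | p.1.1 = p.1.2} ∪ {p : (ℝ × ℝ) × ℝ | p.1.2 = p.2})
      · exact measure_union_null hT12 hT23
      · rintro p ⟨hS, hM⟩
        simp only [hM2, mem_setOf_eq, not_or, not_and, not_lt] at hM
        rcases hS with ⟨h1, h2⟩ | ⟨h1, h2⟩
        · exact Or.inl (le_antisymm (hM.1 h1) h2)
        · exact Or.inr (le_antisymm h2 (hM.2 h1))
    · have hsub : M2 ⊆ {p : (ℝ × ℝ) × ℝ |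
          (p.2 < p.1.2 ∧ p.1.2 ≤ p.1.1) ∨ (p.1.1 < p.1.2 ∧ p.1.2 ≤ p.2)} := by
        rintro p (⟨h1, h2⟩ | ⟨h1, h2⟩)
        · exact Or.inl ⟨h1, h2.le⟩
        · exact Or.inr ⟨h1, h2.le⟩
      rw [Set.diff_eq_empty.2 hsub]
      exact measure_empty
  rw [hSM]
  linarith

noncomputable def gg {Ω : Type*} {m n : ℕ} (X : Fin m → Ω → ℝ) (Y : Fin n → Ω → ℝ)
    (a b : Fin m ⊕ Fin n) (ω : Ω) : ℝ :=
  |empCDF (fun i => X i ω) (fun j => Y j ω) (Sum.elim X Y a ω)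
    - empCDF (fun i => X i ω) (fun j => Y j ω) (Sum.elim X Y b ω)|

def EE {Ω : Type*} {m n : ℕ} (X : Fin m → Ω → ℝ) (Y : Fin n → Ω → ℝ)
    (a b k : Fin m ⊕ Fin n) : Set Ω :=
  {ω | (Sum.elim X Y b ω < Sum.elim X Y k ω ∧ Sum.elim X Y k ω ≤ Sum.elim X Y a ω) ∨
       (Sum.elim X Y a ω < Sum.elim X Y k ω ∧ Sum.elim X Y k ω ≤ Sum.elim X Y b ω)}

/-- Under the null hypothesis (all `m + n` observations i.i.d. with
common continuous cdf `F`), the rank statistic `T` has expectation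
`E T = (N+1)/(6N)` where `N = m + n`. -/
theorem stmt5
    {Ω : Type*} [MeasurableSpace Ω] (P : Measure Ω) [IsProbabilityMeasure P]
    (m n : ℕ) (hm : 0 < m) (hn : 0 < n)
    (X : Fin m → Ω → ℝ) (Y : Fin n → Ω → ℝ)
    (hmX : ∀ i, Measurable (X i)) (hmY : ∀ j, Measurable (Y j))
    (hIndep : iIndepFun (Sum.elim X Y) P)
    (F : ℝ → ℝ) (hFcont : Continuous F)
    (hXF : ∀ i x, (P {ω | X i ω ≤ x}).toReal = F x)
    (hYF : ∀ j x, (P {ω | Y j ω ≤ x}).toReal = F x) :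
    ∫ ω, TStat (fun i => X i ω) (fun j => Y j ω) ∂P
      = (((m : ℝ) + n) + 1) / (6 * ((m : ℝ) + n)) := by
  classical
  have hZmeas : ∀ a : Fin m ⊕ Fin n, Measurable (Sum.elim X Y a) := by
    rintro (i | j)
    · exact hmX i
    · exact hmY j
  have hZcdf : ∀ (a : Fin m ⊕ Fin n) (x : ℝ), (P {ω | Sum.elim X Y a ω ≤ x}).toReal = F x := by
    rintro (i | j) x
    · exact hXF i x
    · exact hYF j x
  have hmn : 0 < m + n := Nat.add_pos_left hm n
  have hNpos : (0:ℝ) < (m:ℝ) + n := by exact_mod_cast hmn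
  -- the common law
  set μ : Measure ℝ := P.map (Sum.elim X Y (Sum.inl ⟨0, hm⟩)) with hμ
  haveI hμprob : IsProbabilityMeasure μ := Measure.isProbabilityMeasure_map (hZmeas _).aemeasurable
  have hmapIic : ∀ (a : Fin m ⊕ Fin n) (x : ℝ), (P.map (Sum.elim X Y a)) (Iic x) = P {ω | Sum.elim X Y a ω ≤ x} := by
    intro a x
    rw [Measure.map_apply (hZmeas a) measurableSet_Iic]
    rfl
  have hmap : ∀ a : Fin m ⊕ Fin n, P.map (Sum.elim X Y a) = μ := by
    intro a
    haveI : IsProbabilityMeasure (P.map (Sum.elim X Y a)) := Measure.isProbabilityMeasure_map (hZmeas a).aemeasurable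
    refine Measure.ext_of_Iic (P.map (Sum.elim X Y a)) μ (fun x => ?_)
    rw [hmapIic a x, hμ, hmapIic _ x]
    have h1 := hZcdf a x
    have h2 := hZcdf (Sum.inl ⟨0, hm⟩) x
    have hne1 : P {ω | Sum.elim X Y a ω ≤ x} ≠ ⊤ := measure_ne_top _ _
    have hne2 : P {ω | Sum.elim X Y (Sum.inl ⟨0, hm⟩) ω ≤ x} ≠ ⊤ := measure_ne_top _ _
    rw [← ENNReal.ofReal_toReal hne1, ← ENNReal.ofReal_toReal hne2, h1, h2]
  have hμIic : ∀ x : ℝ, (μ (Iic x)).toReal = F x := by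
    intro x
    rw [hμ, hmapIic _ x]
    exact hZcdf _ x
  have hatom : ∀ x : ℝ, μ {x} = 0 := atoms_zero μ hFcont hμIic
  -- joint laws
  have hpair : ∀ a b : Fin m ⊕ Fin n, a ≠ b → P.map (fun ω => (Sum.elim X Y a ω, Sum.elim X Y b ω)) = μ.prod μ := by
    intro a b hab
    have hind : IndepFun (Sum.elim X Y a) (Sum.elim X Y b) P := hIndep.indepFun hab
    rw [(indepFun_iff_map_prod_eq_prod_map_map (hZmeas a).aemeasurable
      (hZmeas b).aemeasurable).1 hind, hmap a, hmap b]
  have htriple : ∀ a b k : Fin m ⊕ Fin n, a ≠ b → k ≠ a → k ≠ b →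
      P.map (fun ω => ((Sum.elim X Y a ω, Sum.elim X Y k ω), Sum.elim X Y b ω)) = (μ.prod μ).prod μ := by
    intro a b k hab hka hkb
    have hind : IndepFun (fun ω => (Sum.elim X Y a ω, Sum.elim X Y k ω)) (Sum.elim X Y b) P :=
      hIndep.indepFun_prodMk hZmeas a k b (fun h => hab h) (fun h => hkb h)
    have hpm : Measurable (fun ω => (Sum.elim X Y a ω, Sum.elim X Y k ω)) := (hZmeas a).prodMk (hZmeas k)
    rw [(indepFun_iff_map_prod_eq_prod_map_map hpm.aemeasurable
      (hZmeas b).aemeasurable).1 hind, hmap b, hpair a k (fun h => (hka h.symm).elim)]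
  -- events
  have hEmeas : ∀ a b k, MeasurableSet (EE X Y a b k) := by
    intro a b k
    exact ((measurableSet_lt (hZmeas b) (hZmeas k)).inter
        (measurableSet_le (hZmeas k) (hZmeas a))).union
      ((measurableSet_lt (hZmeas a) (hZmeas k)).inter
        (measurableSet_le (hZmeas k) (hZmeas b)))
  -- probabilities of the events
  have hPa : ∀ a b : Fin m ⊕ Fin n, a ≠ b → (P (EE X Y a b a)).toReal = 1 / 2 := by
    intro a b hab
    have h1 : EE X Y a b a = (fun ω => (Sum.elim X Y a ω, Sum.elim X Y b ω)) ⁻¹'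
        {p : ℝ × ℝ | p.2 < p.1} := by
      ext ω
      simp only [EE, mem_setOf_eq, mem_preimage, lt_irrefl, false_and, or_false, le_refl,
        and_true]
    rw [h1, ← Measure.map_apply ((hZmeas a).prodMk (hZmeas b))
      (measurableSet_lt measurable_snd measurable_fst), hpair a b hab]
    exact prod_lt_half μ hatom
  have hPb : ∀ a b : Fin m ⊕ Fin n, a ≠ b → (P (EE X Y a b b)).toReal = 1 / 2 := by
    intro a b hab
    have h1 : EE X Y a b b = (fun ω => (Sum.elim X Y b ω, Sum.elim X Y a ω)) ⁻¹'
        {p : ℝ × ℝ | p.2 < p.1} := by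
      ext ω
      simp only [EE, mem_setOf_eq, mem_preimage, lt_irrefl, false_and, false_or, le_refl,
        and_true]
    rw [h1, ← Measure.map_apply ((hZmeas b).prodMk (hZmeas a))
      (measurableSet_lt measurable_snd measurable_fst), hpair b a (Ne.symm hab)]
    exact prod_lt_half μ hatom
  have hPk : ∀ a b k : Fin m ⊕ Fin n, a ≠ b → k ≠ a → k ≠ b →
      (P (EE X Y a b k)).toReal = 1 / 3 := by
    intro a b k hab hka hkb
    have h1 : EE X Y a b k = (fun ω => ((Sum.elim X Y a ω, Sum.elim X Y k ω), Sum.elim X Y b ω))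
        ⁻¹' {p : (ℝ × ℝ) × ℝ |
        (p.2 < p.1.2 ∧ p.1.2 ≤ p.1.1) ∨ (p.1.1 < p.1.2 ∧ p.1.2 ≤ p.2)} := rfl
    have hSmeas : MeasurableSet {p : (ℝ × ℝ) × ℝ |
        (p.2 < p.1.2 ∧ p.1.2 ≤ p.1.1) ∨ (p.1.1 < p.1.2 ∧ p.1.2 ≤ p.2)} :=
      ((measurableSet_lt measurable_snd measurable_fst.snd).inter
        (measurableSet_le measurable_fst.snd measurable_fst.fst)).union
      ((measurableSet_lt measurable_fst.fst measurable_fst.snd).inter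
        (measurableSet_le measurable_fst.snd measurable_snd))
    rw [h1, ← Measure.map_apply (((hZmeas a).prodMk (hZmeas k)).prodMk (hZmeas b)) hSmeas,
      htriple a b k hab hka hkb]
    exact triple_middle μ hatom
  -- representation of gg as sum of indicators
  have hgrep : ∀ a b : Fin m ⊕ Fin n, gg X Y a b =
      fun ω => (∑ k : Fin m ⊕ Fin n, (EE X Y a b k).indicator (fun _ => (1:ℝ)) ω)
        / ((m:ℝ) + n) := by
    intro a b
    funext ω
    show |empCDF _ _ (Sum.elim X Y a ω) - empCDF _ _ (Sum.elim X Y b ω)| = _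
    rw [emp_abs hmn, Fintype.sum_sum_type]
    congr 1
    congr 1
    · refine Finset.sum_congr rfl fun i _ => ?_
      rw [Set.indicator_apply]
      exact if_congr Iff.rfl rfl rfl
    · refine Finset.sum_congr rfl fun j _ => ?_
      rw [Set.indicator_apply]
      exact if_congr Iff.rfl rfl rfl
  have hgint : ∀ a b : Fin m ⊕ Fin n, Integrable (gg X Y a b) P := by
    intro a b
    rw [hgrep a b]
    apply Integrable.div_const
    apply integrable_finset_sum
    intro k _
    exact (integrable_const (1:ℝ)).indicator (hEmeas a b k)
  have hgval : ∀ a b : Fin m ⊕ Fin n, ∫ ω, gg X Y a b ω ∂P =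
      (∑ k : Fin m ⊕ Fin n, (P (EE X Y a b k)).toReal) / ((m:ℝ) + n) := by
    intro a b
    simp only [hgrep a b]
    rw [integral_div, integral_finset_sum _
      (fun k _ => (integrable_const (1:ℝ)).indicator (hEmeas a b k))]
    congr 1
    refine Finset.sum_congr rfl fun k _ => ?_
    rw [integral_indicator_const (1:ℝ) (hEmeas a b k), smul_eq_mul, mul_one, measureReal_def]
  -- the common value for distinct indices
  have hc : ∀ a b : Fin m ⊕ Fin n, a ≠ b → ∫ ω, gg X Y a b ω ∂P
      = (((m:ℝ) + n) + 1) / (3 * ((m:ℝ) + n)) := by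
    intro a b hab
    have hsubset : ({a, b} : Finset (Fin m ⊕ Fin n)) ⊆ Finset.univ := Finset.subset_univ _
    have hsum : ∑ k : Fin m ⊕ Fin n, (P (EE X Y a b k)).toReal
        = 1 + ((m:ℝ) + n - 2) / 3 := by
      rw [← Finset.sum_sdiff hsubset]
      have h2 : ∑ k ∈ ({a, b} : Finset (Fin m ⊕ Fin n)), (P (EE X Y a b k)).toReal = 1 := by
        rw [Finset.sum_pair hab, hPa a b hab, hPb a b hab]; norm_num
      have h3 : ∑ k ∈ Finset.univ \ ({a, b} : Finset (Fin m ⊕ Fin n)),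
          (P (EE X Y a b k)).toReal = ((m:ℝ) + n - 2) / 3 := by
        have hconst : ∀ k ∈ Finset.univ \ ({a, b} : Finset (Fin m ⊕ Fin n)),
            (P (EE X Y a b k)).toReal = 1 / 3 := by
          intro k hk
          rw [Finset.mem_sdiff, Finset.mem_insert, Finset.mem_singleton] at hk
          push_neg at hk
          exact hPk a b k hab hk.2.1 hk.2.2
        rw [Finset.sum_congr rfl hconst, Finset.sum_const, Finset.card_sdiff_of_subset hsubset,
          Finset.card_univ, Finset.card_pair hab]
        have hcard : Fintype.card (Fin m ⊕ Fin n) = m + n := by simp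
        rw [hcard]
        have h2le : 2 ≤ m + n := by omega
        rw [nsmul_eq_mul, Nat.cast_sub h2le]
        push_cast
        ring
      rw [h2, h3]
      ring
    rw [hgval a b, hsum]
    field_simp
    ring
  have hgzero : ∀ a : Fin m ⊕ Fin n, ∫ ω, gg X Y a a ω ∂P = 0 := by
    intro a
    have h0 : gg X Y a a = fun _ => (0:ℝ) := by
      funext ω
      simp [gg]
    rw [h0]
    exact integral_zero _ _
  -- rewrite TStat via gg
  have hTrw : ∀ ω, TStat (fun i => X i ω) (fun j => Y j ω) =
      ((m:ℝ) * n / ((m:ℝ) + n)) *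
        ((1 / ((m:ℝ) * n)) * ∑ i, ∑ j, gg X Y (Sum.inl i) (Sum.inr j) ω
          - (1 / (2 * (m:ℝ)^2)) * ∑ i, ∑ j, gg X Y (Sum.inl i) (Sum.inl j) ω
          - (1 / (2 * (n:ℝ)^2)) * ∑ i, ∑ j, gg X Y (Sum.inr i) (Sum.inr j) ω) :=
    fun ω => rfl
  have hint1 : Integrable (fun ω => ∑ i, ∑ j, gg X Y (Sum.inl i) (Sum.inr j) ω) P :=
    integrable_finset_sum _ (fun i _ => integrable_finset_sum _ (fun j _ => hgint _ _))
  have hint2 : Integrable (fun ω => ∑ i, ∑ j, gg X Y (Sum.inl i) (Sum.inl j) ω) P :=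
    integrable_finset_sum _ (fun i _ => integrable_finset_sum _ (fun j _ => hgint _ _))
  have hint3 : Integrable (fun ω => ∑ i, ∑ j, gg X Y (Sum.inr i) (Sum.inr j) ω) P :=
    integrable_finset_sum _ (fun i _ => integrable_finset_sum _ (fun j _ => hgint _ _))
  set c : ℝ := (((m:ℝ) + n) + 1) / (3 * ((m:ℝ) + n)) with hcdef
  have hS1 : ∫ ω, (∑ i, ∑ j, gg X Y (Sum.inl i) (Sum.inr j) ω) ∂P = (m:ℝ) * n * c := by
    rw [integral_finset_sum _ (fun i _ => integrable_finset_sum _ (fun j _ => hgint _ _))]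
    have step : ∀ i : Fin m, ∫ ω, (∑ j, gg X Y (Sum.inl i) (Sum.inr j) ω) ∂P
        = (n:ℝ) * c := by
      intro i
      rw [integral_finset_sum _ (fun j _ => hgint _ _)]
      rw [Finset.sum_congr rfl (fun j _ => hc (Sum.inl i) (Sum.inr j) (by simp))]
      simp [Finset.sum_const, Finset.card_univ, mul_comm]
    rw [Finset.sum_congr rfl (fun i _ => step i), Finset.sum_const, Finset.card_univ,
      Fintype.card_fin, nsmul_eq_mul]
    ring
  have hS2 : ∫ ω, (∑ i, ∑ j, gg X Y (Sum.inl i) (Sum.inl j) ω) ∂P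
      = (m:ℝ) * (((m:ℝ) - 1) * c) := by
    rw [integral_finset_sum _ (fun i _ => integrable_finset_sum _ (fun j _ => hgint _ _))]
    have step : ∀ i : Fin m, ∫ ω, (∑ j, gg X Y (Sum.inl i) (Sum.inl j) ω) ∂P
        = ((m:ℝ) - 1) * c := by
      intro i
      rw [integral_finset_sum _ (fun j _ => hgint _ _)]
      rw [← Finset.sum_erase_add _ _ (Finset.mem_univ i), hgzero (Sum.inl i), add_zero]
      rw [Finset.sum_congr rfl (fun j hj => hc (Sum.inl i) (Sum.inl j)
        (by simp only [ne_eq, Sum.inl.injEq]; exact fun h => (Finset.mem_erase.1 hj).1 h.symm))]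
      rw [Finset.sum_const, Finset.card_erase_of_mem (Finset.mem_univ i), Finset.card_univ]
      simp only [Fintype.card_fin, nsmul_eq_mul]
      rw [Nat.cast_sub hm]
      push_cast
      ring
    rw [Finset.sum_congr rfl (fun i _ => step i), Finset.sum_const, Finset.card_univ,
      Fintype.card_fin, nsmul_eq_mul]
  have hS3 : ∫ ω, (∑ i, ∑ j, gg X Y (Sum.inr i) (Sum.inr j) ω) ∂P
      = (n:ℝ) * (((n:ℝ) - 1) * c) := by
    rw [integral_finset_sum _ (fun i _ => integrable_finset_sum _ (fun j _ => hgint _ _))]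
    have step : ∀ i : Fin n, ∫ ω, (∑ j, gg X Y (Sum.inr i) (Sum.inr j) ω) ∂P
        = ((n:ℝ) - 1) * c := by
      intro i
      rw [integral_finset_sum _ (fun j _ => hgint _ _)]
      rw [← Finset.sum_erase_add _ _ (Finset.mem_univ i), hgzero (Sum.inr i), add_zero]
      rw [Finset.sum_congr rfl (fun j hj => hc (Sum.inr i) (Sum.inr j)
        (by simp only [ne_eq, Sum.inr.injEq]; exact fun h => (Finset.mem_erase.1 hj).1 h.symm))]
      rw [Finset.sum_const, Finset.card_erase_of_mem (Finset.mem_univ i), Finset.card_univ]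
      simp only [Fintype.card_fin, nsmul_eq_mul]
      rw [Nat.cast_sub hn]
      push_cast
      ring
    rw [Finset.sum_congr rfl (fun i _ => step i), Finset.sum_const, Finset.card_univ,
      Fintype.card_fin, nsmul_eq_mul]
  -- assemble
  have hIa : Integrable (fun ω =>
      (1 / ((m:ℝ) * n)) * ∑ i, ∑ j, gg X Y (Sum.inl i) (Sum.inr j) ω) P :=
    hint1.const_mul _
  have hIb : Integrable (fun ω =>
      (1 / (2 * (m:ℝ)^2)) * ∑ i, ∑ j, gg X Y (Sum.inl i) (Sum.inl j) ω) P :=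
    hint2.const_mul _
  have hIc : Integrable (fun ω =>
      (1 / (2 * (n:ℝ)^2)) * ∑ i, ∑ j, gg X Y (Sum.inr i) (Sum.inr j) ω) P :=
    hint3.const_mul _
  have hIab : Integrable (fun ω =>
      (1 / ((m:ℝ) * n)) * ∑ i, ∑ j, gg X Y (Sum.inl i) (Sum.inr j) ω
        - (1 / (2 * (m:ℝ)^2)) * ∑ i, ∑ j, gg X Y (Sum.inl i) (Sum.inl j) ω) P := hIa.sub hIb
  simp only [hTrw]
  rw [integral_const_mul, integral_sub hIab hIc, integral_sub hIa hIb,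
    integral_const_mul, integral_const_mul, integral_const_mul, hS1, hS2, hS3]
  have hmpos : (0:ℝ) < m := by exact_mod_cast hm
  have hnpos : (0:ℝ) < n := by exact_mod_cast hn
  rw [hcdef]
  field_simp
  ring
end

section
/- For every integer N ≥ 3, (1/(N(N−1)(N−2))) · Σ_{i=1}^{N} Σ_{j≠i} Σ_{k≠i, k≠j} |i − j| · |i − k| = (N+1)(7N+4)/60, where the sum is over all ordered triples of pairwise distinct integers i, j, k in {1,...,N}. Equivalently, if (R_1, R_2, R_3) are three distinct ranks drawn uniformly without replacement from {1,...,N}, then E[|R_1 − R_2| · |R_1 − R_3|] = (N+1)(7N+4)/60. -/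
open Finset

lemma gauss (n : ℕ) : ∑ j ∈ Finset.Icc 1 n, (j : ℝ) = n * (n + 1) / 2 := by
  induction n with
  | zero => simp
  | succ n ih =>
      rw [Finset.sum_Icc_succ_top (by omega : 1 ≤ n + 1), ih]
      push_cast; ring

lemma sumsq (n : ℕ) : ∑ j ∈ Finset.Icc 1 n, (j : ℝ) ^ 2
    = n * (n + 1) * (2 * n + 1) / 6 := by
  induction n with
  | zero => simp
  | succ n ih =>
      rw [Finset.sum_Icc_succ_top (by omega : 1 ≤ n + 1), ih]
      push_cast; ring

lemma polysum (c0 c1 c2 c3 c4 : ℝ) (n : ℕ) :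
    ∑ i ∈ Finset.Icc 1 n,
        (c0 + c1 * (i : ℝ) + c2 * (i : ℝ) ^ 2 + c3 * (i : ℝ) ^ 3 + c4 * (i : ℝ) ^ 4)
      = c0 * n + c1 * (n * (n + 1) / 2) + c2 * (n * (n + 1) * (2 * n + 1) / 6)
        + c3 * (n * (n + 1) / 2) ^ 2
        + c4 * (n * (n + 1) * (2 * n + 1) * (3 * (n : ℝ) ^ 2 + 3 * n - 1) / 30) := by
  induction n with
  | zero => simp
  | succ n ih =>
      rw [Finset.sum_Icc_succ_top (by omega : 1 ≤ n + 1), ih]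
      push_cast; ring

lemma absum (N i : ℕ) (h1 : 1 ≤ i) (h2 : i ≤ N) :
    ∑ j ∈ Finset.Icc 1 N, |(i : ℝ) - (j : ℝ)|
      = ((i : ℝ) * ((i : ℝ) - 1) + ((N : ℝ) - i) * ((N : ℝ) - i + 1)) / 2 := by
  have hsplit : Finset.Icc 1 i ∪ Finset.Ioc i N = Finset.Icc 1 N := by
    ext x
    simp only [Finset.mem_union, Finset.mem_Icc, Finset.mem_Ioc]
    omega
  have hdisj : Disjoint (Finset.Icc 1 i) (Finset.Ioc i N) := by
    simp only [Finset.disjoint_left, Finset.mem_Icc, Finset.mem_Ioc]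
    omega
  have hIoc : ∀ f : ℕ → ℝ, ∑ j ∈ Finset.Ioc i N, f j
      = ∑ j ∈ Finset.Icc 1 N, f j - ∑ j ∈ Finset.Icc 1 i, f j := by
    intro f
    rw [← hsplit, Finset.sum_union hdisj]; ring
  rw [← hsplit, Finset.sum_union hdisj]
  have e1 : ∑ j ∈ Finset.Icc 1 i, |(i : ℝ) - (j : ℝ)|
      = ∑ j ∈ Finset.Icc 1 i, ((i : ℝ) - (j : ℝ)) := by
    apply Finset.sum_congr rfl
    intro j hj
    rw [Finset.mem_Icc] at hj
    have hji : (j : ℝ) ≤ i := by exact_mod_cast hj.2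
    exact abs_of_nonneg (by linarith)
  have e2 : ∑ j ∈ Finset.Ioc i N, |(i : ℝ) - (j : ℝ)|
      = ∑ j ∈ Finset.Ioc i N, ((j : ℝ) - (i : ℝ)) := by
    apply Finset.sum_congr rfl
    intro j hj
    rw [Finset.mem_Ioc] at hj
    rw [abs_sub_comm]
    have hij : (i : ℝ) ≤ j := by exact_mod_cast hj.1.le
    exact abs_of_nonneg (by linarith)
  rw [e1, e2]
  rw [Finset.sum_sub_distrib, Finset.sum_sub_distrib, Finset.sum_const, Finset.sum_const,
    hIoc (fun j => (j : ℝ)), gauss, gauss, Nat.card_Icc, Nat.card_Ioc]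
  have : ((N - i : ℕ) : ℝ) = (N : ℝ) - i := by
    rw [Nat.cast_sub h2]
  simp only [nsmul_eq_mul, Nat.add_sub_cancel, this]
  ring

/-- For every integer `N ≥ 3`,
`(1/(N(N-1)(N-2))) Σᵢ Σ_{j≠i} Σ_{k≠i,j} |i-j||i-k| = (N+1)(7N+4)/60`,
the sum over ordered triples of pairwise distinct integers in `{1,…,N}`. -/
theorem stmt8 (N : ℕ) (hN : 3 ≤ N) :
    (1 / ((N : ℝ) * ((N : ℝ) - 1) * ((N : ℝ) - 2))) *
        ∑ i ∈ Finset.Icc 1 N, ∑ j ∈ (Finset.Icc 1 N).erase i,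
          ∑ k ∈ ((Finset.Icc 1 N).erase i).erase j,
            |(i : ℝ) - (j : ℝ)| * |(i : ℝ) - (k : ℝ)|
      = ((N : ℝ) + 1) * (7 * (N : ℝ) + 4) / 60 := by
  set A := Finset.Icc 1 N with hA
  set n : ℝ := (N : ℝ) with hn
  -- Step 1: reduce triple sum per i
  have step1 : ∀ i ∈ A, ∑ j ∈ A.erase i, ∑ k ∈ (A.erase i).erase j,
        |(i : ℝ) - (j : ℝ)| * |(i : ℝ) - (k : ℝ)|
      = (∑ j ∈ A, |(i : ℝ) - (j : ℝ)|) ^ 2 - ∑ j ∈ A, ((i : ℝ) - (j : ℝ)) ^ 2 := by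
    intro i hi
    have hS0 : ∑ k ∈ A.erase i, |(i : ℝ) - (k : ℝ)| = ∑ k ∈ A, |(i : ℝ) - (k : ℝ)| :=
      Finset.sum_erase A (by simp)
    have inner : ∀ j ∈ A.erase i,
        ∑ k ∈ (A.erase i).erase j, |(i : ℝ) - (k : ℝ)|
          = (∑ k ∈ A, |(i : ℝ) - (k : ℝ)|) - |(i : ℝ) - (j : ℝ)| := by
      intro j hj
      rw [Finset.sum_erase_eq_sub hj, hS0]
    have hmain : ∑ j ∈ A.erase i, ∑ k ∈ (A.erase i).erase j,
          |(i : ℝ) - (j : ℝ)| * |(i : ℝ) - (k : ℝ)|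
        = ∑ j ∈ A.erase i,
            |(i : ℝ) - (j : ℝ)| * ((∑ k ∈ A, |(i : ℝ) - (k : ℝ)|) - |(i : ℝ) - (j : ℝ)|) := by
      apply Finset.sum_congr rfl
      intro j hj
      rw [← Finset.mul_sum, inner j hj]
    rw [hmain]
    rw [Finset.sum_erase A (f := fun j =>
      |(i : ℝ) - (j : ℝ)| * ((∑ k ∈ A, |(i : ℝ) - (k : ℝ)|) - |(i : ℝ) - (j : ℝ)|)) (by simp)]
    have expand : ∀ j ∈ A,
        |(i : ℝ) - (j : ℝ)| * ((∑ k ∈ A, |(i : ℝ) - (k : ℝ)|) - |(i : ℝ) - (j : ℝ)|)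
          = |(i : ℝ) - (j : ℝ)| * (∑ k ∈ A, |(i : ℝ) - (k : ℝ)|) - ((i : ℝ) - (j : ℝ)) ^ 2 := by
      intro j _
      rw [← sq_abs ((i : ℝ) - j)]
      ring
    rw [Finset.sum_congr rfl expand, Finset.sum_sub_distrib, ← Finset.sum_mul]
    ring
  rw [Finset.sum_congr rfl step1]
  -- Step 2: closed form per i
  have step2 : ∀ i ∈ A,
      (∑ j ∈ A, |(i : ℝ) - (j : ℝ)|) ^ 2 - ∑ j ∈ A, ((i : ℝ) - (j : ℝ)) ^ 2
        = (n ^ 4 / 4 + n ^ 3 / 6 - n ^ 2 / 4 - n / 6) + (-(n ^ 3) - n ^ 2) * (i : ℝ)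
          + (2 * n ^ 2 + 2 * n + 1) * (i : ℝ) ^ 2 + (-2 * n - 2) * (i : ℝ) ^ 3
          + 1 * (i : ℝ) ^ 4 := by
    intro i hi
    rw [Finset.mem_Icc] at hi
    have habs := absum N i hi.1 hi.2
    have hsq : ∑ j ∈ A, ((i : ℝ) - (j : ℝ)) ^ 2
        = n * (i : ℝ) ^ 2 - 2 * (i : ℝ) * (n * (n + 1) / 2) + n * (n + 1) * (2 * n + 1) / 6 := by
      have e : ∀ j ∈ A, ((i : ℝ) - (j : ℝ)) ^ 2
          = (i : ℝ) ^ 2 - 2 * (i : ℝ) * (j : ℝ) + (j : ℝ) ^ 2 := fun j _ => by ring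
      rw [Finset.sum_congr rfl e, Finset.sum_add_distrib, Finset.sum_sub_distrib,
        Finset.sum_const, ← Finset.mul_sum, hA, gauss, sumsq, Nat.card_Icc]
      simp only [nsmul_eq_mul, Nat.add_sub_cancel]
      rw [hn]
    rw [habs, hsq]
    ring
  rw [Finset.sum_congr rfl step2, polysum]
  have h3 : (3 : ℝ) ≤ n := by rw [hn]; exact_mod_cast hN
  have h0 : n ≠ 0 := by linarith
  have h1 : n - 1 ≠ 0 := by intro h; nlinarith
  have h2 : n - 2 ≠ 0 := by intro h; nlinarith
  field_simp
  ring
end
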